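/- arXiv:1601.00237 — 9 statements merged into one kernel-verified Lean document; each statement's English description precedes it below -/
import Mathlib

section
/- Centering orthogonality: E[W·(A − p̃) | ℋ] = 0 almost surely; consequently, for every bounded ℋ-measurable random variable g, E[W·(A − p̃)·g] = 0. (This is the property that makes the weighted and centered estimating function insensitive to misspecification of the working model for the nuisance function.) -/
open MeasureTheory ProbabilityTheory

/-- Centering orthogonality: `E[W·(A − p̃) | ℋ] = 0` almost surely;
consequently, for every bounded `ℋ`-measurable `g`, `E[W·(A − p̃)·g] = 0`. -/
theorem weight_centered_orthogonality
    {Ω : Type*} (𝒮 ℋ : MeasurableSpace Ω) {m : MeasurableSpace Ω} {P : Measure Ω} [IsProbabilityMeasure P]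
    (hSH : 𝒮 ≤ ℋ) (hHm : ℋ ≤ m)
    (A : Ω → ℝ) (hA_meas : Measurable A) (hA01 : ∀ ω, A ω = 0 ∨ A ω = 1)
    (ε : ℝ) (hε_pos : 0 < ε) (hε_lt : ε < 1 / 2)
    (p : Ω → ℝ) (hp_meas : Measurable[ℋ] p)
    (hp_bdd : ∀ᵐ ω ∂P, ε ≤ p ω ∧ p ω ≤ 1 - ε)
    (hp_ce : p =ᵐ[P] P[A|ℋ])
    (q : Ω → ℝ) (hq_meas : Measurable[𝒮] q)
    (hq_bdd : ∀ᵐ ω ∂P, ε ≤ q ω ∧ q ω ≤ 1 - ε)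
    (W : Ω → ℝ)
    (hW : ∀ ω, W ω = A ω * (q ω / p ω) + (1 - A ω) * ((1 - q ω) / (1 - p ω))) :
    (P[fun ω => W ω * (A ω - q ω)|ℋ] =ᵐ[P] fun _ => (0 : ℝ)) ∧
      ∀ g : Ω → ℝ, Measurable[ℋ] g → (∃ C : ℝ, ∀ ω, |g ω| ≤ C) →
        ∫ ω, W ω * (A ω - q ω) * g ω ∂P = 0 := by
  set h : Ω → ℝ := fun ω => q ω * (1 - q ω) * (1 / p ω + 1 / (1 - p ω)) with hh
  set c : Ω → ℝ := fun ω => -(q ω * (1 - q ω) / (1 - p ω)) with hc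
  have hqH : Measurable[ℋ] q := hq_meas.mono hSH le_rfl
  have hhH : Measurable[ℋ] h := by
    apply ((hqH.mul (measurable_const.sub hqH))).mul
    exact (hp_meas.const_div 1).add ((measurable_const.sub hp_meas).const_div 1)
  have hcH : Measurable[ℋ] c := ((hqH.mul (measurable_const.sub hqH)).div
    (measurable_const.sub hp_meas)).neg
  have key : ∀ ω, W ω * (A ω - q ω) = A ω * h ω + c ω := by
    intro ω
    rcases hA01 ω with h0 | h1
    · simp only [hW, h0, hh, hc]; ring
    · simp only [hW, h1, hh, hc]; ring
  -- bounds
  have hbdd : ∀ᵐ ω ∂P, |h ω| ≤ 2 / ε ∧ |c ω| ≤ 1 / ε := by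
    filter_upwards [hp_bdd, hq_bdd] with ω ⟨hp1, hp2⟩ ⟨hq1, hq2⟩
    have hεle : ε ≤ 1 := by linarith
    have hq0 : 0 ≤ q ω := le_trans hε_pos.le hq1
    have hq1' : q ω ≤ 1 := by linarith
    have hqq : |q ω * (1 - q ω)| ≤ 1 := by
      rw [abs_mul]
      have : |q ω| ≤ 1 := by rw [abs_le]; constructor <;> linarith
      have h2 : |1 - q ω| ≤ 1 := by rw [abs_le]; constructor <;> linarith
      nlinarith [abs_nonneg (q ω), abs_nonneg (1 - q ω)]
    have hpp : (0:ℝ) < p ω := lt_of_lt_of_le hε_pos hp1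
    have hpp' : (0:ℝ) < 1 - p ω := by linarith
    have hip : 1 / p ω ≤ 1 / ε := one_div_le_one_div_of_le hε_pos hp1
    have hip' : 1 / (1 - p ω) ≤ 1 / ε := one_div_le_one_div_of_le hε_pos (by linarith)
    constructor
    · rw [abs_mul]
      have hs : |1 / p ω + 1 / (1 - p ω)| ≤ 2 / ε := by
        rw [abs_of_nonneg (by positivity)]
        have : (2:ℝ) / ε = 1 / ε + 1 / ε := by ring
        rw [this]; exact add_le_add hip hip'
      calc |q ω * (1 - q ω)| * |1 / p ω + 1 / (1 - p ω)|
          ≤ 1 * (2 / ε) := mul_le_mul hqq hs (abs_nonneg _) zero_le_one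
        _ = 2 / ε := one_mul _
    · rw [abs_neg, abs_div]
      rw [abs_of_nonneg hpp'.le]
      rw [div_le_div_iff₀ hpp' hε_pos] at *
      calc |q ω * (1 - q ω)| * ε ≤ 1 * ε := by nlinarith
        _ ≤ 1 * (1 - p ω) := by nlinarith
  -- integrability
  have hhm : Measurable[m] h := hhH.mono hHm le_rfl
  have hcm : Measurable[m] c := hcH.mono hHm le_rfl
  have hAbd : ∀ ω, |A ω| ≤ 1 := by
    intro ω; rcases hA01 ω with h0 | h1
    · simp [h0]
    · simp [h1]
  have hint_Ah : Integrable (fun ω => A ω * h ω) P := by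
    refine ⟨(hA_meas.mul hhm).aestronglyMeasurable (μ := P), ?_⟩
    apply HasFiniteIntegral.of_bounded (C := 2 / ε)
    filter_upwards [hbdd] with ω ⟨hb, _⟩
    rw [Real.norm_eq_abs, abs_mul]
    calc |A ω| * |h ω| ≤ 1 * (2 / ε) :=
      mul_le_mul (hAbd ω) hb (abs_nonneg _) zero_le_one
    _ = 2 / ε := one_mul _
  have hint_c : Integrable c P := by
    refine ⟨hcm.aestronglyMeasurable (μ := P), ?_⟩
    apply HasFiniteIntegral.of_bounded (C := 1 / ε)
    filter_upwards [hbdd] with ω ⟨_, hb⟩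
    rw [Real.norm_eq_abs]; exact hb
  have hint_A : Integrable A P := by
    refine ⟨hA_meas.aestronglyMeasurable (μ := P), ?_⟩
    apply HasFiniteIntegral.of_bounded (C := 1)
    exact Filter.Eventually.of_forall fun ω => by rw [Real.norm_eq_abs]; exact hAbd ω
  have hint_F : Integrable (fun ω => W ω * (A ω - q ω)) P := by
    have : (fun ω => W ω * (A ω - q ω)) = fun ω => A ω * h ω + c ω := funext key
    rw [this]; exact hint_Ah.add hint_c
  -- conditional expectation computation
  have e1 : P[fun ω => W ω * (A ω - q ω)|ℋ] =ᵐ[P] P[fun ω => A ω * h ω + c ω|ℋ] := by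
    exact condExp_congr_ae (Filter.Eventually.of_forall key)
  have e2 : P[fun ω => A ω * h ω + c ω|ℋ]
      =ᵐ[P] P[fun ω => A ω * h ω|ℋ] + P[c|ℋ] := condExp_add hint_Ah hint_c ℋ
  have e3 : P[fun ω => A ω * h ω|ℋ] =ᵐ[P] fun ω => h ω * (P[A|ℋ]) ω := by
    have hmul : (fun ω => A ω * h ω) = fun ω => h ω * A ω := by
      funext ω; ring
    have step1 : P[fun ω => A ω * h ω|ℋ] =ᵐ[P] P[fun ω => h ω * A ω|ℋ] :=
      condExp_congr_ae (Filter.Eventually.of_forall fun ω => by ring)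
    have step2 := condExp_mul_of_stronglyMeasurable_left (μ := P) (m := ℋ)
      (hhH.stronglyMeasurable)
      (hint_Ah.congr (Filter.Eventually.of_forall fun ω => by
        simp only [Pi.mul_apply]; ring)) hint_A
    exact step1.trans step2
  have e4 : P[c|ℋ] =ᵐ[P] c :=
    Filter.EventuallyEq.of_eq (condExp_of_stronglyMeasurable hHm hcH.stronglyMeasurable hint_c)
  have e5 : (fun ω => h ω * (P[A|ℋ]) ω) + c =ᵐ[P] fun _ => (0 : ℝ) := by
    filter_upwards [hp_bdd, hp_ce] with ω ⟨hp1, hp2⟩ hpe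
    have hpp : p ω ≠ 0 := ne_of_gt (lt_of_lt_of_le hε_pos hp1)
    have hpp' : (1 : ℝ) - p ω ≠ 0 := by
      have : (0:ℝ) < 1 - p ω := by linarith
      linarith
    simp only [Pi.add_apply, hh, hc, ← hpe]
    field_simp
    ring
  have main : P[fun ω => W ω * (A ω - q ω)|ℋ] =ᵐ[P] fun _ => (0 : ℝ) := by
    refine e1.trans (e2.trans ?_)
    calc P[fun ω => A ω * h ω|ℋ] + P[c|ℋ]
        =ᵐ[P] (fun ω => h ω * (P[A|ℋ]) ω) + c := e3.add e4
      _ =ᵐ[P] fun _ => (0 : ℝ) := e5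
  refine ⟨main, fun g hg_meas ⟨C, hgC⟩ => ?_⟩
  have hgm : Measurable[m] g := hg_meas.mono hHm le_rfl
  have hint_Fg : Integrable (fun ω => W ω * (A ω - q ω) * g ω) P :=
    hint_F.bdd_mul (f := g) (hgm.aestronglyMeasurable (μ := P))
      (Filter.Eventually.of_forall fun ω => by rw [Real.norm_eq_abs]; exact hgC ω) |>.congr
      (Filter.Eventually.of_forall fun ω => by ring)
  have eg : P[fun ω => W ω * (A ω - q ω) * g ω|ℋ] =ᵐ[P] fun _ => (0 : ℝ) := by
    have hmul : (fun ω => W ω * (A ω - q ω) * g ω)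
        = fun ω => g ω * (W ω * (A ω - q ω)) := by funext ω; ring
    have step1 : P[fun ω => W ω * (A ω - q ω) * g ω|ℋ]
        =ᵐ[P] P[fun ω => g ω * (W ω * (A ω - q ω))|ℋ] :=
      condExp_congr_ae (Filter.Eventually.of_forall fun ω => by ring)
    have step2 := condExp_mul_of_stronglyMeasurable_left (μ := P) (m := ℋ)
      (hg_meas.stronglyMeasurable)
      (hint_Fg.congr (Filter.Eventually.of_forall fun ω => by
        simp only [Pi.mul_apply]; ring)) hint_F
    refine step1.trans (step2.trans ?_)
    filter_upwards [main] with ω hω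
    simp [Pi.mul_apply, hω]
  calc ∫ ω, W ω * (A ω - q ω) * g ω ∂P
      = ∫ ω, (P[fun ω => W ω * (A ω - q ω) * g ω|ℋ]) ω ∂P :=
        (integral_condExp hHm).symm
    _ = ∫ _ω, (0:ℝ) ∂P := integral_congr_ae eg
    _ = 0 := by simp
end

section
/- Inverse probability weighting identity for the moderated treatment effect: E[A·Y/p − (1−A)·Y/(1−p) | 𝒮] = E[μ₁ − μ₀ | 𝒮] almost surely. That is, the inverse-probability-weighted contrast conditional on the moderators equals the conditional expectation, given the moderators, of the difference of the conditional-on-treatment means given the full history. -/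
open MeasureTheory ProbabilityTheory

/-- Inverse probability weighting identity for the moderated treatment
effect: `E[A·Y/p − (1−A)·Y/(1−p) | 𝒮] = E[μ₁ − μ₀ | 𝒮]` almost surely. -/
theorem ipw_identity_moderated_effect
    {Ω : Type*} (𝒮 ℋ : MeasurableSpace Ω) {m : MeasurableSpace Ω} {P : Measure Ω} [IsProbabilityMeasure P]
    (hSH : 𝒮 ≤ ℋ) (hHm : ℋ ≤ m)
    (A : Ω → ℝ) (hA_meas : Measurable A) (hA01 : ∀ ω, A ω = 0 ∨ A ω = 1)
    (Y : Ω → ℝ) (hY_int : Integrable Y P)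
    (ε : ℝ) (hε_pos : 0 < ε) (hε_lt : ε < 1 / 2)
    (p : Ω → ℝ) (hp_meas : Measurable[ℋ] p)
    (hp_bdd : ∀ᵐ ω ∂P, ε ≤ p ω ∧ p ω ≤ 1 - ε)
    (hp_ce : p =ᵐ[P] P[A|ℋ])
    (μ₁ μ₀ : Ω → ℝ)
    (hμ₁ : ∀ ω, μ₁ ω = (P[(fun ω' => A ω' * Y ω')|ℋ]) ω / p ω)
    (hμ₀ : ∀ ω, μ₀ ω = (P[(fun ω' => (1 - A ω') * Y ω')|ℋ]) ω / (1 - p ω)) :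
    P[fun ω => A ω * Y ω / p ω - (1 - A ω) * Y ω / (1 - p ω)|𝒮]
      =ᵐ[P] P[fun ω => μ₁ ω - μ₀ ω|𝒮] := by
  have hA_bd : ∀ ω, |A ω| ≤ 1 := by
    intro ω; rcases hA01 ω with h | h <;> simp [h]
  have hAm : Measurable[m] A := hA_meas.mono (le_refl _) le_rfl |>.mono le_rfl le_rfl
  have hpm : Measurable[m] p := hp_meas.mono hHm le_rfl
  have hYasm : AEStronglyMeasurable[m] Y P := hY_int.1
  -- integrability of A*Y and (1-A)*Y
  have intA : Integrable (fun ω => A ω * Y ω) P := by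
    refine hY_int.bdd_mul (hAm.aestronglyMeasurable) (c := 1) (ae_of_all _ fun ω => ?_)
    simpa using hA_bd ω
  have intB : Integrable (fun ω => (1 - A ω) * Y ω) P := by
    refine hY_int.bdd_mul ((measurable_const : Measurable[m] fun _ : Ω => (1:ℝ)).sub hAm).aestronglyMeasurable
      (c := 2) (ae_of_all _ fun ω => ?_)
    have := hA_bd ω
    rw [Real.norm_eq_abs]
    cases abs_cases (A ω) <;> cases abs_cases (1 - A ω) <;> linarith [this]
  -- a.e. bounds on p
  have hεp : ∀ᵐ ω ∂P, ε ≤ p ω ∧ ε ≤ 1 - p ω := by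
    filter_upwards [hp_bdd] with ω ⟨h1, h2⟩
    exact ⟨h1, by linarith⟩
  -- integrability of p⁻¹ * (A*Y)
  have int1 : Integrable (fun ω => (p ω)⁻¹ * (A ω * Y ω)) P := by
    refine Integrable.mono' (intA.norm.const_mul ε⁻¹)
      ((hpm.inv.aestronglyMeasurable).mul (hAm.aestronglyMeasurable.mul hYasm)) ?_
    filter_upwards [hεp] with ω ⟨h1, _⟩
    have hp0 : 0 < p ω := lt_of_lt_of_le hε_pos h1
    rw [Real.norm_eq_abs, abs_mul, abs_inv, abs_of_pos hp0]
    have hle : (p ω)⁻¹ ≤ ε⁻¹ := inv_anti₀ hε_pos h1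
    calc (p ω)⁻¹ * |A ω * Y ω| ≤ ε⁻¹ * |A ω * Y ω| :=
            mul_le_mul_of_nonneg_right hle (abs_nonneg _)
      _ = ε⁻¹ * ‖A ω * Y ω‖ := by rw [Real.norm_eq_abs]
  have int0 : Integrable (fun ω => (1 - p ω)⁻¹ * ((1 - A ω) * Y ω)) P := by
    refine Integrable.mono' (intB.norm.const_mul ε⁻¹)
      ((((measurable_const : Measurable[m] fun _ : Ω => (1:ℝ)).sub hpm).inv.aestronglyMeasurable).mul
        ((((measurable_const : Measurable[m] fun _ : Ω => (1:ℝ)).sub hAm).aestronglyMeasurable).mul hYasm)) ?_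
    filter_upwards [hεp] with ω ⟨_, h2⟩
    have hp0 : 0 < 1 - p ω := lt_of_lt_of_le hε_pos h2
    rw [Real.norm_eq_abs, abs_mul, abs_inv, abs_of_pos hp0]
    have hle : (1 - p ω)⁻¹ ≤ ε⁻¹ := inv_anti₀ hε_pos h2
    calc (1 - p ω)⁻¹ * |(1 - A ω) * Y ω| ≤ ε⁻¹ * |(1 - A ω) * Y ω| :=
            mul_le_mul_of_nonneg_right hle (abs_nonneg _)
      _ = ε⁻¹ * ‖(1 - A ω) * Y ω‖ := by rw [Real.norm_eq_abs]
  -- the integrand equals the difference of the two products pointwise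
  have hfg : (fun ω => A ω * Y ω / p ω - (1 - A ω) * Y ω / (1 - p ω))
      = fun ω => (p ω)⁻¹ * (A ω * Y ω) - (1 - p ω)⁻¹ * ((1 - A ω) * Y ω) := by
    funext ω
    rw [div_eq_inv_mul, div_eq_inv_mul]
  -- pull-out property
  have hpull1 : P[fun ω => (p ω)⁻¹ * (A ω * Y ω)|ℋ]
      =ᵐ[P] fun ω => (p ω)⁻¹ * (P[(fun ω' => A ω' * Y ω')|ℋ]) ω := by
    have := condExp_mul_of_stronglyMeasurable_left (μ := P) (m := ℋ)
      (f := fun ω => (p ω)⁻¹) (g := fun ω => A ω * Y ω)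
      (hp_meas.inv.stronglyMeasurable) (by simpa [Pi.mul_def] using int1) intA
    simpa [Pi.mul_def] using this
  have hpull0 : P[fun ω => (1 - p ω)⁻¹ * ((1 - A ω) * Y ω)|ℋ]
      =ᵐ[P] fun ω => (1 - p ω)⁻¹ * (P[(fun ω' => (1 - A ω') * Y ω')|ℋ]) ω := by
    have := condExp_mul_of_stronglyMeasurable_left (μ := P) (m := ℋ)
      (f := fun ω => (1 - p ω)⁻¹) (g := fun ω => (1 - A ω) * Y ω)
      (((measurable_const : Measurable[ℋ] fun _ : Ω => (1:ℝ)).sub hp_meas).inv.stronglyMeasurable)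
      (by simpa [Pi.mul_def] using int0) intB
    simpa [Pi.mul_def] using this
  -- conditional expectation given ℋ equals μ₁ - μ₀
  have hH : P[fun ω => A ω * Y ω / p ω - (1 - A ω) * Y ω / (1 - p ω)|ℋ]
      =ᵐ[P] fun ω => μ₁ ω - μ₀ ω := by
    calc P[fun ω => A ω * Y ω / p ω - (1 - A ω) * Y ω / (1 - p ω)|ℋ]
        = P[fun ω => (p ω)⁻¹ * (A ω * Y ω) - (1 - p ω)⁻¹ * ((1 - A ω) * Y ω)|ℋ] := by
          rw [hfg]
      _ =ᵐ[P] P[fun ω => (p ω)⁻¹ * (A ω * Y ω)|ℋ]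
            - P[fun ω => (1 - p ω)⁻¹ * ((1 - A ω) * Y ω)|ℋ] := condExp_sub int1 int0 ℋ
      _ =ᵐ[P] fun ω => μ₁ ω - μ₀ ω := by
          filter_upwards [hpull1, hpull0] with ω h1 h0
          simp only [Pi.sub_apply, h1, h0, hμ₁ ω, hμ₀ ω, div_eq_inv_mul]
  -- tower property
  calc P[fun ω => A ω * Y ω / p ω - (1 - A ω) * Y ω / (1 - p ω)|𝒮]
      =ᵐ[P] P[P[fun ω => A ω * Y ω / p ω - (1 - A ω) * Y ω / (1 - p ω)|ℋ]|𝒮] :=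
        (condExp_condExp_of_le hSH hHm).symm
    _ =ᵐ[P] P[fun ω => μ₁ ω - μ₀ ω|𝒮] := condExp_congr_ae hH
end

section
/- Identification of a potential outcome mean from observed data: let a ∈ {0,1} and set p_a = a·p + (1−a)·(1−p). Suppose V is an integrable real random variable (a potential outcome) such that σ(V) and σ(A) are conditionally independent given ℋ (sequential ignorability), and suppose 1{A = a}·V = 1{A = a}·Y almost surely (consistency). Then E[V | ℋ] = E[1{A = a}·Y | ℋ]/p_a almost surely, and hence E[V | 𝒮] = E[1{A = a}·Y/p_a | 𝒮] almost surely. -/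
open MeasureTheory ProbabilityTheory

/-- Product rule for conditional expectation under conditional independence, where one
factor is the indicator of a set in the σ-algebra generated by `A`. -/
lemma condexp_indicator_mul_of_condIndepFun
    {Ω : Type*} {m : MeasurableSpace Ω} [StandardBorelSpace Ω]
    {P : Measure Ω} [IsProbabilityMeasure P]
    {ℋ : MeasurableSpace Ω} (hHm : ℋ ≤ m)
    {V A : Ω → ℝ} (hV_meas : Measurable[m] V) (hA_meas : Measurable[m] A)
    (hV_int : Integrable V P)
    (h_indep : CondIndepFun ℋ hHm V A P)
    {t2 : Set Ω}
    (ht2 : MeasurableSet[MeasurableSpace.comap A (inferInstance : MeasurableSpace ℝ)] t2) :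
    P[fun ω => t2.indicator (fun _ => (1:ℝ)) ω * V ω|ℋ]
      =ᵐ[P] fun ω => (P[t2.indicator (fun _ => (1:ℝ))|ℋ]) ω * (P[V|ℋ]) ω := by
  letI : MeasurableSpace Ω := m
  have hmV : MeasurableSpace.comap V (inferInstance : MeasurableSpace ℝ) ≤ m :=
    hV_meas.comap_le
  set I : Ω → ℝ := t2.indicator (fun _ => (1:ℝ)) with hI_def
  set q : Ω → ℝ := P[I|ℋ] with hq_def
  have hq_sm : StronglyMeasurable[ℋ] q := stronglyMeasurable_condExp
  have ht2m : MeasurableSet[m] t2 := hA_meas.comap_le _ ht2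
  have hI_meas : Measurable[m] I := measurable_const.indicator ht2m
  have hI_bdd : ∀ ω, ‖I ω‖ ≤ 1 := by
    intro ω
    by_cases h : ω ∈ t2 <;> simp [hI_def, Set.indicator_of_mem, Set.indicator_of_notMem, h]
  have hI_int : Integrable I P :=
    (integrable_const (1:ℝ)).mono' (hI_meas.aestronglyMeasurable : AEStronglyMeasurable I P)
      (Filter.Eventually.of_forall hI_bdd)
  have hq_int : Integrable q P := integrable_condExp
  have hq_bdd : ∀ᵐ ω ∂P, ‖q ω‖ ≤ 1 := by
    have h0 : 0 ≤ᵐ[P] q := condExp_nonneg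
      (Filter.Eventually.of_forall fun ω => Set.indicator_nonneg (fun _ _ => zero_le_one) ω)
    have h1 : q ≤ᵐ[P] P[(fun _ => (1:ℝ))|ℋ] :=
      condExp_mono hI_int (integrable_const 1)
        (Filter.Eventually.of_forall fun ω => by
          by_cases h : ω ∈ t2 <;>
            simp [hI_def, Set.indicator_of_mem, Set.indicator_of_notMem, h])
    rw [condExp_const hHm] at h1
    filter_upwards [h0, h1] with ω h0 h1
    simp only [Pi.zero_apply] at h0
    rw [Real.norm_eq_abs, abs_le]; constructor <;> linarith
  -- indicator of intersections, used repeatedly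
  have hindmul : ∀ (t : Set Ω), (t ∩ t2).indicator (fun _ => (1:ℝ))
      = fun ω => t.indicator (fun _ => (1:ℝ)) ω * I ω := by
    intro t
    funext ω
    by_cases h1 : ω ∈ t <;> by_cases h2 : ω ∈ t2 <;>
      simp [hI_def, Set.indicator_of_mem, Set.indicator_of_notMem, h1, h2, Set.mem_inter_iff]
  -- Key consequence of conditional independence
  have hK1 : ∀ B : Set ℝ, MeasurableSet B →
      P[(V ⁻¹' B ∩ t2).indicator (fun _ => (1:ℝ))|ℋ]
        =ᵐ[P] fun ω => (P[(V ⁻¹' B).indicator (fun _ => (1:ℝ))|ℋ]) ω * q ω := by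
    intro B hB
    have h := (condIndepFun_iff (m' := ℋ) (hm' := hHm) V A hV_meas hA_meas P).mp h_indep (V ⁻¹' B) t2
      ⟨B, hB, rfl⟩ ht2
    exact h
  have hind_int : ∀ u : Set Ω, MeasurableSet[m] u →
      Integrable (u.indicator (fun _ => (1:ℝ))) P := fun u hu =>
    (integrable_const (1:ℝ)).indicator hu
  -- Step K2: for every ℋ-measurable set s, E[1_s·(I - q) | σ(V)] = 0
  have hK2 : ∀ s : Set Ω, MeasurableSet[ℋ] s →
      P[s.indicator (fun ω => I ω - q ω)|MeasurableSpace.comap V (inferInstance : MeasurableSpace ℝ)] =ᵐ[P] fun _ => (0:ℝ) := by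
    intro s hs
    have hsm : MeasurableSet[m] s := hHm s hs
    have hu_int : Integrable (s.indicator fun ω => I ω - q ω) P :=
      (hI_int.sub hq_int).indicator hsm
    refine (ae_eq_condExp_of_forall_setIntegral_eq hmV hu_int
      (fun t _ _ => integrableOn_zero) (fun t ht _ => ?_)
      ((stronglyMeasurable_const : StronglyMeasurable[MeasurableSpace.comap V (inferInstance : MeasurableSpace ℝ)]
        (fun _ => (0:ℝ))).aestronglyMeasurable)).symm
    obtain ⟨B, hB, rfl⟩ := ht
    have hK := hK1 B hB
    have htm : MeasurableSet[m] (V ⁻¹' B) := hV_meas hB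
    set t : Set Ω := V ⁻¹' B with ht_def
    -- pull-out for q * 1_t
    have hqt_int : Integrable (fun ω => q ω * t.indicator (fun _ => (1:ℝ)) ω) P :=
      (hind_int t htm).bdd_mul (hq_sm.mono hHm).aestronglyMeasurable hq_bdd
    have hpull : P[fun ω => q ω * t.indicator (fun _ => (1:ℝ)) ω|ℋ]
        =ᵐ[P] fun ω => q ω * (P[t.indicator (fun _ => (1:ℝ))|ℋ]) ω :=
      condExp_mul_of_stronglyMeasurable_left hq_sm hqt_int (hind_int t htm)
    have h1 : ∫ x in t, s.indicator (fun ω => I ω - q ω) x ∂P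
        = ∫ x in t ∩ s, (I x - q x) ∂P := setIntegral_indicator hsm
    have h2 : ∫ x in t ∩ s, (I x - q x) ∂P
        = (∫ x in t ∩ s, I x ∂P) - ∫ x in t ∩ s, q x ∂P :=
      integral_sub hI_int.integrableOn hq_int.integrableOn
    have h3 : ∫ x in t ∩ s, I x ∂P
        = ∫ x in s, (t ∩ t2).indicator (fun _ => (1:ℝ)) x ∂P := by
      rw [Set.inter_comm, ← setIntegral_indicator htm]
      have heq : t.indicator I = (t ∩ t2).indicator (fun _ => (1:ℝ)) := by
        funext ω
        by_cases h1 : ω ∈ t <;> by_cases h2 : ω ∈ t2 <;>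
          simp [hI_def, Set.indicator_apply, h1, h2, Set.mem_inter_iff]
      rw [heq]
    have h4 : ∫ x in s, (t ∩ t2).indicator (fun _ => (1:ℝ)) x ∂P
        = ∫ x in s, (P[(t ∩ t2).indicator (fun _ => (1:ℝ))|ℋ]) x ∂P :=
      (setIntegral_condExp hHm (hind_int _ (htm.inter ht2m)) hs).symm
    have h5 : ∫ x in s, (P[(t ∩ t2).indicator (fun _ => (1:ℝ))|ℋ]) x ∂P
        = ∫ x in s, (P[t.indicator (fun _ => (1:ℝ))|ℋ]) x * q x ∂P :=
      setIntegral_congr_ae hsm (hK.mono fun ω h _ => h)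
    have h6 : ∫ x in t ∩ s, q x ∂P
        = ∫ x in s, q x * t.indicator (fun _ => (1:ℝ)) x ∂P := by
      rw [Set.inter_comm, ← setIntegral_indicator htm]
      have heq : t.indicator q = fun ω => q ω * t.indicator (fun _ => (1:ℝ)) ω := by
        funext ω
        by_cases h1 : ω ∈ t <;> simp [Set.indicator_apply, h1]
      rw [heq]
    have h7 : ∫ x in s, q x * t.indicator (fun _ => (1:ℝ)) x ∂P
        = ∫ x in s, q x * (P[t.indicator (fun _ => (1:ℝ))|ℋ]) x ∂P := by
      rw [← setIntegral_condExp hHm hqt_int hs]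
      exact setIntegral_congr_ae hsm (hpull.mono fun ω h _ => h)
    have : ∫ x in t, s.indicator (fun ω => I ω - q ω) x ∂P = 0 := by
      rw [h1, h2, h3, h4, h5, h6, h7]
      have : ∀ x, (P[t.indicator (fun _ => (1:ℝ))|ℋ]) x * q x
          = q x * (P[t.indicator (fun _ => (1:ℝ))|ℋ]) x := fun x => mul_comm _ _
      rw [integral_congr_ae (Filter.Eventually.of_forall fun x => this x)]
      ring
    rw [this]
    simp
  -- Step K3: for every ℋ-measurable set s, ∫_s (I - q)·V = 0
  have hVsm : StronglyMeasurable[MeasurableSpace.comap V (inferInstance : MeasurableSpace ℝ)] V :=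
    (measurable_iff_comap_le.mpr le_rfl).stronglyMeasurable
  have hK3 : ∀ s : Set Ω, MeasurableSet[ℋ] s →
      ∫ x in s, (I x - q x) * V x ∂P = 0 := by
    intro s hs
    have hsm : MeasurableSet[m] s := hHm s hs
    have hu_meas : Measurable[m] (s.indicator fun ω => I ω - q ω) :=
      (hI_meas.sub (hq_sm.mono hHm).measurable).indicator hsm
    have hu_int : Integrable (s.indicator fun ω => I ω - q ω) P :=
      (hI_int.sub hq_int).indicator hsm
    have hu_bdd : ∀ᵐ ω ∂P, ‖s.indicator (fun ω => I ω - q ω) ω‖ ≤ 2 := by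
      filter_upwards [hq_bdd] with ω hq
      have h2 : ‖I ω - q ω‖ ≤ 2 := by
        calc ‖I ω - q ω‖ ≤ ‖I ω‖ + ‖q ω‖ := norm_sub_le _ _
          _ ≤ 2 := by have := hI_bdd ω; linarith
      by_cases h : ω ∈ s
      · rwa [Set.indicator_of_mem h]
      · rw [Set.indicator_of_notMem h]; simp
    have huV_int : Integrable (fun ω => s.indicator (fun ω => I ω - q ω) ω * V ω) P :=
      hV_int.bdd_mul hu_meas.aestronglyMeasurable hu_bdd
    have hVu_int : Integrable (fun ω => V ω * s.indicator (fun ω => I ω - q ω) ω) P :=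
      huV_int.congr (Filter.Eventually.of_forall fun ω => mul_comm _ _)
    have hpull : P[fun ω => V ω * s.indicator (fun ω => I ω - q ω) ω|MeasurableSpace.comap V (inferInstance : MeasurableSpace ℝ)]
        =ᵐ[P] fun ω => V ω * (P[s.indicator (fun ω => I ω - q ω)|MeasurableSpace.comap V (inferInstance : MeasurableSpace ℝ)]) ω :=
      condExp_mul_of_stronglyMeasurable_left hVsm hVu_int hu_int
    have hz : P[fun ω => V ω * s.indicator (fun ω => I ω - q ω) ω|MeasurableSpace.comap V (inferInstance : MeasurableSpace ℝ)]
        =ᵐ[P] fun _ => (0:ℝ) := by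
      filter_upwards [hpull, hK2 s hs] with ω ha hb
      rw [ha, hb, mul_zero]
    have : ∫ x in s, (I x - q x) * V x ∂P
        = ∫ x, V x * s.indicator (fun ω => I ω - q ω) x ∂P := by
      rw [← integral_indicator hsm]
      congr 1
      funext ω
      by_cases h : ω ∈ s <;>
        simp [Set.indicator_of_mem, Set.indicator_of_notMem, h, mul_comm]
    rw [this, ← integral_condExp hmV, integral_congr_ae hz, integral_zero]
  -- Conclusion via the characterization of conditional expectation
  have hIV_int : Integrable (fun ω => I ω * V ω) P :=
    hV_int.bdd_mul hI_meas.aestronglyMeasurable (Filter.Eventually.of_forall hI_bdd)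
  have hqCE_int : Integrable (fun ω => q ω * (P[V|ℋ]) ω) P :=
    integrable_condExp.bdd_mul (hq_sm.mono hHm).aestronglyMeasurable hq_bdd
  have hqV_int : Integrable (fun ω => q ω * V ω) P :=
    hV_int.bdd_mul (hq_sm.mono hHm).aestronglyMeasurable hq_bdd
  have hpullV : P[fun ω => q ω * V ω|ℋ] =ᵐ[P] fun ω => q ω * (P[V|ℋ]) ω :=
    condExp_mul_of_stronglyMeasurable_left hq_sm hqV_int hV_int
  refine (ae_eq_condExp_of_forall_setIntegral_eq hHm hIV_int
    (fun s _ _ => hqCE_int.integrableOn) (fun s hs _ => ?_)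
    ((hq_sm.mul stronglyMeasurable_condExp).aestronglyMeasurable)).symm
  have e1 : ∫ x in s, q x * (P[V|ℋ]) x ∂P = ∫ x in s, q x * V x ∂P := by
    rw [← setIntegral_condExp hHm hqV_int hs]
    exact (setIntegral_congr_ae (hHm s hs) (hpullV.mono fun ω h _ => h)).symm
  have e2 : ∫ x in s, I x * V x ∂P - ∫ x in s, q x * V x ∂P = 0 := by
    rw [← integral_sub hIV_int.integrableOn hqV_int.integrableOn]
    have : ∀ x, I x * V x - q x * V x = (I x - q x) * V x := fun x => by ring
    rw [integral_congr_ae (Filter.Eventually.of_forall fun x => this x)]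
    exact hK3 s hs
  rw [e1]
  linarith

/-- Identification of a potential outcome mean from observed data: under
sequential ignorability (`V ⟂ A | ℋ`) and consistency (`1{A = a}·V = 1{A = a}·Y` a.s.),
`E[V | ℋ] = E[1{A = a}·Y | ℋ]/p_a` a.s., where `p_a = a·p + (1−a)·(1−p)`, and hence
`E[V | 𝒮] = E[1{A = a}·Y/p_a | 𝒮]` a.s. -/
theorem potential_outcome_identification
    {Ω : Type*} (𝒮 ℋ : MeasurableSpace Ω) {m : MeasurableSpace Ω} [StandardBorelSpace Ω]
    {P : Measure Ω} [IsProbabilityMeasure P]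
    (hSH : 𝒮 ≤ ℋ) (hHm : ℋ ≤ m)
    (A : Ω → ℝ) (hA_meas : Measurable A) (hA01 : ∀ ω, A ω = 0 ∨ A ω = 1)
    (Y : Ω → ℝ) (hY_int : Integrable Y P)
    (ε : ℝ) (hε_pos : 0 < ε) (hε_lt : ε < 1 / 2)
    (p : Ω → ℝ) (hp_meas : Measurable[ℋ] p)
    (hp_bdd : ∀ᵐ ω ∂P, ε ≤ p ω ∧ p ω ≤ 1 - ε)
    (hp_ce : p =ᵐ[P] P[A|ℋ])
    (a : ℝ) (ha : a = 0 ∨ a = 1)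
    (V : Ω → ℝ) (hV_meas : Measurable V) (hV_int : Integrable V P)
    (h_ignorable : CondIndepFun ℋ hHm V A P)
    (h_consistency : ∀ᵐ ω ∂P,
      (if A ω = a then V ω else 0) = (if A ω = a then Y ω else 0)) :
    (P[V|ℋ] =ᵐ[P] fun ω =>
        (P[(fun ω' => if A ω' = a then Y ω' else 0)|ℋ]) ω
          / (a * p ω + (1 - a) * (1 - p ω))) ∧
      P[V|𝒮] =ᵐ[P]
        P[fun ω => (if A ω = a then Y ω else 0) / (a * p ω + (1 - a) * (1 - p ω))|𝒮] := by
  letI : MeasurableSpace Ω := m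
  have hA_m : Measurable[m] A := hA_meas
  have hV_m : Measurable[m] V := hV_meas
  have hA_int : Integrable A P :=
    (integrable_const (1:ℝ)).mono'
      (hA_m.aestronglyMeasurable : AEStronglyMeasurable A P)
      (Filter.Eventually.of_forall fun ω => by rcases hA01 ω with h | h <;> simp [h])
  set t2 : Set Ω := A ⁻¹' {a} with ht2_def
  have ht2 : MeasurableSet[MeasurableSpace.comap A (inferInstance : MeasurableSpace ℝ)] t2 :=
    ⟨{a}, measurableSet_singleton a, rfl⟩
  have ht2m : MeasurableSet[m] t2 := hA_m (measurableSet_singleton a)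
  have hIeq : ∀ f : Ω → ℝ, (fun ω => if A ω = a then f ω else 0)
      = fun ω => t2.indicator (fun _ => (1:ℝ)) ω * f ω := by
    intro f; funext ω
    by_cases h : A ω = a <;>
      simp [ht2_def, Set.indicator_apply, Set.mem_preimage, h]
  have hind_bdd : ∀ ω, ‖t2.indicator (fun _ => (1:ℝ)) ω‖ ≤ 1 := by
    intro ω
    by_cases h : ω ∈ t2 <;> simp [Set.indicator_of_mem, Set.indicator_of_notMem, h]
  -- product rule from conditional independence
  have hprod := condexp_indicator_mul_of_condIndepFun hHm hV_m hA_m hV_int h_ignorable ht2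
  -- identification of the conditional probability of {A = a} with p_a
  have hqpa : P[t2.indicator (fun _ => (1:ℝ))|ℋ]
      =ᵐ[P] fun ω => a * p ω + (1 - a) * (1 - p ω) := by
    rcases ha with ha | ha
    · subst ha
      have heq : t2.indicator (fun _ => (1:ℝ)) = fun ω => 1 - A ω := by
        funext ω; rcases hA01 ω with h | h <;>
          simp [ht2_def, Set.indicator_apply, Set.mem_preimage, h]
      rw [heq]
      calc P[fun ω => 1 - A ω|ℋ]
          =ᵐ[P] P[(fun _ => (1:ℝ))|ℋ] - P[A|ℋ] :=
            condExp_sub (integrable_const (1:ℝ)) hA_int ℋ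
        _ =ᵐ[P] fun ω => 0 * p ω + (1 - 0) * (1 - p ω) := by
            filter_upwards [hp_ce] with ω h
            rw [Pi.sub_apply, condExp_const hHm, ← h]
            ring
    · subst ha
      have heq : t2.indicator (fun _ => (1:ℝ)) = A := by
        funext ω; rcases hA01 ω with h | h <;>
          simp [ht2_def, Set.indicator_apply, Set.mem_preimage, h]
      rw [heq]
      filter_upwards [hp_ce] with ω h
      rw [← h]; ring
  have hpa_pos : ∀ᵐ ω ∂P, ε ≤ a * p ω + (1 - a) * (1 - p ω) := by
    filter_upwards [hp_bdd] with ω hω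
    obtain ⟨h1, h2⟩ := hω
    rcases ha with ha | ha <;> subst ha <;> nlinarith
  -- the main chain at the level of ℋ
  have hchain : P[(fun ω' => if A ω' = a then Y ω' else 0)|ℋ]
      =ᵐ[P] fun ω => (a * p ω + (1 - a) * (1 - p ω)) * (P[V|ℋ]) ω := by
    have hcons : (fun ω' => if A ω' = a then Y ω' else 0)
        =ᵐ[P] (fun ω' => if A ω' = a then V ω' else 0) := by
      filter_upwards [h_consistency] with ω h
      exact h.symm
    calc P[(fun ω' => if A ω' = a then Y ω' else 0)|ℋ]
        =ᵐ[P] P[(fun ω' => if A ω' = a then V ω' else 0)|ℋ] :=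
          condExp_congr_ae hcons
      _ = P[fun ω => t2.indicator (fun _ => (1:ℝ)) ω * V ω|ℋ] := by rw [hIeq V]
      _ =ᵐ[P] fun ω => (P[t2.indicator (fun _ => (1:ℝ))|ℋ]) ω * (P[V|ℋ]) ω := hprod
      _ =ᵐ[P] fun ω => (a * p ω + (1 - a) * (1 - p ω)) * (P[V|ℋ]) ω := by
          filter_upwards [hqpa] with ω h
          rw [h]
  have goal1 : P[V|ℋ] =ᵐ[P] fun ω =>
      (P[(fun ω' => if A ω' = a then Y ω' else 0)|ℋ]) ω
        / (a * p ω + (1 - a) * (1 - p ω)) := by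
    filter_upwards [hchain, hpa_pos] with ω h1 h2
    have hpa_ne : a * p ω + (1 - a) * (1 - p ω) ≠ 0 :=
      ne_of_gt (lt_of_lt_of_le hε_pos h2)
    rw [h1, mul_comm, mul_div_assoc, div_self hpa_ne, mul_one]
  refine ⟨goal1, ?_⟩
  -- tower property and pulling the weight inside
  have hIY_int : Integrable (fun ω => if A ω = a then Y ω else 0) P := by
    rw [hIeq Y]
    exact hY_int.bdd_mul (measurable_const.indicator ht2m).aestronglyMeasurable
      (Filter.Eventually.of_forall hind_bdd)
  have hw_sm : StronglyMeasurable[ℋ] (fun ω => (a * p ω + (1 - a) * (1 - p ω))⁻¹) :=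
    (((hp_meas.const_mul a).add ((hp_meas.const_sub 1).const_mul (1 - a))).inv).stronglyMeasurable
  have hw_bdd : ∀ᵐ ω ∂P, ‖(a * p ω + (1 - a) * (1 - p ω))⁻¹‖ ≤ ε⁻¹ := by
    filter_upwards [hpa_pos] with ω h
    have hpos : 0 < a * p ω + (1 - a) * (1 - p ω) := lt_of_lt_of_le hε_pos h
    rw [Real.norm_eq_abs, abs_of_pos (inv_pos.mpr hpos)]
    exact inv_anti₀ hε_pos h
  have hwIY_int : Integrable
      (fun ω => (a * p ω + (1 - a) * (1 - p ω))⁻¹ * (if A ω = a then Y ω else 0)) P :=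
    hIY_int.bdd_mul (hw_sm.mono hHm).aestronglyMeasurable hw_bdd
  have hpull2 : P[fun ω => (a * p ω + (1 - a) * (1 - p ω))⁻¹ * (if A ω = a then Y ω else 0)|ℋ]
      =ᵐ[P] fun ω => (a * p ω + (1 - a) * (1 - p ω))⁻¹
        * (P[(fun ω' => if A ω' = a then Y ω' else 0)|ℋ]) ω :=
    condExp_mul_of_stronglyMeasurable_left hw_sm hwIY_int hIY_int
  calc P[V|𝒮] =ᵐ[P] P[P[V|ℋ]|𝒮] := (condExp_condExp_of_le hSH hHm).symm
    _ =ᵐ[P] P[fun ω => (P[(fun ω' => if A ω' = a then Y ω' else 0)|ℋ]) ω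
          / (a * p ω + (1 - a) * (1 - p ω))|𝒮] := condExp_congr_ae goal1
    _ =ᵐ[P] P[fun ω => (a * p ω + (1 - a) * (1 - p ω))⁻¹
          * (P[(fun ω' => if A ω' = a then Y ω' else 0)|ℋ]) ω|𝒮] :=
        condExp_congr_ae (Filter.Eventually.of_forall fun ω => div_eq_inv_mul _ _)
    _ =ᵐ[P] P[P[fun ω => (a * p ω + (1 - a) * (1 - p ω))⁻¹
          * (if A ω = a then Y ω else 0)|ℋ]|𝒮] := condExp_congr_ae hpull2.symm
    _ =ᵐ[P] P[fun ω => (a * p ω + (1 - a) * (1 - p ω))⁻¹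
          * (if A ω = a then Y ω else 0)|𝒮] := condExp_condExp_of_le hSH hHm
    _ =ᵐ[P] P[fun ω => (if A ω = a then Y ω else 0)
          / (a * p ω + (1 - a) * (1 - p ω))|𝒮] :=
        condExp_congr_ae (Filter.Eventually.of_forall fun ω => (div_eq_inv_mul _ _).symm)
end

section
/- Identification of the moderated proximal treatment effect under consistency and sequential ignorability: suppose Y(0) and Y(1) are integrable real random variables (potential responses) such that σ(Y(0), Y(1)) and σ(A) are conditionally independent given ℋ, and Y = A·Y(1) + (1−A)·Y(0) almost surely. Then E[Y(1) − Y(0) | 𝒮] = E[μ₁ − μ₀ | 𝒮] = E[A·Y/p − (1−A)·Y/(1−p) | 𝒮] almost surely. -/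
open MeasureTheory ProbabilityTheory

open Filter Set

section Aux

variable {Ω : Type*} {ℋ : MeasurableSpace Ω} {m : MeasurableSpace Ω} {P : Measure Ω}
  [IsProbabilityMeasure P]

private lemma aux_int_of_bdd {f : Ω → ℝ} (hf : AEStronglyMeasurable f P) {C : ℝ}
    (hC : ∀ ω, ‖f ω‖ ≤ C) : Integrable f P :=
  Integrable.mono' (integrable_const C) hf (Filter.Eventually.of_forall hC)

private lemma aux_ind_int {T : Set Ω} (hT : MeasurableSet[m] T) :
    Integrable (T.indicator (fun _ => (1 : ℝ))) P :=
  (integrable_const (1 : ℝ)).indicator hT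

/-- Step (*) : equality of set integrals over `H ∩ T`. -/
private lemma aux_setIntegral_inter (hHm : ℋ ≤ m)
    {X : Ω → ℝ} (hX : Measurable X) (hXint : Integrable X P)
    {T : Set Ω} (hT : MeasurableSet[m] T)
    (hind : ∀ s : Set ℝ, MeasurableSet s →
      (P⟦X ⁻¹' s ∩ T|ℋ⟧) =ᵐ[P] fun ω => (P⟦X ⁻¹' s|ℋ⟧) ω * (P⟦T|ℋ⟧) ω)
    {H : Set Ω} (hH : MeasurableSet[ℋ] H) :
    ∫ ω in H ∩ T, X ω ∂P = ∫ ω in H ∩ T, (P[X|ℋ]) ω ∂P := by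
  haveI : IsFiniteMeasure (P.trim hHm) := isFiniteMeasure_trim hHm
  have hHm' : MeasurableSet[m] H := hHm H hH
  have hHT : MeasurableSet[m] (H ∩ T) := hHm'.inter hT
  set c : Ω → ℝ := P⟦T|ℋ⟧ with hc
  -- base case for a single measurable set in ℝ
  have base : ∀ s : Set ℝ, MeasurableSet s →
      ∫ ω in H ∩ T, (X ⁻¹' s).indicator (fun _ => (1:ℝ)) ω ∂P
        = ∫ ω in H ∩ T, (P⟦X ⁻¹' s|ℋ⟧) ω ∂P := by
    intro s hs
    have hXs : MeasurableSet[m] (X ⁻¹' s) := hX hs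
    set φ : Ω → ℝ := fun ω => (P⟦X ⁻¹' s|ℋ⟧) ω * H.indicator (fun _ => (1:ℝ)) ω with hφ
    have hφ_sm : StronglyMeasurable[ℋ] φ :=
      stronglyMeasurable_condExp.mul ((stronglyMeasurable_const).indicator hH)
    have hcondint : Integrable (P⟦X ⁻¹' s|ℋ⟧) P := integrable_condExp
    have hφ_int : Integrable φ P := by
      refine Integrable.mono' hcondint.norm
        ((hφ_sm.mono hHm).aestronglyMeasurable) (Filter.Eventually.of_forall fun ω => ?_)
      show ‖(P⟦X ⁻¹' s|ℋ⟧) ω * H.indicator (fun _ => (1:ℝ)) ω‖ ≤ _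
      rw [norm_mul]
      by_cases h : ω ∈ H <;> simp [Set.indicator_apply, h, norm_nonneg]
    have hφT_int : Integrable (fun ω => φ ω * T.indicator (fun _ => (1:ℝ)) ω) P := by
      refine Integrable.mono' hφ_int.norm
        (((hφ_sm.mono hHm).aestronglyMeasurable).mul
          ((stronglyMeasurable_const.indicator hT).aestronglyMeasurable))
        (Filter.Eventually.of_forall fun ω => ?_)
      rw [norm_mul]
      by_cases h : ω ∈ T <;> simp [Set.indicator_apply, h, norm_nonneg]
    have hpull : P[fun ω => φ ω * T.indicator (fun _ => (1:ℝ)) ω|ℋ]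
        =ᵐ[P] fun ω => φ ω * c ω := by
      have := condExp_mul_of_stronglyMeasurable_left (m := ℋ) (μ := P) hφ_sm
        (g := T.indicator (fun _ => (1:ℝ))) hφT_int (aux_ind_int hT)
      exact this
    -- chain of equalities
    have e1 : ∫ ω in H ∩ T, (X ⁻¹' s).indicator (fun _ => (1:ℝ)) ω ∂P
        = ∫ ω in H, (X ⁻¹' s ∩ T).indicator (fun _ => (1:ℝ)) ω ∂P := by
      rw [← integral_indicator hHT, ← integral_indicator hHm']
      congr 1
      funext ω
      by_cases h1 : ω ∈ H <;> by_cases h2 : ω ∈ T <;> by_cases h3 : ω ∈ X ⁻¹' s <;>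
        simp [Set.indicator_apply, h1, h2, h3]
    have e2 : ∫ ω in H, (X ⁻¹' s ∩ T).indicator (fun _ => (1:ℝ)) ω ∂P
        = ∫ ω in H, (P⟦X ⁻¹' s ∩ T|ℋ⟧) ω ∂P :=
      (setIntegral_condExp hHm (aux_ind_int (hXs.inter hT)) hH).symm
    have e3 : ∫ ω in H, (P⟦X ⁻¹' s ∩ T|ℋ⟧) ω ∂P
        = ∫ ω in H, ((P⟦X ⁻¹' s|ℋ⟧) ω * c ω) ∂P := by
      refine setIntegral_congr_ae hHm' ?_
      filter_upwards [hind s hs] with ω hω _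
      exact hω
    have e4 : ∫ ω in H, ((P⟦X ⁻¹' s|ℋ⟧) ω * c ω) ∂P = ∫ ω, φ ω * c ω ∂P := by
      rw [← integral_indicator hHm']
      congr 1
      funext ω
      by_cases h : ω ∈ H <;> simp [hφ, Set.indicator_apply, h]
    have e5 : ∫ ω, φ ω * c ω ∂P = ∫ ω, φ ω * T.indicator (fun _ => (1:ℝ)) ω ∂P := by
      rw [← integral_condExp hHm (f := fun ω => φ ω * T.indicator (fun _ => (1:ℝ)) ω)]
      exact (integral_congr_ae hpull).symm
    have e6 : ∫ ω, φ ω * T.indicator (fun _ => (1:ℝ)) ω ∂P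
        = ∫ ω in H ∩ T, (P⟦X ⁻¹' s|ℋ⟧) ω ∂P := by
      rw [← integral_indicator hHT]
      congr 1
      funext ω
      by_cases h1 : ω ∈ H <;> by_cases h2 : ω ∈ T <;>
        simp [hφ, Set.indicator_apply, h1, h2]
    rw [e1, e2, e3, e4, e5, e6]
  -- simple functions measurable w.r.t. comap X
  set mY : MeasurableSpace Ω := MeasurableSpace.comap X inferInstance with hmYdef
  have hmY : mY ≤ m := measurable_iff_comap_le.mp hX
  have hXmY : Measurable[mY] X := measurable_iff_comap_le.mpr le_rfl
  set fs : ℕ → @SimpleFunc Ω mY ℝ :=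
    fun n => @SimpleFunc.approxOn ℝ Ω _ _ _ mY X hXmY Set.univ 0 (Set.mem_univ 0) _ n with hfs
  have hfs_tendsto : ∀ ω, Tendsto (fun n => fs n ω) atTop (nhds (X ω)) := fun ω =>
    SimpleFunc.tendsto_approxOn hXmY (Set.mem_univ 0) (by simp)
  have hfs_bound : ∀ n ω, ‖fs n ω‖ ≤ ‖X ω‖ + ‖X ω‖ := fun n ω =>
    SimpleFunc.norm_approxOn_zero_le hXmY (Set.mem_univ 0) ω n
  letI : MeasurableSpace Ω := m
  have hQ : ∀ f : @SimpleFunc Ω mY ℝ,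
      ∫ ω in H ∩ T, f ω ∂P = ∫ ω in H ∩ T, (P[⇑f|ℋ]) ω ∂P := by
    intro f
    refine @SimpleFunc.induction Ω ℝ mY _
      (fun f => ∫ ω in H ∩ T, f ω ∂P = ∫ ω in H ∩ T, (P[⇑f|ℋ]) ω ∂P) ?_ ?_ f
    · intro b s hs
      obtain ⟨u, hu, hsu⟩ := id hs
      have hcoe : ⇑(@SimpleFunc.piecewise Ω ℝ mY s hs (@SimpleFunc.const Ω ℝ mY b)
            (@SimpleFunc.const Ω ℝ mY 0))
          = fun ω => b * s.indicator (fun _ => (1:ℝ)) ω := by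
        funext ω
        by_cases h : ω ∈ s <;>
          simp [SimpleFunc.piecewise_apply, Set.indicator_apply, h]
      rw [hcoe]
      have hs_m : MeasurableSet[m] s := by rw [← hsu]; exact hX hu
      have hbase := base u hu
      rw [hsu] at hbase
      have hsm : P[fun ω => b * s.indicator (fun _ => (1:ℝ)) ω|ℋ]
          =ᵐ[P] fun ω => b * (P⟦s|ℋ⟧) ω := by
        have := condExp_smul (m := ℋ) (μ := P) b (s.indicator (fun _ => (1:ℝ)))
        exact this
      calc ∫ ω in H ∩ T, b * s.indicator (fun _ => (1:ℝ)) ω ∂P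
          = b * ∫ ω in H ∩ T, s.indicator (fun _ => (1:ℝ)) ω ∂P := integral_const_mul b _
        _ = b * ∫ ω in H ∩ T, (P⟦s|ℋ⟧) ω ∂P := by rw [hbase]
        _ = ∫ ω in H ∩ T, b * (P⟦s|ℋ⟧) ω ∂P := (integral_const_mul b _).symm
        _ = ∫ ω in H ∩ T, (P[fun ω => b * s.indicator (fun _ => (1:ℝ)) ω|ℋ]) ω ∂P := by
            refine (setIntegral_congr_ae hHT ?_).symm
            filter_upwards [hsm] with ω hω _
            rw [hω]
    · intro f g _ hf hg
      have hint : ∀ h : @SimpleFunc Ω mY ℝ, Integrable (⇑h) P := by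
        intro h
        obtain ⟨C, hC⟩ := @SimpleFunc.exists_forall_norm_le Ω ℝ mY _ h
        exact aux_int_of_bdd ((h.stronglyMeasurable.mono hmY).aestronglyMeasurable) hC
      have hadd : P[⇑(f + g)|ℋ] =ᵐ[P] P[⇑f|ℋ] + P[⇑g|ℋ] := by
        have h1 : ⇑(f + g) = ⇑f + ⇑g := by
          funext ω; simp
        rw [h1]
        exact condExp_add (hint f) (hint g) _
      have h1 : ⇑(f + g) = ⇑f + ⇑g := by funext ω; simp
      calc ∫ ω in H ∩ T, (f + g) ω ∂P
          = ∫ ω in H ∩ T, (f ω + g ω) ∂P := by rw [h1]; rfl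
        _ = (∫ ω in H ∩ T, f ω ∂P) + ∫ ω in H ∩ T, g ω ∂P :=
            integral_add ((hint f).integrableOn) ((hint g).integrableOn)
        _ = (∫ ω in H ∩ T, (P[⇑f|ℋ]) ω ∂P) + ∫ ω in H ∩ T, (P[⇑g|ℋ]) ω ∂P := by rw [hf, hg]
        _ = ∫ ω in H ∩ T, ((P[⇑f|ℋ]) ω + (P[⇑g|ℋ]) ω) ∂P :=
            (integral_add (integrable_condExp.integrableOn) (integrable_condExp.integrableOn)).symm
        _ = ∫ ω in H ∩ T, (P[⇑(f + g)|ℋ]) ω ∂P := by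
            refine (setIntegral_congr_ae hHT ?_).symm
            filter_upwards [hadd] with ω hω _
            rw [hω]; rfl
  have hfs_meas : ∀ n, Measurable[m] (fs n) := fun n =>
    (@SimpleFunc.measurable Ω ℝ mY _ (fs n)).mono hmY le_rfl
  have hfs_int : ∀ n, Integrable (fs n) P := fun n =>
    Integrable.mono' (hXint.norm.add hXint.norm) ((hfs_meas n).aestronglyMeasurable)
      (Filter.Eventually.of_forall (hfs_bound n))
  -- LHS tendsto
  have hL : Tendsto (fun n => ∫ ω in H ∩ T, fs n ω ∂P) atTop (nhds (∫ ω in H ∩ T, X ω ∂P)) := by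
    refine tendsto_integral_of_dominated_convergence (fun ω => ‖X ω‖ + ‖X ω‖)
      (fun n => ((hfs_meas n).aestronglyMeasurable).restrict)
      ((hXint.norm.add hXint.norm).integrableOn) ?_ ?_
    · exact fun n => Filter.Eventually.of_forall (hfs_bound n)
    · exact Filter.Eventually.of_forall fun ω => hfs_tendsto ω
  -- RHS tendsto
  have hR : Tendsto (fun n => ∫ ω in H ∩ T, (P[⇑(fs n)|ℋ]) ω ∂P) atTop
      (nhds (∫ ω in H ∩ T, (P[X|ℋ]) ω ∂P)) := by
    rw [tendsto_iff_dist_tendsto_zero]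
    have key : ∀ n, dist (∫ ω in H ∩ T, (P[⇑(fs n)|ℋ]) ω ∂P) (∫ ω in H ∩ T, (P[X|ℋ]) ω ∂P)
        ≤ ∫ ω, ‖fs n ω - X ω‖ ∂P := by
      intro n
      rw [Real.dist_eq]
      have h1 : (∫ ω in H ∩ T, (P[⇑(fs n)|ℋ]) ω ∂P) - ∫ ω in H ∩ T, (P[X|ℋ]) ω ∂P
          = ∫ ω in H ∩ T, ((P[⇑(fs n)|ℋ]) ω - (P[X|ℋ]) ω) ∂P :=
        (integral_sub (integrable_condExp.integrableOn) (integrable_condExp.integrableOn)).symm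
      rw [h1]
      calc |∫ ω in H ∩ T, ((P[⇑(fs n)|ℋ]) ω - (P[X|ℋ]) ω) ∂P|
          ≤ ∫ ω in H ∩ T, |(P[⇑(fs n)|ℋ]) ω - (P[X|ℋ]) ω| ∂P := by
            simpa [Real.norm_eq_abs] using
              norm_integral_le_integral_norm (μ := P.restrict (H ∩ T))
                (f := fun ω => (P[⇑(fs n)|ℋ]) ω - (P[X|ℋ]) ω)
        _ ≤ ∫ ω, |(P[⇑(fs n)|ℋ]) ω - (P[X|ℋ]) ω| ∂P := by
            refine setIntegral_le_integral ((integrable_condExp.sub integrable_condExp).abs) ?_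
            exact Filter.Eventually.of_forall fun ω => abs_nonneg _
        _ = ∫ ω, |(P[⇑(fs n) - X|ℋ]) ω| ∂P := by
            refine integral_congr_ae ?_
            filter_upwards [condExp_sub (μ := P) (m := ℋ) (hfs_int n) hXint] with ω hω
            rw [hω, Pi.sub_apply]
        _ ≤ ∫ ω, |(⇑(fs n) - X) ω| ∂P := integral_abs_condExp_le _
        _ = ∫ ω, ‖fs n ω - X ω‖ ∂P := by simp [Real.norm_eq_abs]
    have hzero : Tendsto (fun n => ∫ ω, ‖fs n ω - X ω‖ ∂P) atTop (nhds 0) := by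
      have h0 : (0 : ℝ) = ∫ ω, (0 : ℝ) ∂P := by simp
      rw [h0]
      refine tendsto_integral_of_dominated_convergence
        (fun ω => (‖X ω‖ + ‖X ω‖) + ‖X ω‖)
        (fun n => (((hfs_meas n).sub hX).norm).aestronglyMeasurable)
        ((hXint.norm.add hXint.norm).add hXint.norm) ?_ ?_
      · intro n
        refine Filter.Eventually.of_forall fun ω => ?_
        calc ‖‖fs n ω - X ω‖‖ = ‖fs n ω - X ω‖ := norm_norm _
          _ ≤ ‖fs n ω‖ + ‖X ω‖ := norm_sub_le _ _
          _ ≤ (‖X ω‖ + ‖X ω‖) + ‖X ω‖ := by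
              have := hfs_bound n ω; linarith
      · refine Filter.Eventually.of_forall fun ω => ?_
        have : Tendsto (fun n => fs n ω - X ω) atTop (nhds (X ω - X ω)) :=
          (hfs_tendsto ω).sub tendsto_const_nhds
        rw [sub_self] at this
        simpa using this.norm
    exact squeeze_zero (fun n => dist_nonneg) key hzero
  -- conclude
  have heq : ∀ n, ∫ ω in H ∩ T, fs n ω ∂P = ∫ ω in H ∩ T, (P[⇑(fs n)|ℋ]) ω ∂P :=
    fun n => hQ (fs n)
  exact tendsto_nhds_unique (Filter.Tendsto.congr heq hL) hR

/-- Key lemma: conditional independence gives the product formula for the conditional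
expectation of `X · 1_T`. -/
private lemma aux_condExp_mul_indicator (hHm : ℋ ≤ m)
    {X : Ω → ℝ} (hX : Measurable X) (hXint : Integrable X P)
    {T : Set Ω} (hT : MeasurableSet[m] T)
    (hind : ∀ s : Set ℝ, MeasurableSet s →
      (P⟦X ⁻¹' s ∩ T|ℋ⟧) =ᵐ[P] fun ω => (P⟦X ⁻¹' s|ℋ⟧) ω * (P⟦T|ℋ⟧) ω) :
    P[fun ω => X ω * T.indicator (fun _ => (1:ℝ)) ω|ℋ]
      =ᵐ[P] fun ω => (P[X|ℋ]) ω * (P⟦T|ℋ⟧) ω := by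
  haveI : IsFiniteMeasure (P.trim hHm) := isFiniteMeasure_trim hHm
  set c : Ω → ℝ := P⟦T|ℋ⟧ with hc
  have hc_sm : StronglyMeasurable[ℋ] c := stronglyMeasurable_condExp
  have hc_bdd : ∀ᵐ ω ∂P, ‖c ω‖ ≤ 1 := by
    have h1 : c ≤ᵐ[P] fun _ => (1:ℝ) := by
      have hle : ∀ ω, T.indicator (fun _ => (1:ℝ)) ω ≤ 1 := fun ω => by
        by_cases h : ω ∈ T <;> simp [Set.indicator_apply, h]
      have := condExp_mono (m := ℋ) (μ := P) (aux_ind_int hT) (integrable_const (1:ℝ))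
        (Filter.Eventually.of_forall hle)
      calc c ≤ᵐ[P] P[fun _ => (1:ℝ)|ℋ] := this
        _ =ᵐ[P] fun _ => (1:ℝ) := by rw [condExp_const hHm]
    have h0 : (fun _ => (0:ℝ)) ≤ᵐ[P] c :=
      condExp_nonneg (Filter.Eventually.of_forall fun ω =>
        Set.indicator_nonneg (fun _ _ => zero_le_one) ω)
    filter_upwards [h0, h1] with ω h0ω h1ω
    rw [Real.norm_eq_abs, abs_le]
    constructor <;> [linarith; exact h1ω]
  have hf_int : Integrable (fun ω => X ω * T.indicator (fun _ => (1:ℝ)) ω) P := by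
    refine Integrable.mono' hXint.norm
      ((hX.aestronglyMeasurable).mul ((stronglyMeasurable_const.indicator hT).aestronglyMeasurable))
      (Filter.Eventually.of_forall fun ω => ?_)
    rw [norm_mul]
    by_cases h : ω ∈ T <;> simp [h]
  have hXcond_int : Integrable (P[X|ℋ]) P := integrable_condExp
  have hg_int : Integrable (fun ω => (P[X|ℋ]) ω * c ω) P := by
    refine Integrable.mono' hXcond_int.norm
      (((stronglyMeasurable_condExp.mono hHm).aestronglyMeasurable).mul
        ((hc_sm.mono hHm).aestronglyMeasurable)) ?_
    filter_upwards [hc_bdd] with ω hω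
    rw [norm_mul]
    calc ‖(P[X|ℋ]) ω‖ * ‖c ω‖ ≤ ‖(P[X|ℋ]) ω‖ * 1 :=
          mul_le_mul_of_nonneg_left hω (norm_nonneg _)
      _ = ‖(P[X|ℋ]) ω‖ := mul_one _
  refine (ae_eq_condExp_of_forall_setIntegral_eq hHm hf_int
    (fun s _ _ => hg_int.integrableOn) ?_
    ((stronglyMeasurable_condExp.mul hc_sm).aestronglyMeasurable)).symm
  intro H hH _
  have hHm' : MeasurableSet[m] H := hHm H hH
  have hHT : MeasurableSet[m] (H ∩ T) := hHm'.inter hT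
  set ψ : Ω → ℝ := fun ω => (P[X|ℋ]) ω * H.indicator (fun _ => (1:ℝ)) ω with hψ
  have hψ_sm : StronglyMeasurable[ℋ] ψ :=
    stronglyMeasurable_condExp.mul (stronglyMeasurable_const.indicator hH)
  have hψ_int : Integrable ψ P := by
    refine Integrable.mono' hXcond_int.norm
      ((hψ_sm.mono hHm).aestronglyMeasurable) (Filter.Eventually.of_forall fun ω => ?_)
    show ‖(P[X|ℋ]) ω * H.indicator (fun _ => (1:ℝ)) ω‖ ≤ _
    rw [norm_mul]
    by_cases h : ω ∈ H <;> simp [Set.indicator_apply, h, norm_nonneg]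
  have hψT_int : Integrable (fun ω => ψ ω * T.indicator (fun _ => (1:ℝ)) ω) P := by
    refine Integrable.mono' hψ_int.norm
      (((hψ_sm.mono hHm).aestronglyMeasurable).mul
        ((stronglyMeasurable_const.indicator hT).aestronglyMeasurable))
      (Filter.Eventually.of_forall fun ω => ?_)
    rw [norm_mul]
    by_cases h : ω ∈ T <;> simp [Set.indicator_apply, h, norm_nonneg]
  have hpull : P[fun ω => ψ ω * T.indicator (fun _ => (1:ℝ)) ω|ℋ]
      =ᵐ[P] fun ω => ψ ω * c ω :=
    condExp_mul_of_stronglyMeasurable_left (m := ℋ) (μ := P) hψ_sm hψT_int (aux_ind_int hT)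
  have e1 : ∫ ω in H, (P[X|ℋ]) ω * c ω ∂P = ∫ ω, ψ ω * c ω ∂P := by
    rw [← integral_indicator hHm']
    congr 1
    funext ω
    by_cases h : ω ∈ H <;> simp [hψ, Set.indicator_apply, h]
  have e2 : ∫ ω, ψ ω * c ω ∂P = ∫ ω, ψ ω * T.indicator (fun _ => (1:ℝ)) ω ∂P := by
    rw [← integral_condExp hHm (f := fun ω => ψ ω * T.indicator (fun _ => (1:ℝ)) ω)]
    exact (integral_congr_ae hpull).symm
  have e3 : ∫ ω, ψ ω * T.indicator (fun _ => (1:ℝ)) ω ∂P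
      = ∫ ω in H ∩ T, (P[X|ℋ]) ω ∂P := by
    rw [← integral_indicator hHT]
    congr 1
    funext ω
    by_cases h1 : ω ∈ H <;> by_cases h2 : ω ∈ T <;>
      simp [hψ, Set.indicator_apply, h1, h2]
  have e4 : ∫ ω in H, X ω * T.indicator (fun _ => (1:ℝ)) ω ∂P
      = ∫ ω in H ∩ T, X ω ∂P := by
    rw [← integral_indicator hHm', ← integral_indicator hHT]
    congr 1
    funext ω
    by_cases h1 : ω ∈ H <;> by_cases h2 : ω ∈ T <;>
      simp [Set.indicator_apply, h1, h2]
  rw [e1, e2, e3, e4]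
  exact (aux_setIntegral_inter hHm hX hXint hT hind hH).symm

end Aux


/-- Identification of the moderated proximal treatment effect under
consistency and sequential ignorability:
`E[Y(1) − Y(0) | 𝒮] = E[μ₁ − μ₀ | 𝒮] = E[A·Y/p − (1−A)·Y/(1−p) | 𝒮]` almost surely. -/
theorem moderated_effect_identification
    {Ω : Type*} (𝒮 ℋ : MeasurableSpace Ω) {m : MeasurableSpace Ω} [StandardBorelSpace Ω]
    {P : Measure Ω} [IsProbabilityMeasure P]
    (hSH : 𝒮 ≤ ℋ) (hHm : ℋ ≤ m)
    (A : Ω → ℝ) (hA_meas : Measurable A) (hA01 : ∀ ω, A ω = 0 ∨ A ω = 1)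
    (Y : Ω → ℝ) (hY_int : Integrable Y P)
    (ε : ℝ) (hε_pos : 0 < ε) (hε_lt : ε < 1 / 2)
    (p : Ω → ℝ) (hp_meas : Measurable[ℋ] p)
    (hp_bdd : ∀ᵐ ω ∂P, ε ≤ p ω ∧ p ω ≤ 1 - ε)
    (hp_ce : p =ᵐ[P] P[A|ℋ])
    (μ₁ μ₀ : Ω → ℝ)
    (hμ₁ : ∀ ω, μ₁ ω = (P[(fun ω' => A ω' * Y ω')|ℋ]) ω / p ω)
    (hμ₀ : ∀ ω, μ₀ ω = (P[(fun ω' => (1 - A ω') * Y ω')|ℋ]) ω / (1 - p ω))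
    (Y0 Y1 : Ω → ℝ) (hY0_meas : Measurable Y0) (hY1_meas : Measurable Y1)
    (hY0_int : Integrable Y0 P) (hY1_int : Integrable Y1 P)
    (h_ignorable : CondIndepFun ℋ hHm (fun ω => (Y0 ω, Y1 ω)) A P)
    (h_consistency : ∀ᵐ ω ∂P, Y ω = A ω * Y1 ω + (1 - A ω) * Y0 ω) :
    (P[fun ω => Y1 ω - Y0 ω|𝒮] =ᵐ[P] P[fun ω => μ₁ ω - μ₀ ω|𝒮]) ∧
      P[fun ω => Y1 ω - Y0 ω|𝒮]
        =ᵐ[P] P[fun ω => A ω * Y ω / p ω - (1 - A ω) * Y ω / (1 - p ω)|𝒮] := by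
  haveI : IsFiniteMeasure (P.trim hHm) := isFiniteMeasure_trim hHm
  have hA_m : Measurable[m] A := hA_meas
  have hY0_m : Measurable[m] Y0 := hY0_meas
  have hY1_m : Measurable[m] Y1 := hY1_meas
  have hT1 : MeasurableSet[m] (A ⁻¹' {1}) := hA_m (measurableSet_singleton 1)
  have hT0 : MeasurableSet[m] (A ⁻¹' {0}) := hA_m (measurableSet_singleton 0)
  have hA_ind : A = (A ⁻¹' {1}).indicator (fun _ => (1:ℝ)) := by
    funext ω
    rcases hA01 ω with h | h <;> simp [Set.indicator_apply, Set.mem_preimage, h]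
  have hA_ind0 : (fun ω => 1 - A ω) = (A ⁻¹' {0}).indicator (fun _ => (1:ℝ)) := by
    funext ω
    rcases hA01 ω with h | h <;> simp [Set.indicator_apply, Set.mem_preimage, h]
  have hA_int : Integrable A P := by
    refine aux_int_of_bdd hA_m.aestronglyMeasurable (C := 1) fun ω => ?_
    rcases hA01 ω with h | h <;> simp [h]
  have hY1_meas' : Measurable[m] Y1 := hY1_m
  have hY0_meas' : Measurable[m] Y0 := hY0_m
  have hA_meas' : Measurable[m] A := hA_m
  -- conditional independence, coordinatewise
  have hCI1 : CondIndepFun ℋ hHm Y1 A P := by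
    have := h_ignorable.comp (φ := Prod.snd) (ψ := id) measurable_snd measurable_id
    exact this
  have hCI0 : CondIndepFun ℋ hHm Y0 A P := by
    have := h_ignorable.comp (φ := Prod.fst) (ψ := id) measurable_fst measurable_id
    exact this
  have hind1 : ∀ s : Set ℝ, MeasurableSet s →
      (P⟦Y1 ⁻¹' s ∩ A ⁻¹' {1}|ℋ⟧) =ᵐ[P]
        fun ω => (P⟦Y1 ⁻¹' s|ℋ⟧) ω * (P⟦A ⁻¹' {1}|ℋ⟧) ω := fun s hs =>
    ((condIndepFun_iff_condExp_inter_preimage_eq_mul (mΩ := m) (μ := P) (hm' := hHm) hY1_meas' hA_meas').mp hCI1) s {1} hs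
      (measurableSet_singleton 1)
  have hind0 : ∀ s : Set ℝ, MeasurableSet s →
      (P⟦Y0 ⁻¹' s ∩ A ⁻¹' {0}|ℋ⟧) =ᵐ[P]
        fun ω => (P⟦Y0 ⁻¹' s|ℋ⟧) ω * (P⟦A ⁻¹' {0}|ℋ⟧) ω := fun s hs =>
    ((condIndepFun_iff_condExp_inter_preimage_eq_mul (mΩ := m) (μ := P) (hm' := hHm) hY0_meas' hA_meas').mp hCI0) s {0} hs
      (measurableSet_singleton 0)
  have key1 := aux_condExp_mul_indicator hHm hY1_m hY1_int hT1 hind1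
  have key0 := aux_condExp_mul_indicator hHm hY0_m hY0_int hT0 hind0
  -- translate indicator of A⁻¹{1} to A
  have hA_eq : (A ⁻¹' {1}).indicator (fun _ => (1:ℝ)) = A := hA_ind.symm
  have hA_eq0 : (A ⁻¹' {0}).indicator (fun _ => (1:ℝ)) = fun ω => 1 - A ω := hA_ind0.symm
  have hc1 : (P⟦A ⁻¹' {1}|ℋ⟧) =ᵐ[P] p := by
    have h : (P⟦A ⁻¹' {1}|ℋ⟧) = P[A|ℋ] := by rw [hA_eq]
    rw [h]
    exact hp_ce.symm
  have hc0 : (P⟦A ⁻¹' {0}|ℋ⟧) =ᵐ[P] fun ω => 1 - p ω := by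
    have h1 : (P⟦A ⁻¹' {0}|ℋ⟧) = P[fun ω => 1 - A ω|ℋ] := by rw [hA_eq0]
    rw [h1]
    have h2 : P[fun ω => 1 - A ω|ℋ] =ᵐ[P] P[fun _ => (1:ℝ)|ℋ] - P[A|ℋ] :=
      condExp_sub (integrable_const 1) hA_int _
    have h3 : P[fun _ => (1:ℝ)|ℋ] = fun _ => (1:ℝ) := condExp_const hHm 1
    filter_upwards [h2, hp_ce] with ω hω hpω
    rw [hω, Pi.sub_apply, h3, hpω]
  have K1 : P[fun ω => Y1 ω * A ω|ℋ] =ᵐ[P] fun ω => (P[Y1|ℋ]) ω * p ω := by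
    have e : (fun ω => Y1 ω * A ω)
        = fun ω => Y1 ω * (A ⁻¹' {1}).indicator (fun _ => (1:ℝ)) ω := by
      funext ω; rw [hA_eq]
    rw [e]
    refine key1.trans ?_
    filter_upwards [hc1] with ω hω
    rw [hω]
  have K0 : P[fun ω => Y0 ω * (1 - A ω)|ℋ] =ᵐ[P] fun ω => (P[Y0|ℋ]) ω * (1 - p ω) := by
    have e : (fun ω => Y0 ω * (1 - A ω))
        = fun ω => Y0 ω * (A ⁻¹' {0}).indicator (fun _ => (1:ℝ)) ω := by
      funext ω; rw [hA_eq0]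
    rw [e]
    refine key0.trans ?_
    filter_upwards [hc0] with ω hω
    rw [hω]
  -- consistency
  have hAY1 : (fun ω => A ω * Y ω) =ᵐ[P] fun ω => Y1 ω * A ω := by
    filter_upwards [h_consistency] with ω hω
    rcases hA01 ω with h | h <;> rw [hω, h] <;> ring
  have hAY0 : (fun ω => (1 - A ω) * Y ω) =ᵐ[P] fun ω => Y0 ω * (1 - A ω) := by
    filter_upwards [h_consistency] with ω hω
    rcases hA01 ω with h | h <;> rw [hω, h] <;> ring
  have E1 : P[fun ω => A ω * Y ω|ℋ] =ᵐ[P] fun ω => (P[Y1|ℋ]) ω * p ω :=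
    (condExp_congr_ae hAY1).trans K1
  have E0 : P[fun ω => (1 - A ω) * Y ω|ℋ] =ᵐ[P] fun ω => (P[Y0|ℋ]) ω * (1 - p ω) :=
    (condExp_congr_ae hAY0).trans K0
  -- identification of μ₁, μ₀
  have hμ₁' : μ₁ =ᵐ[P] P[Y1|ℋ] := by
    filter_upwards [E1, hp_bdd] with ω h1 h2
    have hpne : p ω ≠ 0 := (lt_of_lt_of_le hε_pos h2.1).ne'
    rw [hμ₁ ω, h1, mul_div_assoc, div_self hpne, mul_one]
  have hμ₀' : μ₀ =ᵐ[P] P[Y0|ℋ] := by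
    filter_upwards [E0, hp_bdd] with ω h1 h2
    have hpne : (1 : ℝ) - p ω ≠ 0 := by
      have : ε ≤ 1 - p ω := by linarith [h2.2]
      exact (lt_of_lt_of_le hε_pos this).ne'
    rw [hμ₀ ω, h1, mul_div_assoc, div_self hpne, mul_one]
  -- part 1
  have hsub1 : (fun ω => μ₁ ω - μ₀ ω) =ᵐ[P] fun ω => (P[Y1|ℋ]) ω - (P[Y0|ℋ]) ω := by
    filter_upwards [hμ₁', hμ₀'] with ω a b
    rw [a, b]
  have hsubCE : P[fun ω => Y1 ω - Y0 ω|ℋ] =ᵐ[P]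
      fun ω => (P[Y1|ℋ]) ω - (P[Y0|ℋ]) ω := by
    have h := condExp_sub (m := ℋ) (μ := P) hY1_int hY0_int
    exact h
  have part1 : P[fun ω => Y1 ω - Y0 ω|𝒮] =ᵐ[P] P[fun ω => μ₁ ω - μ₀ ω|𝒮] := by
    calc P[fun ω => Y1 ω - Y0 ω|𝒮]
        =ᵐ[P] P[P[fun ω => Y1 ω - Y0 ω|ℋ]|𝒮] := (condExp_condExp_of_le hSH hHm).symm
      _ =ᵐ[P] P[fun ω => (P[Y1|ℋ]) ω - (P[Y0|ℋ]) ω|𝒮] := condExp_congr_ae hsubCE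
      _ =ᵐ[P] P[fun ω => μ₁ ω - μ₀ ω|𝒮] := condExp_congr_ae hsub1.symm
  refine ⟨part1, ?_⟩
  -- part 2
  have hp_m : Measurable[m] p := hp_meas.mono hHm le_rfl
  have hAY_int : Integrable (fun ω => A ω * Y ω) P := by
    refine hY_int.bdd_mul (c := 1) hA_m.aestronglyMeasurable ?_
    refine Filter.Eventually.of_forall fun ω => ?_
    rcases hA01 ω with h | h <;> simp [h]
  have h1AY_int : Integrable (fun ω => (1 - A ω) * Y ω) P := by
    refine hY_int.bdd_mul (c := 1) (aestronglyMeasurable_const.sub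
      hA_m.aestronglyMeasurable) ?_
    refine Filter.Eventually.of_forall fun ω => ?_
    rcases hA01 ω with h | h <;> simp [h]
  have hg1_int : Integrable (fun ω => A ω * Y ω / p ω) P := by
    refine Integrable.mono' (hY_int.norm.const_mul ε⁻¹)
      (((hA_m.aemeasurable.mul hY_int.1.aemeasurable).div hp_m.aemeasurable).aestronglyMeasurable) ?_
    filter_upwards [hp_bdd] with ω hω
    have hA1 : |A ω| ≤ 1 := by rcases hA01 ω with h | h <;> simp [h]
    have hp0 : 0 < p ω := lt_of_lt_of_le hε_pos hω.1
    rw [Real.norm_eq_abs, Real.norm_eq_abs, abs_div, abs_mul, abs_of_pos hp0]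
    calc |A ω| * |Y ω| / p ω ≤ 1 * |Y ω| / ε := by
          gcongr
          exact hω.1
      _ = ε⁻¹ * |Y ω| := by rw [one_mul, div_eq_inv_mul]
  have hg0_int : Integrable (fun ω => (1 - A ω) * Y ω / (1 - p ω)) P := by
    refine Integrable.mono' (hY_int.norm.const_mul ε⁻¹)
      ((((aemeasurable_const.sub hA_m.aemeasurable).mul hY_int.1.aemeasurable).div
        (measurable_const.sub hp_m).aemeasurable).aestronglyMeasurable) ?_
    filter_upwards [hp_bdd] with ω hω
    have hA1 : |1 - A ω| ≤ 1 := by rcases hA01 ω with h | h <;> simp [h]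
    have hp0 : 0 < 1 - p ω := by linarith [hω.2, hε_pos]
    have hεp : ε ≤ 1 - p ω := by linarith [hω.2]
    rw [Real.norm_eq_abs, Real.norm_eq_abs, abs_div, abs_mul, abs_of_pos hp0]
    calc |1 - A ω| * |Y ω| / (1 - p ω) ≤ 1 * |Y ω| / ε := by
          gcongr
      _ = ε⁻¹ * |Y ω| := by rw [one_mul, div_eq_inv_mul]
  -- pull-out
  have hpull1 : P[fun ω => A ω * Y ω / p ω|ℋ] =ᵐ[P] μ₁ := by
    have hsm : StronglyMeasurable[ℋ] (fun ω => (p ω)⁻¹) := hp_meas.inv.stronglyMeasurable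
    have hfg : Integrable ((fun ω => (p ω)⁻¹) * fun ω => A ω * Y ω) P := by
      refine hg1_int.congr (Filter.Eventually.of_forall fun ω => ?_)
      show A ω * Y ω / p ω = (p ω)⁻¹ * (A ω * Y ω)
      rw [div_eq_mul_inv, mul_comm]
    have h := condExp_mul_of_stronglyMeasurable_left (m := ℋ) (μ := P) hsm hfg hAY_int
    have e1 : P[fun ω => A ω * Y ω / p ω|ℋ]
        =ᵐ[P] P[(fun ω => (p ω)⁻¹) * fun ω => A ω * Y ω|ℋ] := by
      refine condExp_congr_ae (Filter.Eventually.of_forall fun ω => ?_)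
      show A ω * Y ω / p ω = (p ω)⁻¹ * (A ω * Y ω)
      rw [div_eq_mul_inv, mul_comm]
    refine (e1.trans h).trans (Filter.Eventually.of_forall fun ω => ?_)
    show (p ω)⁻¹ * (P[fun ω' => A ω' * Y ω'|ℋ]) ω = μ₁ ω
    rw [hμ₁ ω, div_eq_mul_inv, mul_comm]
  have hpull0 : P[fun ω => (1 - A ω) * Y ω / (1 - p ω)|ℋ] =ᵐ[P] μ₀ := by
    have hsm : StronglyMeasurable[ℋ] (fun ω => (1 - p ω)⁻¹) :=
      (measurable_const.sub hp_meas).inv.stronglyMeasurable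
    have hfg : Integrable ((fun ω => (1 - p ω)⁻¹) * fun ω => (1 - A ω) * Y ω) P := by
      refine hg0_int.congr (Filter.Eventually.of_forall fun ω => ?_)
      show (1 - A ω) * Y ω / (1 - p ω) = (1 - p ω)⁻¹ * ((1 - A ω) * Y ω)
      rw [div_eq_mul_inv, mul_comm]
    have h := condExp_mul_of_stronglyMeasurable_left (m := ℋ) (μ := P) hsm hfg h1AY_int
    have e1 : P[fun ω => (1 - A ω) * Y ω / (1 - p ω)|ℋ]
        =ᵐ[P] P[(fun ω => (1 - p ω)⁻¹) * fun ω => (1 - A ω) * Y ω|ℋ] := by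
      refine condExp_congr_ae (Filter.Eventually.of_forall fun ω => ?_)
      show (1 - A ω) * Y ω / (1 - p ω) = (1 - p ω)⁻¹ * ((1 - A ω) * Y ω)
      rw [div_eq_mul_inv, mul_comm]
    refine (e1.trans h).trans (Filter.Eventually.of_forall fun ω => ?_)
    show (1 - p ω)⁻¹ * (P[fun ω' => (1 - A ω') * Y ω'|ℋ]) ω = μ₀ ω
    rw [hμ₀ ω, div_eq_mul_inv, mul_comm]
  have hsubCE2 : P[fun ω => A ω * Y ω / p ω - (1 - A ω) * Y ω / (1 - p ω)|ℋ]
      =ᵐ[P] fun ω => μ₁ ω - μ₀ ω := by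
    have h := condExp_sub (m := ℋ) (μ := P) hg1_int hg0_int
    have h' : P[fun ω => A ω * Y ω / p ω - (1 - A ω) * Y ω / (1 - p ω)|ℋ]
        =ᵐ[P] P[fun ω => A ω * Y ω / p ω|ℋ] - P[fun ω => (1 - A ω) * Y ω / (1 - p ω)|ℋ] := h
    filter_upwards [h', hpull1, hpull0] with ω h1 h2 h3
    rw [h1, Pi.sub_apply, h2, h3]
  have part2 : P[fun ω => A ω * Y ω / p ω - (1 - A ω) * Y ω / (1 - p ω)|𝒮]
      =ᵐ[P] P[fun ω => μ₁ ω - μ₀ ω|𝒮] := by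
    calc P[fun ω => A ω * Y ω / p ω - (1 - A ω) * Y ω / (1 - p ω)|𝒮]
        =ᵐ[P] P[P[fun ω => A ω * Y ω / p ω - (1 - A ω) * Y ω / (1 - p ω)|ℋ]|𝒮] :=
          (condExp_condExp_of_le hSH hHm).symm
      _ =ᵐ[P] P[fun ω => μ₁ ω - μ₀ ω|𝒮] := condExp_congr_ae hsubCE2
  exact part1.trans part2.symm
end

section
/- Unbiasedness of the centered and weighted least squares estimating function regardless of the working model: let f : Ω → ℝ^d be a bounded 𝒮-measurable random vector and β* ∈ ℝ^d, and assume the moderated-effect model E[μ₁ − μ₀ | 𝒮] = ⟨f, β*⟩ almost surely. Then for every bounded ℋ-measurable random variable g (an arbitrary, possibly misspecified, working model for E[W·Y | ℋ]), E[(Y − g − (A − p̃)·⟨f, β*⟩)·W·(A − p̃)·f] = 0 in ℝ^d. -/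
open MeasureTheory ProbabilityTheory

lemma my_bdd_int {Ω : Type*} {m0 : MeasurableSpace Ω} {P : Measure Ω} [IsFiniteMeasure P]
    {u : Ω → ℝ} {c : ℝ} (hu : AEStronglyMeasurable u P) (hb : ∀ᵐ ω ∂P, |u ω| ≤ c) :
    Integrable u P := by
  refine Integrable.mono' (integrable_const c) hu ?_
  simpa [Real.norm_eq_abs] using hb

lemma my_tower {Ω : Type*} {m0 : MeasurableSpace Ω} {P : Measure Ω} [IsProbabilityMeasure P]
    {m : MeasurableSpace Ω} (hm : m ≤ m0)
    (v X : Ω → ℝ) (hX : Integrable X P) (hv : StronglyMeasurable[m] v)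
    {c : ℝ} (hvc : ∀ᵐ ω ∂P, |v ω| ≤ c) :
    ∫ ω, v ω * X ω ∂P = ∫ ω, v ω * (P[X|m]) ω ∂P := by
  have hvm : AEStronglyMeasurable[m0] v P := (hv.mono hm).aestronglyMeasurable
  have hint : Integrable (fun ω => v ω * X ω) P :=
    hX.bdd_mul hvm (by simpa [Real.norm_eq_abs] using hvc)
  have h2 : P[v * X|m] =ᵐ[P] v * P[X|m] :=
    condExp_mul_of_stronglyMeasurable_left hv hint hX
  have h1 : ∫ ω, (P[v * X|m]) ω ∂P = ∫ ω, v ω * X ω ∂P := integral_condExp hm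
  calc ∫ ω, v ω * X ω ∂P = ∫ ω, (P[v * X|m]) ω ∂P := h1.symm
    _ = ∫ ω, (v * P[X|m]) ω ∂P := integral_congr_ae h2
    _ = ∫ ω, v ω * (P[X|m]) ω ∂P := rfl

lemma my_abs_div_le {x pv c e : ℝ} (he : 0 < e) (hp : e ≤ pv) (hx : |x| ≤ c) :
    |x / pv| ≤ c / e := by
  rw [abs_div, abs_of_pos (lt_of_lt_of_le he hp)]
  exact div_le_div₀ (le_trans (abs_nonneg x) hx) hx he hp

/-- Unbiasedness of the centered and weighted least squares estimating
function regardless of the working model: if `E[μ₁ − μ₀ | 𝒮] = ⟨f, β*⟩` a.s., then for every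
bounded `ℋ`-measurable `g`, `E[(Y − g − (A − p̃)·⟨f, β*⟩)·W·(A − p̃)·f] = 0` in `ℝ^d`. -/
theorem estimating_function_unbiased
    {Ω : Type*} (𝒮 ℋ : MeasurableSpace Ω) {m : MeasurableSpace Ω} {P : Measure Ω} [IsProbabilityMeasure P]
    (hSH : 𝒮 ≤ ℋ) (hHm : ℋ ≤ m)
    (A : Ω → ℝ) (hA_meas : Measurable A) (hA01 : ∀ ω, A ω = 0 ∨ A ω = 1)
    (Y : Ω → ℝ) (hY_int : Integrable Y P)
    (ε : ℝ) (hε_pos : 0 < ε) (hε_lt : ε < 1 / 2)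
    (p : Ω → ℝ) (hp_meas : Measurable[ℋ] p)
    (hp_bdd : ∀ᵐ ω ∂P, ε ≤ p ω ∧ p ω ≤ 1 - ε)
    (hp_ce : p =ᵐ[P] P[A|ℋ])
    (q : Ω → ℝ) (hq_meas : Measurable[𝒮] q)
    (hq_bdd : ∀ᵐ ω ∂P, ε ≤ q ω ∧ q ω ≤ 1 - ε)
    (W : Ω → ℝ)
    (hW : ∀ ω, W ω = A ω * (q ω / p ω) + (1 - A ω) * ((1 - q ω) / (1 - p ω)))
    (μ₁ μ₀ : Ω → ℝ)
    (hμ₁ : ∀ ω, μ₁ ω = (P[(fun ω' => A ω' * Y ω')|ℋ]) ω / p ω)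
    (hμ₀ : ∀ ω, μ₀ ω = (P[(fun ω' => (1 - A ω') * Y ω')|ℋ]) ω / (1 - p ω))
    (d : ℕ) (f : Ω → Fin d → ℝ)
    (hf_meas : ∀ i, Measurable[𝒮] fun ω => f ω i)
    (hf_bdd : ∃ C : ℝ, ∀ ω i, |f ω i| ≤ C)
    (βstar : Fin d → ℝ)
    (h_model : P[fun ω => μ₁ ω - μ₀ ω|𝒮] =ᵐ[P] fun ω => ∑ j, f ω j * βstar j) :
    ∀ g : Ω → ℝ, Measurable[ℋ] g → (∃ C : ℝ, ∀ ω, |g ω| ≤ C) →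
      ∀ i, ∫ ω, (Y ω - g ω - (A ω - q ω) * ∑ j, f ω j * βstar j)
        * W ω * (A ω - q ω) * f ω i ∂P = 0 := by
  intro g hg_meas hg_bdd i
  obtain ⟨Cf, hCf⟩ := hf_bdd
  obtain ⟨Cg, hCg⟩ := hg_bdd
  have hSHm : 𝒮 ≤ m := hSH.trans hHm
  -- notation
  set S : Ω → ℝ := fun ω => ∑ j, f ω j * βstar j with hSdef
  set φ : Ω → ℝ := fun ω => q ω * (1 - q ω) * f ω i with hφdef
  -- constants
  set C1 : ℝ := max Cf 0 with hC1def
  have hC1nn : (0:ℝ) ≤ C1 := le_max_right _ _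
  have hCf1 : ∀ ω j, |f ω j| ≤ C1 := fun ω j => le_trans (hCf ω j) (le_max_left _ _)
  set CS : ℝ := (∑ j, |βstar j|) * C1 with hCSdef
  have hCSnn : (0:ℝ) ≤ CS :=
    mul_nonneg (Finset.sum_nonneg fun j _ => abs_nonneg _) hC1nn
  have hS_bdd : ∀ ω, |S ω| ≤ CS := by
    intro ω
    calc |∑ j, f ω j * βstar j| ≤ ∑ j, |f ω j * βstar j| :=
          Finset.abs_sum_le_sum_abs _ _
      _ ≤ ∑ j, C1 * |βstar j| := by
          refine Finset.sum_le_sum fun j _ => ?_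
          rw [abs_mul]
          exact mul_le_mul_of_nonneg_right (hCf1 ω j) (abs_nonneg _)
      _ = (∑ j, |βstar j|) * C1 := by rw [← Finset.mul_sum, mul_comm]
  set Cg' : ℝ := max Cg 0 with hCg'def
  have hCg'nn : (0:ℝ) ≤ Cg' := le_max_right _ _
  have hCg1 : ∀ ω, |g ω| ≤ Cg' := fun ω => le_trans (hCg ω) (le_max_left _ _)
  -- a.e. facts about q and p
  have hq01 : ∀ᵐ ω ∂P, |q ω| ≤ 1 ∧ |1 - q ω| ≤ 1 := by
    filter_upwards [hq_bdd] with ω h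
    constructor
    · exact abs_le.mpr ⟨by linarith, by linarith⟩
    · exact abs_le.mpr ⟨by linarith, by linarith⟩
  have hφ_bdd : ∀ᵐ ω ∂P, |φ ω| ≤ C1 := by
    filter_upwards [hq01] with ω h
    calc |q ω * (1 - q ω) * f ω i| = |q ω| * |1 - q ω| * |f ω i| := by
          rw [abs_mul, abs_mul]
      _ ≤ 1 * 1 * C1 := by
          refine mul_le_mul (mul_le_mul h.1 h.2 (abs_nonneg _) zero_le_one)
            (hCf1 ω i) (abs_nonneg _) (by norm_num)
      _ = C1 := by ring
  -- measurability w.r.t. ambient σ-algebra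
  have hAm : Measurable[m] A := hA_meas
  have hfm : ∀ j, Measurable[m] fun ω => f ω j := fun j => (hf_meas j).mono hSHm le_rfl
  have hqm : Measurable[m] q := hq_meas.mono hSHm le_rfl
  have hpm : Measurable[m] p := hp_meas.mono hHm le_rfl
  have hgm : Measurable[m] g := hg_meas.mono hHm le_rfl
  have hSm : Measurable[m] S := Finset.measurable_sum _ fun j _ => (hfm j).mul_const _
  have hφm : Measurable[m] φ := (hqm.mul (measurable_const.sub hqm)).mul (hfm i)
  -- measurability w.r.t. sub σ-algebras
  have hS𝒮 : Measurable[𝒮] S := Finset.measurable_sum _ fun j _ => (hf_meas j).mul_const _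
  have hφ𝒮 : Measurable[𝒮] φ := (hq_meas.mul (measurable_const.sub hq_meas)).mul (hf_meas i)
  have hφH : Measurable[ℋ] φ := hφ𝒮.mono hSH le_rfl
  have hSH' : Measurable[ℋ] S := hS𝒮.mono hSH le_rfl
  have hqH : Measurable[ℋ] q := hq_meas.mono hSH le_rfl
  -- strong measurability of the six "v" factors (w.r.t. ℋ)
  have hv1 : StronglyMeasurable[ℋ] (fun ω => φ ω / p ω) :=
    (hφH.div hp_meas).stronglyMeasurable
  have hv2 : StronglyMeasurable[ℋ] (fun ω => φ ω / (1 - p ω)) :=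
    (hφH.div (measurable_const.sub hp_meas)).stronglyMeasurable
  have hv3 : StronglyMeasurable[ℋ] (fun ω => g ω * (φ ω / p ω)) :=
    (hg_meas.mul (hφH.div hp_meas)).stronglyMeasurable
  have hv4 : StronglyMeasurable[ℋ] (fun ω => g ω * (φ ω / (1 - p ω))) :=
    (hg_meas.mul (hφH.div (measurable_const.sub hp_meas))).stronglyMeasurable
  have hv5 : StronglyMeasurable[ℋ] (fun ω => (S ω * (1 - q ω)) * (φ ω / p ω)) :=
    ((hSH'.mul (measurable_const.sub hqH)).mul (hφH.div hp_meas)).stronglyMeasurable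
  have hv6 : StronglyMeasurable[ℋ] (fun ω => (S ω * q ω) * (φ ω / (1 - p ω))) :=
    ((hSH'.mul hqH).mul (hφH.div (measurable_const.sub hp_meas))).stronglyMeasurable
  -- a.e. bounds on the six "v" factors
  have hεp : ∀ᵐ ω ∂P, ε ≤ p ω ∧ ε ≤ 1 - p ω := by
    filter_upwards [hp_bdd] with ω h
    exact ⟨h.1, by linarith [h.2]⟩
  have hb1 : ∀ᵐ ω ∂P, |φ ω / p ω| ≤ C1 / ε := by
    filter_upwards [hεp, hφ_bdd] with ω h1 h2
    exact my_abs_div_le hε_pos h1.1 h2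
  have hb2 : ∀ᵐ ω ∂P, |φ ω / (1 - p ω)| ≤ C1 / ε := by
    filter_upwards [hεp, hφ_bdd] with ω h1 h2
    exact my_abs_div_le hε_pos h1.2 h2
  have hb3 : ∀ᵐ ω ∂P, |g ω * (φ ω / p ω)| ≤ Cg' * (C1 / ε) := by
    filter_upwards [hb1] with ω h1
    rw [abs_mul]
    exact mul_le_mul (hCg1 ω) h1 (abs_nonneg _) hCg'nn
  have hb4 : ∀ᵐ ω ∂P, |g ω * (φ ω / (1 - p ω))| ≤ Cg' * (C1 / ε) := by
    filter_upwards [hb2] with ω h1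
    rw [abs_mul]
    exact mul_le_mul (hCg1 ω) h1 (abs_nonneg _) hCg'nn
  have hb5 : ∀ᵐ ω ∂P, |(S ω * (1 - q ω)) * (φ ω / p ω)| ≤ CS * (C1 / ε) := by
    filter_upwards [hb1, hq01] with ω h1 h2
    rw [abs_mul, abs_mul]
    calc |S ω| * |1 - q ω| * |φ ω / p ω| ≤ (CS * 1) * (C1 / ε) := by
          refine mul_le_mul (mul_le_mul (hS_bdd ω) h2.2 (abs_nonneg _) hCSnn)
            h1 (abs_nonneg _) ?_
          exact mul_nonneg hCSnn zero_le_one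
      _ = CS * (C1 / ε) := by ring
  have hb6 : ∀ᵐ ω ∂P, |(S ω * q ω) * (φ ω / (1 - p ω))| ≤ CS * (C1 / ε) := by
    filter_upwards [hb2, hq01] with ω h1 h2
    rw [abs_mul, abs_mul]
    calc |S ω| * |q ω| * |φ ω / (1 - p ω)| ≤ (CS * 1) * (C1 / ε) := by
          refine mul_le_mul (mul_le_mul (hS_bdd ω) h2.1 (abs_nonneg _) hCSnn)
            h1 (abs_nonneg _) ?_
          exact mul_nonneg hCSnn zero_le_one
      _ = CS * (C1 / ε) := by ring
  -- basic integrability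
  have hA1 : ∀ ω, |A ω| ≤ 1 := fun ω => by rcases hA01 ω with h | h <;> simp [h]
  have hA_int : Integrable A P :=
    my_bdd_int hAm.aestronglyMeasurable (Filter.Eventually.of_forall hA1)
  have h1A_int : Integrable (fun ω => 1 - A ω) P := (integrable_const 1).sub hA_int
  have hAY_int : Integrable (fun ω => A ω * Y ω) P :=
    hY_int.bdd_mul hAm.aestronglyMeasurable
      (Filter.Eventually.of_forall (by simpa [Real.norm_eq_abs] using hA1))
  have h1A1 : ∀ ω, ‖1 - A ω‖ ≤ 1 := fun ω => by
    rcases hA01 ω with h | h <;> simp [h]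
  have h1AY_int : Integrable (fun ω => (1 - A ω) * Y ω) P :=
    hY_int.bdd_mul (measurable_const.sub hAm).aestronglyMeasurable
      (Filter.Eventually.of_forall h1A1)
  -- integrability of μ₁ and μ₀
  have hμ₁' : μ₁ = fun ω => (P[(fun ω' => A ω' * Y ω')|ℋ]) ω / p ω := funext hμ₁
  have hμ₀' : μ₀ = fun ω => (P[(fun ω' => (1 - A ω') * Y ω')|ℋ]) ω / (1 - p ω) := funext hμ₀
  have hμ₁_meas : AEStronglyMeasurable[m] μ₁ P := by
    rw [hμ₁']
    exact ((stronglyMeasurable_condExp.mono hHm).measurable.div hpm).aestronglyMeasurable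
  have hμ₀_meas : AEStronglyMeasurable[m] μ₀ P := by
    rw [hμ₀']
    exact ((stronglyMeasurable_condExp.mono hHm).measurable.div
      (measurable_const.sub hpm)).aestronglyMeasurable
  have hμ₁_int : Integrable μ₁ P := by
    refine Integrable.mono'
      ((integrable_condExp (m := ℋ) (f := fun ω' => A ω' * Y ω')).norm.const_mul ε⁻¹)
      hμ₁_meas ?_
    filter_upwards [hεp] with ω h
    rw [hμ₁ ω, Real.norm_eq_abs, abs_div, abs_of_pos (lt_of_lt_of_le hε_pos h.1),
      Real.norm_eq_abs]
    rw [← div_eq_inv_mul]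
    exact div_le_div_of_nonneg_left (abs_nonneg _) hε_pos h.1
  have hμ₀_int : Integrable μ₀ P := by
    refine Integrable.mono'
      ((integrable_condExp (m := ℋ) (f := fun ω' => (1 - A ω') * Y ω')).norm.const_mul ε⁻¹)
      hμ₀_meas ?_
    filter_upwards [hεp] with ω h
    rw [hμ₀ ω, Real.norm_eq_abs, abs_div, abs_of_pos (lt_of_lt_of_le hε_pos h.2),
      Real.norm_eq_abs]
    rw [← div_eq_inv_mul]
    exact div_le_div_of_nonneg_left (abs_nonneg _) hε_pos h.2
  -- integrability of the six pieces
  have hI1 : Integrable (fun ω => (φ ω / p ω) * (A ω * Y ω)) P :=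
    hAY_int.bdd_mul (hv1.mono hHm).aestronglyMeasurable
      (by filter_upwards [hb1] with ω h; rw [Real.norm_eq_abs]; exact h)
  have hI2 : Integrable (fun ω => (φ ω / (1 - p ω)) * ((1 - A ω) * Y ω)) P :=
    h1AY_int.bdd_mul (hv2.mono hHm).aestronglyMeasurable
      (by filter_upwards [hb2] with ω h; rw [Real.norm_eq_abs]; exact h)
  have hI3 : Integrable (fun ω => (g ω * (φ ω / p ω)) * A ω) P :=
    hA_int.bdd_mul (hv3.mono hHm).aestronglyMeasurable
      (by filter_upwards [hb3] with ω h; rw [Real.norm_eq_abs]; exact h)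
  have hI4 : Integrable (fun ω => (g ω * (φ ω / (1 - p ω))) * (1 - A ω)) P :=
    h1A_int.bdd_mul (hv4.mono hHm).aestronglyMeasurable
      (by filter_upwards [hb4] with ω h; rw [Real.norm_eq_abs]; exact h)
  have hI5 : Integrable (fun ω => ((S ω * (1 - q ω)) * (φ ω / p ω)) * A ω) P :=
    hA_int.bdd_mul (hv5.mono hHm).aestronglyMeasurable
      (by filter_upwards [hb5] with ω h; rw [Real.norm_eq_abs]; exact h)
  have hI6 : Integrable (fun ω => ((S ω * q ω) * (φ ω / (1 - p ω))) * (1 - A ω)) P :=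
    h1A_int.bdd_mul (hv6.mono hHm).aestronglyMeasurable
      (by filter_upwards [hb6] with ω h; rw [Real.norm_eq_abs]; exact h)
  -- conditional expectation of 1 - A
  have h1A_ce : P[(fun ω => 1 - A ω)|ℋ] =ᵐ[P] fun ω => 1 - p ω := by
    have h : P[(fun _ : Ω => (1:ℝ)) - A|ℋ] =ᵐ[P] P[(fun _ : Ω => (1:ℝ))|ℋ] - P[A|ℋ] :=
      condExp_sub (integrable_const 1) hA_int ℋ
    rw [condExp_const hHm (1:ℝ)] at h
    have h' : P[(fun ω => 1 - A ω)|ℋ] =ᵐ[P] (fun _ : Ω => (1:ℝ)) - P[A|ℋ] := h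
    filter_upwards [h', hp_ce] with ω h1 h2
    rw [h1, Pi.sub_apply, ← h2]
  -- the six evaluations
  have e1 : ∫ ω, (φ ω / p ω) * (A ω * Y ω) ∂P = ∫ ω, φ ω * μ₁ ω ∂P := by
    rw [my_tower hHm (fun ω => φ ω / p ω) (fun ω' => A ω' * Y ω') hAY_int hv1 hb1]
    refine integral_congr_ae ?_
    filter_upwards with ω
    rw [hμ₁ ω]; ring
  have e2 : ∫ ω, (φ ω / (1 - p ω)) * ((1 - A ω) * Y ω) ∂P = ∫ ω, φ ω * μ₀ ω ∂P := by
    rw [my_tower hHm (fun ω => φ ω / (1 - p ω)) (fun ω' => (1 - A ω') * Y ω') h1AY_int hv2 hb2]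
    refine integral_congr_ae ?_
    filter_upwards with ω
    rw [hμ₀ ω]; ring
  have e3 : ∫ ω, (g ω * (φ ω / p ω)) * A ω ∂P = ∫ ω, g ω * φ ω ∂P := by
    rw [my_tower hHm (fun ω => g ω * (φ ω / p ω)) A hA_int hv3 hb3]
    refine integral_congr_ae ?_
    filter_upwards [hp_ce, hεp] with ω h1 h2
    have hne : p ω ≠ 0 := ne_of_gt (lt_of_lt_of_le hε_pos h2.1)
    rw [← h1, mul_assoc, div_mul_cancel₀ _ hne]
  have e4 : ∫ ω, (g ω * (φ ω / (1 - p ω))) * (1 - A ω) ∂P = ∫ ω, g ω * φ ω ∂P := by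
    rw [my_tower hHm (fun ω => g ω * (φ ω / (1 - p ω))) (fun ω => 1 - A ω) h1A_int hv4 hb4]
    refine integral_congr_ae ?_
    filter_upwards [h1A_ce, hεp] with ω h1 h2
    have hne : 1 - p ω ≠ 0 := ne_of_gt (lt_of_lt_of_le hε_pos h2.2)
    rw [h1, mul_assoc, div_mul_cancel₀ _ hne]
  have e5 : ∫ ω, ((S ω * (1 - q ω)) * (φ ω / p ω)) * A ω ∂P
      = ∫ ω, (S ω * (1 - q ω)) * φ ω ∂P := by
    rw [my_tower hHm (fun ω => (S ω * (1 - q ω)) * (φ ω / p ω)) A hA_int hv5 hb5]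
    refine integral_congr_ae ?_
    filter_upwards [hp_ce, hεp] with ω h1 h2
    have hne : p ω ≠ 0 := ne_of_gt (lt_of_lt_of_le hε_pos h2.1)
    rw [← h1, mul_assoc, div_mul_cancel₀ _ hne]
  have e6 : ∫ ω, ((S ω * q ω) * (φ ω / (1 - p ω))) * (1 - A ω) ∂P
      = ∫ ω, (S ω * q ω) * φ ω ∂P := by
    rw [my_tower hHm (fun ω => (S ω * q ω) * (φ ω / (1 - p ω))) (fun ω => 1 - A ω)
      h1A_int hv6 hb6]
    refine integral_congr_ae ?_
    filter_upwards [h1A_ce, hεp] with ω h1 h2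
    have hne : 1 - p ω ≠ 0 := ne_of_gt (lt_of_lt_of_le hε_pos h2.2)
    rw [h1, mul_assoc, div_mul_cancel₀ _ hne]
  -- integrability for the recombination
  have hφμ₁_int : Integrable (fun ω => φ ω * μ₁ ω) P :=
    hμ₁_int.bdd_mul hφm.aestronglyMeasurable (by filter_upwards [hφ_bdd] with ω h; rw [Real.norm_eq_abs]; exact h)
  have hφμ₀_int : Integrable (fun ω => φ ω * μ₀ ω) P :=
    hμ₀_int.bdd_mul hφm.aestronglyMeasurable (by filter_upwards [hφ_bdd] with ω h; rw [Real.norm_eq_abs]; exact h)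
  have hG5_int : Integrable (fun ω => (S ω * (1 - q ω)) * φ ω) P := by
    refine my_bdd_int (((hSm.mul (measurable_const.sub hqm)).mul hφm).aestronglyMeasurable)
      (c := CS * C1) ?_
    filter_upwards [hq01, hφ_bdd] with ω h1 h2
    rw [abs_mul, abs_mul]
    calc |S ω| * |1 - q ω| * |φ ω| ≤ (CS * 1) * C1 := by
          refine mul_le_mul (mul_le_mul (hS_bdd ω) h1.2 (abs_nonneg _) hCSnn)
            h2 (abs_nonneg _) (mul_nonneg hCSnn zero_le_one)
      _ = CS * C1 := by ring
  have hG6_int : Integrable (fun ω => (S ω * q ω) * φ ω) P := by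
    refine my_bdd_int (((hSm.mul hqm).mul hφm).aestronglyMeasurable) (c := CS * C1) ?_
    filter_upwards [hq01, hφ_bdd] with ω h1 h2
    rw [abs_mul, abs_mul]
    calc |S ω| * |q ω| * |φ ω| ≤ (CS * 1) * C1 := by
          refine mul_le_mul (mul_le_mul (hS_bdd ω) h1.1 (abs_nonneg _) hCSnn)
            h2 (abs_nonneg _) (mul_nonneg hCSnn zero_le_one)
      _ = CS * C1 := by ring
  -- key identities from the model assumption
  have e7 : ∫ ω, φ ω * μ₁ ω ∂P - ∫ ω, φ ω * μ₀ ω ∂P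
      = ∫ ω, φ ω * (μ₁ ω - μ₀ ω) ∂P := by
    rw [← integral_sub hφμ₁_int hφμ₀_int]
    exact integral_congr_ae (Filter.Eventually.of_forall fun ω => by ring)
  have e8 : ∫ ω, φ ω * (μ₁ ω - μ₀ ω) ∂P
      = ∫ ω, (S ω * (1 - q ω)) * φ ω ∂P + ∫ ω, (S ω * q ω) * φ ω ∂P := by
    rw [my_tower hSHm φ (fun ω => μ₁ ω - μ₀ ω) (hμ₁_int.sub hμ₀_int)
      hφ𝒮.stronglyMeasurable hφ_bdd]
    rw [← integral_add hG5_int hG6_int]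
    refine integral_congr_ae ?_
    filter_upwards [h_model] with ω h
    rw [h]; ring
  have hI12 : Integrable (fun ω => (φ ω / p ω) * (A ω * Y ω)
      - (φ ω / (1 - p ω)) * ((1 - A ω) * Y ω)) P := hI1.sub hI2
  have hI123 : Integrable (fun ω => (φ ω / p ω) * (A ω * Y ω)
      - (φ ω / (1 - p ω)) * ((1 - A ω) * Y ω) - (g ω * (φ ω / p ω)) * A ω) P := hI12.sub hI3
  have hI1234 : Integrable (fun ω => (φ ω / p ω) * (A ω * Y ω)
      - (φ ω / (1 - p ω)) * ((1 - A ω) * Y ω) - (g ω * (φ ω / p ω)) * A ω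
      + (g ω * (φ ω / (1 - p ω))) * (1 - A ω)) P := hI123.add hI4
  have hI12345 : Integrable (fun ω => (φ ω / p ω) * (A ω * Y ω)
      - (φ ω / (1 - p ω)) * ((1 - A ω) * Y ω) - (g ω * (φ ω / p ω)) * A ω
      + (g ω * (φ ω / (1 - p ω))) * (1 - A ω)
      - ((S ω * (1 - q ω)) * (φ ω / p ω)) * A ω) P := hI1234.sub hI5
  -- pointwise decomposition of the integrand
  have hsplit : ∀ ω, (Y ω - g ω - (A ω - q ω) * ∑ j, f ω j * βstar j)
        * W ω * (A ω - q ω) * f ω i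
      = (φ ω / p ω) * (A ω * Y ω) - (φ ω / (1 - p ω)) * ((1 - A ω) * Y ω)
        - (g ω * (φ ω / p ω)) * A ω + (g ω * (φ ω / (1 - p ω))) * (1 - A ω)
        - ((S ω * (1 - q ω)) * (φ ω / p ω)) * A ω
        - ((S ω * q ω) * (φ ω / (1 - p ω))) * (1 - A ω) := by
    intro ω
    rw [hW ω]
    simp only [hSdef, hφdef]
    rcases hA01 ω with h | h <;> rw [h] <;> ring
  calc ∫ ω, (Y ω - g ω - (A ω - q ω) * ∑ j, f ω j * βstar j)
        * W ω * (A ω - q ω) * f ω i ∂P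
      = ∫ ω, ((φ ω / p ω) * (A ω * Y ω) - (φ ω / (1 - p ω)) * ((1 - A ω) * Y ω)
        - (g ω * (φ ω / p ω)) * A ω + (g ω * (φ ω / (1 - p ω))) * (1 - A ω)
        - ((S ω * (1 - q ω)) * (φ ω / p ω)) * A ω
        - ((S ω * q ω) * (φ ω / (1 - p ω))) * (1 - A ω)) ∂P :=
        integral_congr_ae (Filter.Eventually.of_forall hsplit)
    _ = ∫ ω, (φ ω / p ω) * (A ω * Y ω) ∂P
        - ∫ ω, (φ ω / (1 - p ω)) * ((1 - A ω) * Y ω) ∂P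
        - ∫ ω, (g ω * (φ ω / p ω)) * A ω ∂P
        + ∫ ω, (g ω * (φ ω / (1 - p ω))) * (1 - A ω) ∂P
        - ∫ ω, ((S ω * (1 - q ω)) * (φ ω / p ω)) * A ω ∂P
        - ∫ ω, ((S ω * q ω) * (φ ω / (1 - p ω))) * (1 - A ω) ∂P := by
        rw [integral_sub hI12345 hI6, integral_sub hI1234 hI5,
          integral_add hI123 hI4, integral_sub hI12 hI3, integral_sub hI1 hI2]
    _ = 0 := by
        rw [e1, e2, e3, e4, e5, e6]
        linarith [e7, e8]
end

section
/- Multi-occasion unbiasedness of the centered and weighted estimating function with availability: suppose that for each t, E[μ₁ₜ − μ₀ₜ | 𝒮ₜ] = ⟨fₜ, β*⟩ almost surely on the event {Iₜ = 1} for a common β* ∈ ℝ^d. Then for every choice of bounded ℋₜ-measurable random variables gₜ (arbitrary working models), E[ Σ_{t=1}^{T} Iₜ·Wₜ·(Aₜ − p̃ₜ)·(Yₜ − gₜ − (Aₜ − p̃ₜ)·⟨fₜ, β*⟩)·fₜ ] = 0 in ℝ^d. -/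
/-!
Write `c = ⟨f, β*⟩` and `U = I f q (1 - q)`, where `q = p̃`. Splitting by treatment arm, each
summand equals `U / p * A (Y - g - (1 - q) c) - U / (1 - p) * (1 - A) (Y - g + q c)`.
Since `p = E[A | ℋ]`, conditioning on `ℋ` turns this into `U (μ₁ - μ₀ - c)`: the working model `g`
cancels between the arms. As `U` is `𝒮`-measurable, conditioning further on `𝒮` replaces `μ₁ - μ₀`
by `E[μ₁ - μ₀ | 𝒮]`, which equals `c` wherever `U ≠ 0`, i.e. on `{I = 1}`.
-/

open MeasureTheory ProbabilityTheory
open scoped ENNReal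

section

variable {Ω : Type*} {m mΩ : MeasurableSpace Ω} {P : Measure Ω}

theorem memLp_top_of_zero_or_one {A : Ω → ℝ} (hA : AEStronglyMeasurable A P)
    (hA01 : ∀ ω, A ω = 0 ∨ A ω = 1) : MemLp A ∞ P :=
  memLp_top_of_bound hA 1 (ae_of_all _ fun ω => by rcases hA01 ω with h | h <;> simp [h])

theorem memLp_top_inv_of_le {p : Ω → ℝ} {ε : ℝ} (hp : AEMeasurable p P) (hε : 0 < ε)
    (hp_ge : ∀ᵐ ω ∂P, ε ≤ p ω) : MemLp (fun ω => (p ω)⁻¹) ∞ P :=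
  memLp_top_of_bound hp.inv.aestronglyMeasurable ε⁻¹ <| by
    filter_upwards [hp_ge] with ω h
    rw [norm_inv, Real.norm_of_nonneg (hε.le.trans h)]
    exact inv_anti₀ hε h

theorem integral_mul_condExp (hm : m ≤ mΩ) [SigmaFinite (P.trim hm)] {U X : Ω → ℝ}
    (hU : StronglyMeasurable[m] U) (hUX : Integrable (U * X) P) (hX : Integrable X P) :
    ∫ ω, U ω * P[X|m] ω ∂P = ∫ ω, U ω * X ω ∂P :=
  calc ∫ ω, U ω * P[X|m] ω ∂P = ∫ ω, P[U * X|m] ω ∂P :=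
        integral_congr_ae (condExp_mul_of_stronglyMeasurable_left hU hUX hX).symm
    _ = ∫ ω, U ω * X ω ∂P := integral_condExp hm

theorem condExp_mul_sub_eq {A Y G : Ω → ℝ} (hG : StronglyMeasurable[m] G) (hA : Integrable A P)
    (hAY : Integrable (fun ω => A ω * Y ω) P) (hGA : Integrable (G * A) P) :
    P[fun ω => A ω * (Y ω - G ω)|m] =ᵐ[P] fun ω => P[fun ω => A ω * Y ω|m] ω - G ω * P[A|m] ω := by
  have hsplit : (fun ω => A ω * (Y ω - G ω)) = (fun ω => A ω * Y ω) - G * A := by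
    ext ω
    simp only [Pi.sub_apply, Pi.mul_apply]
    ring
  rw [hsplit]
  filter_upwards [condExp_sub hAY hGA m, condExp_mul_of_stronglyMeasurable_left hG hGA hA]
    with ω h1 h2
  rw [h1, Pi.sub_apply, h2, Pi.mul_apply]

theorem integral_mul_sub_eq_zero_of_condExp_eq (hm : m ≤ mΩ) [SigmaFinite (P.trim hm)]
    {U X c : Ω → ℝ} (hU : StronglyMeasurable[m] U) (hU_top : MemLp U ∞ P) (hX : Integrable X P)
    (hc : StronglyMeasurable[m] c) (hc_int : Integrable c P)
    (h : ∀ᵐ ω ∂P, U ω ≠ 0 → P[X|m] ω = c ω) :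
    ∫ ω, U ω * (X ω - c ω) ∂P = 0 := by
  have hXc : Integrable (X - c) P := hX.sub hc_int
  refine (integral_mul_condExp hm hU (hXc.mul_of_top_right hU_top) hXc).symm.trans ?_
  refine integral_eq_zero_of_ae ?_
  filter_upwards [condExp_sub hX hc_int m, h] with ω hsub hω
  rw [hsub, Pi.sub_apply, condExp_of_stronglyMeasurable hm hc hc_int, Pi.zero_apply]
  by_cases hU0 : U ω = 0
  · rw [hU0, zero_mul]
  · rw [hω hU0, sub_self, mul_zero]

theorem integrable_div_mul_sub [IsFiniteMeasure P] {U G A Y p : Ω → ℝ} {ε : ℝ}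
    (hU_top : MemLp U ∞ P) (hG_top : MemLp G ∞ P) (hA_top : MemLp A ∞ P) (hY : Integrable Y P)
    (hp : AEMeasurable p P) (hε : 0 < ε) (hp_ge : ∀ᵐ ω ∂P, ε ≤ p ω) :
    Integrable (fun ω => U ω / p ω * (A ω * (Y ω - G ω))) P :=
  ((hY.sub (hG_top.integrable le_top)).mul_of_top_right hA_top).mul_of_top_right
    ((memLp_top_inv_of_le hp hε hp_ge).mul hU_top)

theorem integrable_condExp_div {X p : Ω → ℝ} {ε : ℝ} (hp : AEMeasurable p P) (hε : 0 < ε)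
    (hp_ge : ∀ᵐ ω ∂P, ε ≤ p ω) : Integrable (fun ω => P[X|m] ω / p ω) P :=
  integrable_condExp.mul_of_top_left (memLp_top_inv_of_le hp hε hp_ge)

theorem condExp_div_mul_sub_eq [IsFiniteMeasure P] (hm : m ≤ mΩ) {U G A Y p : Ω → ℝ} {ε : ℝ}
    (hU : StronglyMeasurable[m] U) (hG : StronglyMeasurable[m] G) (hp : StronglyMeasurable[m] p)
    (hU_top : MemLp U ∞ P) (hG_top : MemLp G ∞ P) (hA_top : MemLp A ∞ P) (hY : Integrable Y P)
    (hε : 0 < ε) (hp_ge : ∀ᵐ ω ∂P, ε ≤ p ω) (hp_ce : p =ᵐ[P] P[A|m]) :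
    P[fun ω => U ω / p ω * (A ω * (Y ω - G ω))|m]
      =ᵐ[P] fun ω => U ω * (P[fun ω => A ω * Y ω|m] ω / p ω - G ω) := by
  have hAYG : Integrable (fun ω => A ω * (Y ω - G ω)) P :=
    (hY.sub (hG_top.integrable le_top)).mul_of_top_right hA_top
  have hpull : P[fun ω => U ω / p ω * (A ω * (Y ω - G ω))|m]
      =ᵐ[P] fun ω => U ω / p ω * P[fun ω => A ω * (Y ω - G ω)|m] ω :=
    condExp_mul_of_stronglyMeasurable_left (hU.measurable.div hp.measurable).stronglyMeasurable
    (integrable_div_mul_sub hU_top hG_top hA_top hY (hp.mono hm).aemeasurable hε hp_ge) hAYG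
  filter_upwards [hpull, condExp_mul_sub_eq hG (hA_top.integrable le_top)
    (hY.mul_of_top_right hA_top) ((hA_top.mul hG_top).integrable le_top), hp_ce, hp_ge]
    with ω h_pull h_split h_ce h_ge
  rw [h_pull, h_split, ← h_ce]
  field_simp [(hε.trans_le h_ge).ne']

theorem one_sub_ae_eq_condExp_one_sub [IsFiniteMeasure P] (hm : m ≤ mΩ) {A p : Ω → ℝ}
    (hA : Integrable A P) (hp_ce : p =ᵐ[P] P[A|m]) :
    (fun ω => 1 - p ω) =ᵐ[P] P[fun ω => 1 - A ω|m] := by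
  have h_sub : P[fun ω => 1 - A ω|m] =ᵐ[P] P[fun _ => 1|m] - P[A|m] :=
    condExp_sub (integrable_const 1) hA m
  filter_upwards [hp_ce, h_sub] with ω h_ce h_sub
  rw [h_ce, h_sub, Pi.sub_apply, condExp_const hm]

theorem condExp_div_mul_sub_sub_div_mul_sub_eq [IsFiniteMeasure P] (hm : m ≤ mΩ)
    {U G₁ G₀ A Y p : Ω → ℝ} {ε : ℝ}
    (hU : StronglyMeasurable[m] U) (hG₁ : StronglyMeasurable[m] G₁)
    (hG₀ : StronglyMeasurable[m] G₀) (hp : StronglyMeasurable[m] p)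
    (hU_top : MemLp U ∞ P) (hG₁_top : MemLp G₁ ∞ P) (hG₀_top : MemLp G₀ ∞ P)
    (hA_top : MemLp A ∞ P) (hY : Integrable Y P)
    (hε : 0 < ε) (hp_bdd : ∀ᵐ ω ∂P, ε ≤ p ω ∧ p ω ≤ 1 - ε) (hp_ce : p =ᵐ[P] P[A|m]) :
    P[fun ω => U ω / p ω * (A ω * (Y ω - G₁ ω))
        - U ω / (1 - p ω) * ((1 - A ω) * (Y ω - G₀ ω))|m]
      =ᵐ[P] fun ω => U ω * (P[fun ω => A ω * Y ω|m] ω / p ω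
        - P[fun ω => (1 - A ω) * Y ω|m] ω / (1 - p ω) - (G₁ ω - G₀ ω)) := by
  have hp_ge : ∀ᵐ ω ∂P, ε ≤ p ω := hp_bdd.mono fun _ h => h.1
  have h1p_ge : ∀ᵐ ω ∂P, ε ≤ 1 - p ω := hp_bdd.mono fun _ h => by linarith [h.2]
  have h1A_top : MemLp (fun ω => 1 - A ω) ∞ P := (memLp_const 1).sub hA_top
  have hp_aem : AEMeasurable p P := (hp.measurable.mono hm le_rfl).aemeasurable
  have h₁ := condExp_div_mul_sub_eq hm hU hG₁ hp hU_top hG₁_top hA_top hY hε hp_ge hp_ce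
  -- the control arm is the treated arm for `1 - A`, whose propensity is `1 - p`
  have h₀ := condExp_div_mul_sub_eq (p := fun ω => 1 - p ω) hm hU hG₀
    (stronglyMeasurable_const.sub hp) hU_top hG₀_top
    h1A_top hY hε h1p_ge (one_sub_ae_eq_condExp_one_sub hm (hA_top.integrable le_top) hp_ce)
  refine (condExp_sub (m := m)
    (integrable_div_mul_sub hU_top hG₁_top hA_top hY hp_aem hε hp_ge)
    (integrable_div_mul_sub (p := fun ω => 1 - p ω) hU_top hG₀_top h1A_top hY
      (aemeasurable_const.sub hp_aem) hε h1p_ge)).trans ?_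
  filter_upwards [h₁, h₀] with ω h₁ h₀
  rw [Pi.sub_apply, h₁, h₀]
  ring

theorem weighted_centered_residual_ae_eq {A p q W : Ω → ℝ} (I Y g c f : Ω → ℝ) {ε : ℝ}
    (hA01 : ∀ ω, A ω = 0 ∨ A ω = 1) (hε : 0 < ε) (hp_bdd : ∀ᵐ ω ∂P, ε ≤ p ω ∧ p ω ≤ 1 - ε)
    (hW : ∀ ω, W ω = A ω * (q ω / p ω) + (1 - A ω) * ((1 - q ω) / (1 - p ω))) :
    (fun ω => I ω * W ω * (A ω - q ω) * (Y ω - g ω - (A ω - q ω) * c ω) * f ω)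
      =ᵐ[P] fun ω => I ω * f ω * q ω * (1 - q ω) / p ω * (A ω * (Y ω - (g ω + (1 - q ω) * c ω)))
        - I ω * f ω * q ω * (1 - q ω) / (1 - p ω) * ((1 - A ω) * (Y ω - (g ω - q ω * c ω))) := by
  filter_upwards [hp_bdd] with ω ⟨hp_ge, hp_le⟩
  have hp0 : p ω ≠ 0 := (hε.trans_le hp_ge).ne'
  have hp1 : 1 - p ω ≠ 0 := by linarith
  rw [hW]
  rcases hA01 ω with hA | hA <;> rw [hA] <;> field_simp <;> ring

theorem integrable_and_integral_weighted_centered_residual_eq_zero [IsFiniteMeasure P]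
    {𝒮 ℋ : MeasurableSpace Ω} (hSH : 𝒮 ≤ ℋ) (hHm : ℋ ≤ mΩ)
    {A Y I p q W μ₁ μ₀ g c f : Ω → ℝ} {ε : ℝ}
    (hA : Measurable[mΩ] A) (hA01 : ∀ ω, A ω = 0 ∨ A ω = 1) (hY : Integrable Y P)
    (hI : Measurable[𝒮] I) (hI01 : ∀ ω, I ω = 0 ∨ I ω = 1)
    (hε : 0 < ε) (hp : Measurable[ℋ] p) (hp_bdd : ∀ᵐ ω ∂P, ε ≤ p ω ∧ p ω ≤ 1 - ε)
    (hp_ce : p =ᵐ[P] P[A|ℋ]) (hq : Measurable[𝒮] q) (hq_top : MemLp q ∞ P)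
    (hg : Measurable[ℋ] g) (hg_top : MemLp g ∞ P)
    (hc : Measurable[𝒮] c) (hc_top : MemLp c ∞ P)
    (hf : Measurable[𝒮] f) (hf_top : MemLp f ∞ P)
    (hW : ∀ ω, W ω = A ω * (q ω / p ω) + (1 - A ω) * ((1 - q ω) / (1 - p ω)))
    (hμ₁ : ∀ ω, μ₁ ω = P[fun ω' => A ω' * Y ω'|ℋ] ω / p ω)
    (hμ₀ : ∀ ω, μ₀ ω = P[fun ω' => (1 - A ω') * Y ω'|ℋ] ω / (1 - p ω))
    (h_model : ∀ᵐ ω ∂P, I ω = 1 → P[fun ω' => μ₁ ω' - μ₀ ω'|𝒮] ω = c ω) :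
    Integrable (fun ω => I ω * W ω * (A ω - q ω) * (Y ω - g ω - (A ω - q ω) * c ω) * f ω) P ∧
      ∫ ω, I ω * W ω * (A ω - q ω) * (Y ω - g ω - (A ω - q ω) * c ω) * f ω ∂P = 0 := by
  set U := fun ω => I ω * f ω * q ω * (1 - q ω)
  have hSm : 𝒮 ≤ mΩ := hSH.trans hHm
  have hU : Measurable[𝒮] U := ((hI.mul hf).mul hq).mul (measurable_const.sub hq)
  have hU_top : MemLp U ∞ P :=
    ((memLp_const 1).sub hq_top).mul (r := ∞) <| hq_top.mul (r := ∞) <|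
      hf_top.mul (r := ∞) (memLp_top_of_zero_or_one (hI.mono hSm le_rfl).aestronglyMeasurable hI01)
  have hA_top : MemLp A ∞ P := memLp_top_of_zero_or_one hA.aestronglyMeasurable hA01
  have hG₁ : Measurable[ℋ] fun ω => g ω + (1 - q ω) * c ω :=
    hg.add (((measurable_const.sub hq).mul hc).mono hSH le_rfl)
  have hG₀ : Measurable[ℋ] fun ω => g ω - q ω * c ω := hg.sub ((hq.mul hc).mono hSH le_rfl)
  have hG₁_top : MemLp (fun ω => g ω + (1 - q ω) * c ω) ∞ P :=
    hg_top.add (hc_top.mul (r := ∞) ((memLp_const 1).sub hq_top))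
  have hG₀_top : MemLp (fun ω => g ω - q ω * c ω) ∞ P := hg_top.sub (hc_top.mul (r := ∞) hq_top)
  have hp_ge : ∀ᵐ ω ∂P, ε ≤ p ω := hp_bdd.mono fun _ h => h.1
  have h1p_ge : ∀ᵐ ω ∂P, ε ≤ 1 - p ω := hp_bdd.mono fun _ h => by linarith [h.2]
  have hp_aem : AEMeasurable p P := (hp.mono hHm le_rfl).aemeasurable
  have hsplit := weighted_centered_residual_ae_eq I Y g c f hA01 hε hp_bdd hW
  have hcond := condExp_div_mul_sub_sub_div_mul_sub_eq hHm (hU.mono hSH le_rfl).stronglyMeasurable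
    hG₁.stronglyMeasurable hG₀.stronglyMeasurable hp.stronglyMeasurable hU_top hG₁_top hG₀_top
    hA_top hY hε hp_bdd hp_ce
  have hμ_int : Integrable (fun ω => μ₁ ω - μ₀ ω) P := by
    rw [funext hμ₁, funext hμ₀]
    exact (integrable_condExp_div hp_aem hε hp_ge).sub
      (integrable_condExp_div (aemeasurable_const.sub hp_aem) hε h1p_ge)
  have h_model' : ∀ᵐ ω ∂P, U ω ≠ 0 → P[fun ω' => μ₁ ω' - μ₀ ω'|𝒮] ω = c ω := by
    filter_upwards [h_model] with ω h hU0
    refine h ((hI01 ω).resolve_left fun hI0 => hU0 ?_)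
    simp [U, hI0]
  refine ⟨((integrable_div_mul_sub hU_top hG₁_top hA_top hY hp_aem hε hp_ge).sub
    (integrable_div_mul_sub (p := fun ω => 1 - p ω) hU_top hG₀_top
      ((memLp_const 1).sub hA_top) hY (aemeasurable_const.sub hp_aem) hε h1p_ge)).congr
    hsplit.symm, ?_⟩
  calc _ = ∫ ω, P[_|ℋ] ω ∂P := (integral_condExp hHm).symm
    _ = ∫ ω, U ω * (μ₁ ω - μ₀ ω - c ω) ∂P := by
        refine integral_congr_ae ((condExp_congr_ae hsplit).trans (hcond.trans ?_))
        filter_upwards with ω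
        rw [hμ₁, hμ₀]
        ring
    _ = 0 := integral_mul_sub_eq_zero_of_condExp_eq hSm hU.stronglyMeasurable hU_top hμ_int
      hc.stronglyMeasurable (hc_top.integrable le_top) h_model'

end

theorem multi_occasion_estimating_function_unbiased_general
    {Ω : Type*} {m : MeasurableSpace Ω} {P : Measure Ω} [IsProbabilityMeasure P]
    (T : ℕ)
    (𝒮 ℋ : Fin T → MeasurableSpace Ω)
    (hSH : ∀ t, 𝒮 t ≤ ℋ t) (hHm : ∀ t, ℋ t ≤ m)
    (A : Fin T → Ω → ℝ) (hA_meas : ∀ t, Measurable (A t))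
    (hA01 : ∀ t ω, A t ω = 0 ∨ A t ω = 1)
    (Y : Fin T → Ω → ℝ) (hY_int : ∀ t, Integrable (Y t) P)
    (I : Fin T → Ω → ℝ) (hI_meas : ∀ t, Measurable[𝒮 t] (I t))
    (hI01 : ∀ t ω, I t ω = 0 ∨ I t ω = 1)
    (ε : ℝ) (hε_pos : 0 < ε)
    (p : Fin T → Ω → ℝ) (hp_meas : ∀ t, Measurable[ℋ t] (p t))
    (hp_bdd : ∀ t, ∀ᵐ ω ∂P, ε ≤ p t ω ∧ p t ω ≤ 1 - ε)
    (hp_ce : ∀ t, p t =ᵐ[P] P[A t|ℋ t])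
    (q : Fin T → Ω → ℝ) (hq_meas : ∀ t, Measurable[𝒮 t] (q t))
    (hq_bdd : ∀ t, ∀ᵐ ω ∂P, ε ≤ q t ω ∧ q t ω ≤ 1 - ε)
    (W : Fin T → Ω → ℝ)
    (hW : ∀ t ω, W t ω = A t ω * (q t ω / p t ω)
      + (1 - A t ω) * ((1 - q t ω) / (1 - p t ω)))
    (μ₁ μ₀ : Fin T → Ω → ℝ)
    (hμ₁ : ∀ t ω, μ₁ t ω = (P[(fun ω' => A t ω' * Y t ω')|ℋ t]) ω / p t ω)
    (hμ₀ : ∀ t ω, μ₀ t ω = (P[(fun ω' => (1 - A t ω') * Y t ω')|ℋ t]) ω / (1 - p t ω))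
    (d : ℕ) (f : Fin T → Ω → Fin d → ℝ)
    (hf_meas : ∀ t i, Measurable[𝒮 t] fun ω => f t ω i)
    (hf_bdd : ∃ C : ℝ, ∀ t ω i, |f t ω i| ≤ C)
    (βstar : Fin d → ℝ)
    (h_model : ∀ t, ∀ᵐ ω ∂P, I t ω = 1 →
      (P[(fun ω' => μ₁ t ω' - μ₀ t ω')|𝒮 t]) ω = ∑ j, f t ω j * βstar j) :
    ∀ g : Fin T → Ω → ℝ, (∀ t, Measurable[ℋ t] (g t)) →
      (∃ C : ℝ, ∀ t ω, |g t ω| ≤ C) →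
      ∀ i, ∫ ω, (∑ t, I t ω * W t ω * (A t ω - q t ω)
        * (Y t ω - g t ω - (A t ω - q t ω) * ∑ j, f t ω j * βstar j) * f t ω i) ∂P = 0 := by
  intro g hg_meas ⟨Cg, hCg⟩ i
  obtain ⟨Cf, hCf⟩ := hf_bdd
  have hf_top : ∀ t j, MemLp (fun ω => f t ω j) ∞ P := fun t j =>
    memLp_top_of_bound (((hf_meas t j).mono ((hSH t).trans (hHm t)) le_rfl).aestronglyMeasurable)
      Cf (ae_of_all _ fun ω => hCf t ω j)
  have hq_top : ∀ t, MemLp (q t) ∞ P := fun t =>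
    memLp_top_of_bound (((hq_meas t).mono ((hSH t).trans (hHm t)) le_rfl).aestronglyMeasurable) 1
      (by
        filter_upwards [hq_bdd t] with ω h
        rw [Real.norm_eq_abs, abs_le]
        constructor <;> linarith)
  have h_occasion := fun t => integrable_and_integral_weighted_centered_residual_eq_zero
    (c := fun ω => ∑ j, f t ω j * βstar j) (hSH t) (hHm t) (hA_meas t) (hA01 t) (hY_int t)
    (hI_meas t) (hI01 t) hε_pos (hp_meas t) (hp_bdd t) (hp_ce t) (hq_meas t) (hq_top t) (hg_meas t)
    (memLp_top_of_bound ((hg_meas t).mono (hHm t) le_rfl).aestronglyMeasurable Cg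
      (ae_of_all _ (hCg t)))
    (Finset.measurable_sum _ fun j _ => (hf_meas t j).mul measurable_const)
    (memLp_finsetSum _ fun j _ => (hf_top t j).mul_const (βstar j))
    (hf_meas t i) (hf_top t i) (hW t) (hμ₁ t) (hμ₀ t) (h_model t)
  rw [integral_finsetSum _ fun t _ => (h_occasion t).1]
  exact Finset.sum_eq_zero fun t _ => (h_occasion t).2

/-- Multi-occasion unbiasedness of the centered and weighted estimating
function with availability: if for each occasion `t`, `E[μ₁ₜ − μ₀ₜ | 𝒮ₜ] = ⟨fₜ, β*⟩` a.s. on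
the event `{Iₜ = 1}`, then for any bounded `ℋₜ`-measurable working models `gₜ`,
`E[Σₜ Iₜ·Wₜ·(Aₜ − p̃ₜ)·(Yₜ − gₜ − (Aₜ − p̃ₜ)·⟨fₜ, β*⟩)·fₜ] = 0` in `ℝ^d`. -/
theorem multi_occasion_estimating_function_unbiased
    {Ω : Type*} {m : MeasurableSpace Ω} {P : Measure Ω} [IsProbabilityMeasure P]
    (T : ℕ) (hT : 0 < T)
    (𝒮 ℋ : Fin T → MeasurableSpace Ω)
    (hSH : ∀ t, 𝒮 t ≤ ℋ t) (hHm : ∀ t, ℋ t ≤ m)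
    (A : Fin T → Ω → ℝ) (hA_meas : ∀ t, Measurable (A t))
    (hA01 : ∀ t ω, A t ω = 0 ∨ A t ω = 1)
    (Y : Fin T → Ω → ℝ) (hY_int : ∀ t, Integrable (Y t) P)
    (I : Fin T → Ω → ℝ) (hI_meas : ∀ t, Measurable[𝒮 t] (I t))
    (hI01 : ∀ t ω, I t ω = 0 ∨ I t ω = 1)
    (ε : ℝ) (hε_pos : 0 < ε) (hε_lt : ε < 1 / 2)
    (p : Fin T → Ω → ℝ) (hp_meas : ∀ t, Measurable[ℋ t] (p t))
    (hp_bdd : ∀ t, ∀ᵐ ω ∂P, ε ≤ p t ω ∧ p t ω ≤ 1 - ε)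
    (hp_ce : ∀ t, p t =ᵐ[P] P[A t|ℋ t])
    (q : Fin T → Ω → ℝ) (hq_meas : ∀ t, Measurable[𝒮 t] (q t))
    (hq_bdd : ∀ t, ∀ᵐ ω ∂P, ε ≤ q t ω ∧ q t ω ≤ 1 - ε)
    (W : Fin T → Ω → ℝ)
    (hW : ∀ t ω, W t ω = A t ω * (q t ω / p t ω)
      + (1 - A t ω) * ((1 - q t ω) / (1 - p t ω)))
    (μ₁ μ₀ : Fin T → Ω → ℝ)
    (hμ₁ : ∀ t ω, μ₁ t ω = (P[(fun ω' => A t ω' * Y t ω')|ℋ t]) ω / p t ω)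
    (hμ₀ : ∀ t ω, μ₀ t ω = (P[(fun ω' => (1 - A t ω') * Y t ω')|ℋ t]) ω / (1 - p t ω))
    (d : ℕ) (f : Fin T → Ω → Fin d → ℝ)
    (hf_meas : ∀ t i, Measurable[𝒮 t] fun ω => f t ω i)
    (hf_bdd : ∃ C : ℝ, ∀ t ω i, |f t ω i| ≤ C)
    (βstar : Fin d → ℝ)
    (h_model : ∀ t, ∀ᵐ ω ∂P, I t ω = 1 →
      (P[(fun ω' => μ₁ t ω' - μ₀ t ω')|𝒮 t]) ω = ∑ j, f t ω j * βstar j) :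
    ∀ g : Fin T → Ω → ℝ, (∀ t, Measurable[ℋ t] (g t)) →
      (∃ C : ℝ, ∀ t ω, |g t ω| ≤ C) →
      ∀ i, ∫ ω, (∑ t, I t ω * W t ω * (A t ω - q t ω)
        * (Y t ω - g t ω - (A t ω - q t ω) * ∑ j, f t ω j * βstar j) * f t ω i) ∂P = 0 :=
  multi_occasion_estimating_function_unbiased_general T 𝒮 ℋ hSH hHm A hA_meas hA01 Y hY_int I
    hI_meas hI01 ε hε_pos p hp_meas hp_bdd hp_ce q hq_meas hq_bdd W hW μ₁ μ₀ hμ₁ hμ₀ d f hf_meas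
    hf_bdd βstar h_model
end

section
/- The population value of the weighted and centered estimating function for the treatment-effect parameter does not depend on the working model and equals a weighted projection equation: let f : Ω → ℝ^d be a bounded 𝒮-measurable random vector. For every β ∈ ℝ^d and every bounded ℋ-measurable random variable g, E[(Y − g − (A − p̃)·⟨f, β⟩)·W·(A − p̃)·f] = E[p̃·(1 − p̃)·(μ₁ − μ₀)·f] − (E[p̃·(1 − p̃)·f fᵀ])·β, where f fᵀ denotes the d×d outer product matrix and the expectations are taken entrywise. -/
open MeasureTheory ProbabilityTheory Filter

section aux
variable {Ω : Type*} {m0 : MeasurableSpace Ω} {μ : Measure Ω} [IsProbabilityMeasure μ]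

lemma bdd_integrable {h : Ω → ℝ} (hm : AEStronglyMeasurable h μ) {C : ℝ}
    (hb : ∀ᵐ ω ∂μ, |h ω| ≤ C) : Integrable h μ := by
  have : Integrable (fun ω => h ω * 1) μ :=
    (integrable_const 1).bdd_mul hm (by simpa [Real.norm_eq_abs] using hb)
  simpa using this

lemma int_mul_condexp {m : MeasurableSpace Ω} (hm : m ≤ m0) {h X : Ω → ℝ}
    (hh : Measurable[m] h) {C : ℝ} (hb : ∀ᵐ ω ∂μ, |h ω| ≤ C)
    (hX : Integrable X μ) :
    ∫ ω, h ω * X ω ∂μ = ∫ ω, h ω * (μ[X|m]) ω ∂μ := by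
  have hh0 : AEStronglyMeasurable[m0] h μ := (hh.mono hm le_rfl).aestronglyMeasurable
  have hint : Integrable (fun ω => h ω * X ω) μ :=
    hX.bdd_mul hh0 (by simpa [Real.norm_eq_abs] using hb)
  have h1 := condExp_mul_of_stronglyMeasurable_left (μ := μ) hh.stronglyMeasurable hint hX
  rw [← integral_condExp hm (f := fun ω => h ω * X ω)]
  exact integral_congr_ae h1

end aux

/-- The population value of the weighted and centered estimating function
for the treatment-effect parameter does not depend on the working model and equals a
weighted projection equation: for every `β ∈ ℝ^d` and bounded `ℋ`-measurable `g`,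
`E[(Y − g − (A − p̃)·⟨f, β⟩)·W·(A − p̃)·f]
  = E[p̃·(1 − p̃)·(μ₁ − μ₀)·f] − (E[p̃·(1 − p̃)·f fᵀ])·β`, entrywise. -/
theorem estimating_function_population_value
    {Ω : Type*} (𝒮 ℋ : MeasurableSpace Ω) {m : MeasurableSpace Ω} {P : Measure Ω} [IsProbabilityMeasure P]
    (hSH : 𝒮 ≤ ℋ) (hHm : ℋ ≤ m)
    (A : Ω → ℝ) (hA_meas : Measurable A) (hA01 : ∀ ω, A ω = 0 ∨ A ω = 1)
    (Y : Ω → ℝ) (hY_int : Integrable Y P)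
    (ε : ℝ) (hε_pos : 0 < ε) (hε_lt : ε < 1 / 2)
    (p : Ω → ℝ) (hp_meas : Measurable[ℋ] p)
    (hp_bdd : ∀ᵐ ω ∂P, ε ≤ p ω ∧ p ω ≤ 1 - ε)
    (hp_ce : p =ᵐ[P] P[A|ℋ])
    (q : Ω → ℝ) (hq_meas : Measurable[𝒮] q)
    (hq_bdd : ∀ᵐ ω ∂P, ε ≤ q ω ∧ q ω ≤ 1 - ε)
    (W : Ω → ℝ)
    (hW : ∀ ω, W ω = A ω * (q ω / p ω) + (1 - A ω) * ((1 - q ω) / (1 - p ω)))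
    (μ₁ μ₀ : Ω → ℝ)
    (hμ₁ : ∀ ω, μ₁ ω = (P[(fun ω' => A ω' * Y ω')|ℋ]) ω / p ω)
    (hμ₀ : ∀ ω, μ₀ ω = (P[(fun ω' => (1 - A ω') * Y ω')|ℋ]) ω / (1 - p ω))
    (d : ℕ) (f : Ω → Fin d → ℝ)
    (hf_meas : ∀ i, Measurable[𝒮] fun ω => f ω i)
    (hf_bdd : ∃ C : ℝ, ∀ ω i, |f ω i| ≤ C) :
    ∀ (β : Fin d → ℝ) (g : Ω → ℝ), Measurable[ℋ] g → (∃ C : ℝ, ∀ ω, |g ω| ≤ C) →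
      ∀ i, ∫ ω, (Y ω - g ω - (A ω - q ω) * ∑ j, f ω j * β j)
          * W ω * (A ω - q ω) * f ω i ∂P
        = (∫ ω, q ω * (1 - q ω) * (μ₁ ω - μ₀ ω) * f ω i ∂P)
          - ∑ j, (∫ ω, q ω * (1 - q ω) * f ω i * f ω j ∂P) * β j := by
  obtain ⟨Cf, hCf⟩ := hf_bdd
  intro β g hg_meas hg_bdd i
  obtain ⟨Cg, hCg⟩ := hg_bdd
  -- nonemptiness and nonnegativity of bounds
  have hne : Nonempty Ω := by
    by_contra hcon
    rw [not_nonempty_iff] at hcon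
    have h1 : P Set.univ = 1 := measure_univ
    rw [Set.univ_eq_empty_iff.mpr hcon, measure_empty] at h1
    exact zero_ne_one h1
  obtain ⟨ω₀⟩ := hne
  have hCf0 : 0 ≤ Cf := (abs_nonneg _).trans (hCf ω₀ i)
  have hCg0 : 0 ≤ Cg := (abs_nonneg _).trans (hCg ω₀)
  -- abbreviations
  set AY : Ω → ℝ := fun ω => A ω * Y ω with hAY_def
  set AY' : Ω → ℝ := fun ω => (1 - A ω) * Y ω with hAY'_def
  set S : Ω → ℝ := fun ω => ∑ j, f ω j * β j with hS_def
  set c : Ω → ℝ := fun ω => q ω * (1 - q ω) * f ω i with hc_def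
  set h₁ : Ω → ℝ := fun ω => c ω / p ω with h1_def
  set h₂ : Ω → ℝ := fun ω => -((g ω + (1 - q ω) * S ω) * c ω) / p ω with h2_def
  set h₃ : Ω → ℝ := fun ω => -(c ω / (1 - p ω)) with h3_def
  set h₄ : Ω → ℝ := fun ω => (g ω - q ω * S ω) * c ω / (1 - p ω) with h4_def
  set CS : ℝ := ∑ j : Fin d, Cf * |β j| with hCS_def
  have hCS0 : 0 ≤ CS := Finset.sum_nonneg fun j _ => mul_nonneg hCf0 (abs_nonneg _)
  -- measurability
  have hq' : Measurable[ℋ] q := hq_meas.mono hSH le_rfl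
  have hf' : ∀ j, Measurable[ℋ] fun ω => f ω j := fun j => (hf_meas j).mono hSH le_rfl
  have hS_meas : Measurable[ℋ] S := by
    rw [hS_def]; exact Finset.measurable_sum _ fun j _ => (hf' j).mul_const _
  have hc_meas : Measurable[ℋ] c := by
    rw [hc_def]; exact (hq'.mul (measurable_const.sub hq')).mul (hf' i)
  have hnum2_meas : Measurable[ℋ] fun ω => (g ω + (1 - q ω) * S ω) * c ω :=
    (hg_meas.add ((measurable_const.sub hq').mul hS_meas)).mul hc_meas
  have hnum4_meas : Measurable[ℋ] fun ω => (g ω - q ω * S ω) * c ω :=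
    (hg_meas.sub (hq'.mul hS_meas)).mul hc_meas
  have h1_meas : Measurable[ℋ] h₁ := by rw [h1_def]; exact hc_meas.div hp_meas
  have h2_meas : Measurable[ℋ] h₂ := by rw [h2_def]; exact hnum2_meas.neg.div hp_meas
  have h3_meas : Measurable[ℋ] h₃ := by
    rw [h3_def]; exact (hc_meas.div (measurable_const.sub hp_meas)).neg
  have h4_meas : Measurable[ℋ] h₄ := by
    rw [h4_def]; exact hnum4_meas.div (measurable_const.sub hp_meas)
  have ham : ∀ {h : Ω → ℝ}, Measurable[ℋ] h → AEStronglyMeasurable[m] h P :=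
    fun hh => (hh.mono hHm le_rfl).aestronglyMeasurable
  -- bounds
  have hS_bdd : ∀ ω, |S ω| ≤ CS := by
    intro ω
    simp only [hS_def, hCS_def]
    refine (Finset.abs_sum_le_sum_abs _ _).trans (Finset.sum_le_sum fun j _ => ?_)
    rw [abs_mul]; exact mul_le_mul_of_nonneg_right (hCf ω j) (abs_nonneg _)
  have hc_bdd : ∀ᵐ ω ∂P, |c ω| ≤ Cf := by
    filter_upwards [hq_bdd] with ω hq
    have h0 : 0 ≤ q ω := le_trans hε_pos.le hq.1
    have h1 : q ω ≤ 1 := hq.2.trans (by linarith)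
    have hle : |c ω| = q ω * (1 - q ω) * |f ω i| := by
      simp only [hc_def]
      rw [abs_mul, abs_mul, abs_of_nonneg h0, abs_of_nonneg (by linarith : (0:ℝ) ≤ 1 - q ω)]
    rw [hle]
    have hle1 : q ω * (1 - q ω) ≤ 1 := by nlinarith
    calc q ω * (1 - q ω) * |f ω i| ≤ 1 * |f ω i| :=
          mul_le_mul_of_nonneg_right hle1 (abs_nonneg _)
      _ = |f ω i| := one_mul _
      _ ≤ Cf := hCf ω i
  have habs_div : ∀ x den M : ℝ, 0 ≤ M → ε ≤ den → |x| ≤ M → |x / den| ≤ M / ε := by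
    intro x den M hM hden hx
    rw [abs_div, abs_of_pos (lt_of_lt_of_le hε_pos hden)]
    exact div_le_div₀ hM hx hε_pos hden
  have hnum2_bdd : ∀ᵐ ω ∂P, |(g ω + (1 - q ω) * S ω) * c ω| ≤ (Cg + CS) * Cf := by
    filter_upwards [hq_bdd, hc_bdd] with ω hq hc
    rw [abs_mul]
    have h1q : |1 - q ω| ≤ 1 := by
      rw [abs_of_nonneg (by linarith [hq.2] : (0:ℝ) ≤ 1 - q ω)]; linarith [hq.1]
    have hnum : |g ω + (1 - q ω) * S ω| ≤ Cg + CS := by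
      calc |g ω + (1 - q ω) * S ω| ≤ |g ω| + |1 - q ω| * |S ω| := by
            rw [← abs_mul]; exact abs_add_le _ _
        _ ≤ Cg + 1 * CS :=
            add_le_add (hCg ω) (mul_le_mul h1q (hS_bdd ω) (abs_nonneg _) zero_le_one)
        _ = Cg + CS := by ring
    exact mul_le_mul hnum hc (abs_nonneg _) (by linarith)
  have hnum4_bdd : ∀ᵐ ω ∂P, |(g ω - q ω * S ω) * c ω| ≤ (Cg + CS) * Cf := by
    filter_upwards [hq_bdd, hc_bdd] with ω hq hc
    rw [abs_mul]
    have h1q : |q ω| ≤ 1 := by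
      rw [abs_of_nonneg (le_trans hε_pos.le hq.1)]; linarith [hq.2]
    have hnum : |g ω - q ω * S ω| ≤ Cg + CS := by
      calc |g ω - q ω * S ω| ≤ |g ω| + |q ω| * |S ω| := by
            rw [← abs_mul]; exact abs_sub _ _
        _ ≤ Cg + 1 * CS :=
            add_le_add (hCg ω) (mul_le_mul h1q (hS_bdd ω) (abs_nonneg _) zero_le_one)
        _ = Cg + CS := by ring
    exact mul_le_mul hnum hc (abs_nonneg _) (by linarith)
  have h1_bdd : ∀ᵐ ω ∂P, |h₁ ω| ≤ Cf / ε := by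
    filter_upwards [hp_bdd, hc_bdd] with ω hp hc
    simp only [h1_def]
    exact habs_div _ _ _ hCf0 hp.1 hc
  have h2_bdd : ∀ᵐ ω ∂P, |h₂ ω| ≤ (Cg + CS) * Cf / ε := by
    filter_upwards [hp_bdd, hnum2_bdd] with ω hp hn
    simp only [h2_def]
    rw [neg_div, abs_neg]
    exact habs_div _ _ _ (by positivity) hp.1 hn
  have h3_bdd : ∀ᵐ ω ∂P, |h₃ ω| ≤ Cf / ε := by
    filter_upwards [hp_bdd, hc_bdd] with ω hp hc
    simp only [h3_def]
    rw [abs_neg]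
    exact habs_div _ _ _ hCf0 (by linarith [hp.2]) hc
  have h4_bdd : ∀ᵐ ω ∂P, |h₄ ω| ≤ (Cg + CS) * Cf / ε := by
    filter_upwards [hp_bdd, hnum4_bdd] with ω hp hn
    simp only [h4_def]
    exact habs_div _ _ _ (by positivity) (by linarith [hp.2]) hn
  -- integrability
  have hA_b : ∀ ω, ‖A ω‖ ≤ 1 := by
    intro ω; rcases hA01 ω with h | h <;> simp [h, Real.norm_eq_abs]
  have hA_m : Measurable[m] A := hA_meas
  have hA_sm : AEStronglyMeasurable[m] A P := hA_m.aestronglyMeasurable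
  have hA_int : Integrable A P :=
    bdd_integrable hA_sm
      (Eventually.of_forall fun ω => by simpa [Real.norm_eq_abs] using hA_b ω)
  have h1A_int : Integrable (fun ω => 1 - A ω) P := (integrable_const 1).sub hA_int
  have hAY_int : Integrable AY P :=
    hY_int.bdd_mul hA_sm (Eventually.of_forall hA_b)
  have hAY'_int : Integrable AY' P := by
    refine hY_int.bdd_mul (c := 1) (aestronglyMeasurable_const.sub hA_sm)
      (Eventually.of_forall fun ω => ?_)
    rcases hA01 ω with h | h <;> simp [h, Real.norm_eq_abs]
  have I1 : Integrable (fun ω => h₁ ω * AY ω) P :=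
    hAY_int.bdd_mul (ham h1_meas) (by simpa [Real.norm_eq_abs] using h1_bdd)
  have I2 : Integrable (fun ω => h₂ ω * A ω) P :=
    hA_int.bdd_mul (ham h2_meas) (by simpa [Real.norm_eq_abs] using h2_bdd)
  have I3 : Integrable (fun ω => h₃ ω * AY' ω) P :=
    hAY'_int.bdd_mul (ham h3_meas) (by simpa [Real.norm_eq_abs] using h3_bdd)
  have I4 : Integrable (fun ω => h₄ ω * (1 - A ω)) P :=
    h1A_int.bdd_mul (ham h4_meas) (by simpa [Real.norm_eq_abs] using h4_bdd)
  have I12 : Integrable (fun ω => h₁ ω * AY ω + h₂ ω * A ω) P := I1.add I2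
  have I123 : Integrable (fun ω => h₁ ω * AY ω + h₂ ω * A ω + h₃ ω * AY' ω) P := I12.add I3
  have Ia : Integrable (fun ω => -((g ω + (1 - q ω) * S ω) * c ω)) P :=
    (bdd_integrable (ham hnum2_meas) hnum2_bdd).neg
  have Ib : Integrable (fun ω => (g ω - q ω * S ω) * c ω) P :=
    bdd_integrable (ham hnum4_meas) hnum4_bdd
  have Icμ1 : Integrable (fun ω => c ω * μ₁ ω) P := by
    have heq : (fun ω => c ω * μ₁ ω) = fun ω => h₁ ω * (P[AY|ℋ]) ω := by
      funext ω; simp only [h1_def]; rw [hμ₁ ω]; ring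
    rw [heq]
    exact integrable_condExp.bdd_mul (ham h1_meas) (by simpa [Real.norm_eq_abs] using h1_bdd)
  have Icμ0 : Integrable (fun ω => c ω * μ₀ ω) P := by
    have heq : (fun ω => c ω * μ₀ ω) = fun ω => -(h₃ ω * (P[AY'|ℋ]) ω) := by
      funext ω; simp only [h3_def]; rw [hμ₀ ω]; ring
    rw [heq]
    exact (integrable_condExp.bdd_mul (ham h3_meas)
      (by simpa [Real.norm_eq_abs] using h3_bdd)).neg
  -- pointwise decomposition
  have hsplit : (fun ω => (Y ω - g ω - (A ω - q ω) * ∑ j, f ω j * β j)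
      * W ω * (A ω - q ω) * f ω i)
      = fun ω => h₁ ω * AY ω + h₂ ω * A ω + h₃ ω * AY' ω + h₄ ω * (1 - A ω) := by
    funext ω
    simp only [h1_def, h2_def, h3_def, h4_def, hc_def, hS_def, hAY_def, hAY'_def, hW ω]
    rcases hA01 ω with h | h <;> rw [h] <;> ring
  have split4 : ∫ ω, (h₁ ω * AY ω + h₂ ω * A ω + h₃ ω * AY' ω + h₄ ω * (1 - A ω)) ∂P
      = (∫ ω, h₁ ω * AY ω ∂P) + (∫ ω, h₂ ω * A ω ∂P) + (∫ ω, h₃ ω * AY' ω ∂P)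
        + (∫ ω, h₄ ω * (1 - A ω) ∂P) := by
    rw [integral_add I123 I4, integral_add I12 I3, integral_add I1 I2]
  -- conditional expectation computations
  have E1 : ∫ ω, h₁ ω * AY ω ∂P = ∫ ω, c ω * μ₁ ω ∂P := by
    rw [int_mul_condexp hHm h1_meas h1_bdd hAY_int]
    refine integral_congr_ae (Eventually.of_forall fun ω => ?_)
    simp only [h1_def]
    rw [hμ₁ ω]; ring
  have E2 : ∫ ω, h₂ ω * A ω ∂P = ∫ ω, -((g ω + (1 - q ω) * S ω) * c ω) ∂P := by
    rw [int_mul_condexp hHm h2_meas h2_bdd hA_int]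
    refine integral_congr_ae ?_
    filter_upwards [hp_bdd, hp_ce] with ω hp hpe
    rw [← hpe]
    simp only [h2_def]
    rw [div_mul_cancel₀]
    linarith [hp.1]
  have E3 : ∫ ω, h₃ ω * AY' ω ∂P = ∫ ω, -(c ω * μ₀ ω) ∂P := by
    rw [int_mul_condexp hHm h3_meas h3_bdd hAY'_int]
    refine integral_congr_ae (Eventually.of_forall fun ω => ?_)
    simp only [h3_def]
    rw [hμ₀ ω]; ring
  have hcond1A : P[(fun ω => 1 - A ω)|ℋ] =ᵐ[P] fun ω => 1 - p ω := by
    have hsub : P[(fun ω => 1 - A ω)|ℋ] =ᵐ[P] P[(fun _ => (1:ℝ))|ℋ] - P[A|ℋ] :=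
      condExp_sub (integrable_const 1) hA_int ℋ
    refine hsub.trans ?_
    rw [condExp_const hHm]
    filter_upwards [hp_ce] with ω hpe
    simp only [Pi.sub_apply]
    rw [← hpe]
  have E4 : ∫ ω, h₄ ω * (1 - A ω) ∂P = ∫ ω, (g ω - q ω * S ω) * c ω ∂P := by
    rw [int_mul_condexp hHm h4_meas h4_bdd h1A_int]
    refine integral_congr_ae ?_
    filter_upwards [hp_bdd, hcond1A] with ω hp hce
    rw [hce]
    simp only [h4_def]
    rw [div_mul_cancel₀]
    linarith [hp.2]
  -- combining middle terms
  have Emid : (∫ ω, -((g ω + (1 - q ω) * S ω) * c ω) ∂P)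
      + (∫ ω, (g ω - q ω * S ω) * c ω ∂P) = -∫ ω, c ω * S ω ∂P := by
    rw [← integral_add Ia Ib, ← integral_neg]
    refine integral_congr_ae (Eventually.of_forall fun ω => ?_)
    ring
  -- sum term
  have Esum : ∫ ω, c ω * S ω ∂P
      = ∑ j, (∫ ω, q ω * (1 - q ω) * f ω i * f ω j ∂P) * β j := by
    have hpt : ∀ ω, c ω * S ω = ∑ j, q ω * (1 - q ω) * f ω i * f ω j * β j := by
      intro ω
      simp only [hc_def, hS_def]
      rw [Finset.mul_sum]
      exact Finset.sum_congr rfl fun j _ => by ring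
    rw [integral_congr_ae (Eventually.of_forall hpt)]
    rw [integral_finset_sum]
    · exact Finset.sum_congr rfl fun j _ => integral_mul_const _ _
    · intro j _
      refine bdd_integrable (ham ?_) (C := Cf * Cf * |β j|) ?_
      · exact (((hq'.mul (measurable_const.sub hq')).mul (hf' i)).mul (hf' j)).mul_const _
      · filter_upwards [hq_bdd] with ω hq
        have h0 : 0 ≤ q ω := le_trans hε_pos.le hq.1
        have h1 : q ω ≤ 1 := hq.2.trans (by linarith)
        have : |q ω * (1 - q ω) * f ω i * f ω j * β j|
            = q ω * (1 - q ω) * |f ω i| * |f ω j| * |β j| := by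
          rw [abs_mul, abs_mul, abs_mul, abs_mul, abs_of_nonneg h0,
            abs_of_nonneg (by linarith : (0:ℝ) ≤ 1 - q ω)]
        rw [this]
        have hprod : 0 ≤ |f ω i| * |f ω j| * |β j| := by positivity
        have h2 : q ω * (1 - q ω) ≤ 1 := by nlinarith
        have key1 := mul_le_mul_of_nonneg_right h2 hprod
        have key2 := mul_le_mul_of_nonneg_right
          (mul_le_mul (hCf ω i) (hCf ω j) (abs_nonneg (f ω j)) hCf0) (abs_nonneg (β j))
        nlinarith [key1, key2]
  -- the RHS first term
  have ERHS1 : ∫ ω, q ω * (1 - q ω) * (μ₁ ω - μ₀ ω) * f ω i ∂P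
      = (∫ ω, c ω * μ₁ ω ∂P) - ∫ ω, c ω * μ₀ ω ∂P := by
    rw [← integral_sub Icμ1 Icμ0]
    refine integral_congr_ae (Eventually.of_forall fun ω => ?_)
    simp only [hc_def]; ring
  -- final assembly
  have hneg0 : ∫ ω, -(c ω * μ₀ ω) ∂P = -∫ ω, c ω * μ₀ ω ∂P := integral_neg _
  have hneg2 : ∫ ω, -((g ω + (1 - q ω) * S ω) * c ω) ∂P
      = -∫ ω, (g ω + (1 - q ω) * S ω) * c ω ∂P := integral_neg _
  rw [hsplit, split4, E1, E2, E3, E4, ERHS1, ← Esum]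
  linarith [Emid, hneg0, hneg2]
end

section
/- Consistency of the population estimand under the moderated-effect model (the core content of Proposition 1): let f : Ω → ℝ^d be a bounded 𝒮-measurable random vector, assume the model E[μ₁ − μ₀ | 𝒮] = ⟨f, β*⟩ almost surely for some β* ∈ ℝ^d, and assume the d×d matrix E[p̃·(1 − p̃)·f fᵀ] is invertible. Then for every bounded ℋ-measurable random variable g (an arbitrary working model), β* is the unique β ∈ ℝ^d satisfying E[(Y − g − (A − p̃)·⟨f, β⟩)·W·(A − p̃)·f] = 0. -/
open MeasureTheory ProbabilityTheory

section aux

variable {Ω : Type*} {m : MeasurableSpace Ω} {P : Measure Ω} [IsProbabilityMeasure P]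

lemma integrable_of_bdd {h : Ω → ℝ} (hh : AEStronglyMeasurable h P) (C : ℝ)
    (hb : ∀ᵐ ω ∂P, |h ω| ≤ C) : Integrable h P :=
  (integrable_const C).mono' hh (by simpa [Real.norm_eq_abs] using hb)

lemma pull_out {ℋ : MeasurableSpace Ω} (hHm : ℋ ≤ m) {h X : Ω → ℝ}
    (hh : StronglyMeasurable[ℋ] h) (C : ℝ) (hbd : ∀ᵐ ω ∂P, |h ω| ≤ C)
    (hX : Integrable X P) :
    ∫ ω, h ω * X ω ∂P = ∫ ω, h ω * (P[X|ℋ]) ω ∂P := by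
  have h1 : P[fun ω => h ω * X ω|ℋ] =ᵐ[P] fun ω => h ω * (P[X|ℋ]) ω := by
    exact condExp_stronglyMeasurable_mul_of_bound hHm hh hX C
      (by simpa [Real.norm_eq_abs] using hbd)
  rw [← integral_condExp hHm (f := fun ω => h ω * X ω), integral_congr_ae h1]

set_option maxHeartbeats 1000000 in
lemma key_identity
    {𝒮 ℋ : MeasurableSpace Ω} (hSH : 𝒮 ≤ ℋ) (hHm : ℋ ≤ m)
    {A : Ω → ℝ} (hA_meas : Measurable[m] A) (hA01 : ∀ ω, A ω = 0 ∨ A ω = 1)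
    {Y : Ω → ℝ} (hY_int : Integrable Y P)
    {ε : ℝ} (hε_pos : 0 < ε)
    {p : Ω → ℝ} (hp_meas : Measurable[ℋ] p)
    (hp_bdd : ∀ᵐ ω ∂P, ε ≤ p ω ∧ p ω ≤ 1 - ε)
    (hp_ce : p =ᵐ[P] P[A|ℋ])
    {q : Ω → ℝ} (hq_meas : Measurable[𝒮] q)
    (hq_bdd : ∀ᵐ ω ∂P, ε ≤ q ω ∧ q ω ≤ 1 - ε)
    {W : Ω → ℝ}
    (hW : ∀ ω, W ω = A ω * (q ω / p ω) + (1 - A ω) * ((1 - q ω) / (1 - p ω)))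
    {μ₁ μ₀ : Ω → ℝ}
    (hμ₁ : ∀ ω, μ₁ ω = (P[(fun ω' => A ω' * Y ω')|ℋ]) ω / p ω)
    (hμ₀ : ∀ ω, μ₀ ω = (P[(fun ω' => (1 - A ω') * Y ω')|ℋ]) ω / (1 - p ω))
    {φ : Ω → ℝ} (hφ_meas : Measurable[𝒮] φ) {Cφ : ℝ} (hφ_bdd : ∀ ω, |φ ω| ≤ Cφ)
    {g : Ω → ℝ} (hg_meas : Measurable[ℋ] g) {Cg : ℝ} (hg_bdd : ∀ ω, |g ω| ≤ Cg)
    {S : Ω → ℝ} (hS_meas : Measurable[𝒮] S) {CS : ℝ} (hS_bdd : ∀ ω, |S ω| ≤ CS) :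
    ∫ ω, (Y ω - g ω - (A ω - q ω) * S ω) * W ω * (A ω - q ω) * φ ω ∂P
      = ∫ ω, q ω * (1 - q ω) * φ ω * μ₁ ω ∂P
        - ∫ ω, q ω * (1 - q ω) * φ ω * μ₀ ω ∂P
        - ∫ ω, q ω * (1 - q ω) * φ ω * S ω ∂P := by
  -- measurability of ingredients w.r.t. ℋ
  have qH : Measurable[ℋ] q := hq_meas.mono hSH le_rfl
  have φH : Measurable[ℋ] φ := hφ_meas.mono hSH le_rfl
  have SH : Measurable[ℋ] S := hS_meas.mono hSH le_rfl
  set h₁ : Ω → ℝ := fun ω => q ω * (1 - q ω) * φ ω / p ω with hh₁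
  set h₂ : Ω → ℝ := fun ω => q ω * (1 - q ω) * φ ω / (1 - p ω) with hh₂
  have mh₁ : Measurable[ℋ] h₁ := ((qH.mul (measurable_const.sub qH)).mul φH).div hp_meas
  have mh₂ : Measurable[ℋ] h₂ :=
    ((qH.mul (measurable_const.sub qH)).mul φH).div (measurable_const.sub hp_meas)
  -- a.e. bounds
  have hq01 : ∀ᵐ ω ∂P, 0 ≤ q ω ∧ q ω ≤ 1 := by
    filter_upwards [hq_bdd] with ω h
    constructor <;> linarith [h.1, h.2, hε_pos]
  have hnum : ∀ᵐ ω ∂P, |q ω * (1 - q ω) * φ ω| ≤ Cφ := by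
    filter_upwards [hq01] with ω h
    have h2 : (0:ℝ) ≤ 1 - q ω := by linarith [h.2]
    have h3 : q ω * (1 - q ω) ≤ 1 := by nlinarith [h.1, h.2]
    rw [abs_mul, abs_mul, abs_of_nonneg h.1, abs_of_nonneg h2]
    calc q ω * (1 - q ω) * |φ ω| ≤ 1 * |φ ω| :=
          mul_le_mul_of_nonneg_right h3 (abs_nonneg _)
      _ = |φ ω| := one_mul _
      _ ≤ Cφ := hφ_bdd ω
  have hb₁ : ∀ᵐ ω ∂P, |h₁ ω| ≤ Cφ / ε := by
    filter_upwards [hp_bdd, hnum] with ω hp hn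
    rw [hh₁]; simp only
    rw [abs_div]
    exact div_le_div₀ ((abs_nonneg _).trans hn) hn hε_pos
      (by rw [abs_of_pos (by linarith [hp.1] : (0:ℝ) < p ω)]; exact hp.1)
  have hb₂ : ∀ᵐ ω ∂P, |h₂ ω| ≤ Cφ / ε := by
    filter_upwards [hp_bdd, hnum] with ω hp hn
    rw [hh₂]; simp only
    rw [abs_div]
    exact div_le_div₀ ((abs_nonneg _).trans hn) hn hε_pos
      (by rw [abs_of_pos (by linarith [hp.2] : (0:ℝ) < 1 - p ω)]; linarith [hp.2])
  -- a.e. bounds for the prefactors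
  have hbu₃ : ∀ᵐ ω ∂P, |h₁ ω * g ω| ≤ Cφ / ε * Cg := by
    filter_upwards [hb₁] with ω h
    rw [abs_mul]
    exact mul_le_mul h (hg_bdd ω) (abs_nonneg _) ((abs_nonneg _).trans h)
  have hbu₄ : ∀ᵐ ω ∂P, |h₂ ω * g ω| ≤ Cφ / ε * Cg := by
    filter_upwards [hb₂] with ω h
    rw [abs_mul]
    exact mul_le_mul h (hg_bdd ω) (abs_nonneg _) ((abs_nonneg _).trans h)
  have hbu₅ : ∀ᵐ ω ∂P, |h₁ ω * ((1 - q ω) * S ω)| ≤ Cφ / ε * (1 * CS) := by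
    filter_upwards [hb₁, hq01] with ω h hq
    have h2 : |1 - q ω| ≤ 1 := by
      rw [abs_of_nonneg (by linarith [hq.2] : (0:ℝ) ≤ 1 - q ω)]; linarith [hq.1]
    rw [abs_mul, abs_mul]
    refine mul_le_mul h (mul_le_mul h2 (hS_bdd ω) (abs_nonneg _) zero_le_one)
      (mul_nonneg (abs_nonneg _) (abs_nonneg _)) ((abs_nonneg _).trans h)
  have hbu₆ : ∀ᵐ ω ∂P, |h₂ ω * (q ω * S ω)| ≤ Cφ / ε * (1 * CS) := by
    filter_upwards [hb₂, hq01] with ω h hq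
    have h2 : |q ω| ≤ 1 := by rw [abs_of_nonneg hq.1]; exact hq.2
    rw [abs_mul, abs_mul]
    refine mul_le_mul h (mul_le_mul h2 (hS_bdd ω) (abs_nonneg _) zero_le_one)
      (mul_nonneg (abs_nonneg _) (abs_nonneg _)) ((abs_nonneg _).trans h)
  -- integrable building blocks
  have hA_bd : ∀ᵐ ω ∂P, ‖A ω‖ ≤ 1 := by
    refine ae_of_all _ fun ω => ?_
    rcases hA01 ω with h | h <;> simp [h]
  have h1A_bd : ∀ᵐ ω ∂P, ‖1 - A ω‖ ≤ 1 := by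
    refine ae_of_all _ fun ω => ?_
    rcases hA01 ω with h | h <;> simp [h]
  have hAesm : AEStronglyMeasurable[m] A P := hA_meas.aestronglyMeasurable
  have h1Aesm : AEStronglyMeasurable[m] (fun ω => 1 - A ω) P :=
    (measurable_const.sub hA_meas).aestronglyMeasurable
  have IntAY : Integrable (fun ω => A ω * Y ω) P := hY_int.bdd_mul hAesm hA_bd
  have Int1AY : Integrable (fun ω => (1 - A ω) * Y ω) P := hY_int.bdd_mul h1Aesm h1A_bd
  have IntA : Integrable A P := integrable_of_bdd hAesm 1 (by simpa [Real.norm_eq_abs] using hA_bd)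
  have Int1A : Integrable (fun ω => 1 - A ω) P :=
    integrable_of_bdd h1Aesm 1 (by simpa [Real.norm_eq_abs] using h1A_bd)
  -- aestrongly measurable prefactors
  have esm₁ : AEStronglyMeasurable[m] h₁ P := (mh₁.mono hHm le_rfl).aestronglyMeasurable
  have esm₂ : AEStronglyMeasurable[m] h₂ P := (mh₂.mono hHm le_rfl).aestronglyMeasurable
  have esm₃ : AEStronglyMeasurable[m] (fun ω => h₁ ω * g ω) P :=
    ((mh₁.mul hg_meas).mono hHm le_rfl).aestronglyMeasurable
  have esm₄ : AEStronglyMeasurable[m] (fun ω => h₂ ω * g ω) P :=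
    ((mh₂.mul hg_meas).mono hHm le_rfl).aestronglyMeasurable
  have esm₅ : AEStronglyMeasurable[m] (fun ω => h₁ ω * ((1 - q ω) * S ω)) P :=
    ((mh₁.mul ((measurable_const.sub qH).mul SH)).mono hHm le_rfl).aestronglyMeasurable
  have esm₆ : AEStronglyMeasurable[m] (fun ω => h₂ ω * (q ω * S ω)) P :=
    ((mh₂.mul (qH.mul SH)).mono hHm le_rfl).aestronglyMeasurable
  -- integrability of the six terms
  have It₁ : Integrable (fun ω => h₁ ω * (A ω * Y ω)) P :=
    IntAY.bdd_mul (c := Cφ / ε) esm₁ (by filter_upwards [hb₁] with ω h; simpa only [Real.norm_eq_abs] using h)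
  have It₂ : Integrable (fun ω => h₂ ω * ((1 - A ω) * Y ω)) P :=
    Int1AY.bdd_mul (c := Cφ / ε) esm₂ (by filter_upwards [hb₂] with ω h; simpa only [Real.norm_eq_abs] using h)
  have It₃ : Integrable (fun ω => h₁ ω * g ω * A ω) P :=
    IntA.bdd_mul (c := Cφ / ε * Cg) esm₃ (by filter_upwards [hbu₃] with ω h; simpa only [Real.norm_eq_abs] using h)
  have It₄ : Integrable (fun ω => h₂ ω * g ω * (1 - A ω)) P :=
    Int1A.bdd_mul (c := Cφ / ε * Cg) esm₄ (by filter_upwards [hbu₄] with ω h; simpa only [Real.norm_eq_abs] using h)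
  have It₅ : Integrable (fun ω => h₁ ω * ((1 - q ω) * S ω) * A ω) P :=
    IntA.bdd_mul (c := Cφ / ε * (1 * CS)) esm₅ (by filter_upwards [hbu₅] with ω h; simpa only [Real.norm_eq_abs] using h)
  have It₆ : Integrable (fun ω => h₂ ω * (q ω * S ω) * (1 - A ω)) P :=
    Int1A.bdd_mul (c := Cφ / ε * (1 * CS)) esm₆ (by filter_upwards [hbu₆] with ω h; simpa only [Real.norm_eq_abs] using h)
  -- pointwise decomposition of the integrand
  have hptw : (fun ω => (Y ω - g ω - (A ω - q ω) * S ω) * W ω * (A ω - q ω) * φ ω) =ᵐ[P]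
      (fun ω => (h₁ ω * (A ω * Y ω) - h₂ ω * ((1 - A ω) * Y ω))
          - (h₁ ω * g ω * A ω - h₂ ω * g ω * (1 - A ω))
          - (h₁ ω * ((1 - q ω) * S ω) * A ω + h₂ ω * (q ω * S ω) * (1 - A ω))) := by
    filter_upwards [hp_bdd] with ω hp
    have hp0 : p ω ≠ 0 := by intro h; rw [h] at hp; linarith [hp.1]
    have hp1 : (1:ℝ) - p ω ≠ 0 := by intro h; nlinarith [hp.2]
    rw [hh₁, hh₂]; simp only
    rcases hA01 ω with h | h <;> rw [hW ω, h] <;> field_simp <;> ring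
  rw [integral_congr_ae hptw]
  have s1 : ∫ ω, (h₁ ω * (A ω * Y ω) - h₂ ω * ((1 - A ω) * Y ω)) ∂P
      = ∫ ω, h₁ ω * (A ω * Y ω) ∂P - ∫ ω, h₂ ω * ((1 - A ω) * Y ω) ∂P :=
    integral_sub It₁ It₂
  have s2 : ∫ ω, (h₁ ω * g ω * A ω - h₂ ω * g ω * (1 - A ω)) ∂P
      = ∫ ω, h₁ ω * g ω * A ω ∂P - ∫ ω, h₂ ω * g ω * (1 - A ω) ∂P :=
    integral_sub It₃ It₄
  have s3 : ∫ ω, (h₁ ω * ((1 - q ω) * S ω) * A ω + h₂ ω * (q ω * S ω) * (1 - A ω)) ∂P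
      = ∫ ω, h₁ ω * ((1 - q ω) * S ω) * A ω ∂P + ∫ ω, h₂ ω * (q ω * S ω) * (1 - A ω) ∂P :=
    integral_add It₅ It₆
  have s4 : ∫ ω, ((h₁ ω * (A ω * Y ω) - h₂ ω * ((1 - A ω) * Y ω))
        - (h₁ ω * g ω * A ω - h₂ ω * g ω * (1 - A ω))) ∂P
      = ∫ ω, (h₁ ω * (A ω * Y ω) - h₂ ω * ((1 - A ω) * Y ω)) ∂P
        - ∫ ω, (h₁ ω * g ω * A ω - h₂ ω * g ω * (1 - A ω)) ∂P :=
    integral_sub (It₁.sub It₂) (It₃.sub It₄)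
  have s5 : ∫ ω, ((h₁ ω * (A ω * Y ω) - h₂ ω * ((1 - A ω) * Y ω))
        - (h₁ ω * g ω * A ω - h₂ ω * g ω * (1 - A ω))
        - (h₁ ω * ((1 - q ω) * S ω) * A ω + h₂ ω * (q ω * S ω) * (1 - A ω))) ∂P
      = ∫ ω, ((h₁ ω * (A ω * Y ω) - h₂ ω * ((1 - A ω) * Y ω))
          - (h₁ ω * g ω * A ω - h₂ ω * g ω * (1 - A ω))) ∂P
        - ∫ ω, (h₁ ω * ((1 - q ω) * S ω) * A ω + h₂ ω * (q ω * S ω) * (1 - A ω)) ∂P :=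
    integral_sub ((It₁.sub It₂).sub (It₃.sub It₄)) (It₅.add It₆)
  rw [s5, s4, s1, s2, s3]
  -- identify each piece via the pull-out property
  have E₁ : ∫ ω, h₁ ω * (A ω * Y ω) ∂P = ∫ ω, q ω * (1 - q ω) * φ ω * μ₁ ω ∂P := by
    refine (pull_out hHm mh₁.stronglyMeasurable (Cφ / ε) hb₁ IntAY).trans ?_
    refine integral_congr_ae (ae_of_all _ fun ω => ?_)
    simp only [hμ₁ ω, hh₁]; ring
  have E₂ : ∫ ω, h₂ ω * ((1 - A ω) * Y ω) ∂P = ∫ ω, q ω * (1 - q ω) * φ ω * μ₀ ω ∂P := by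
    refine (pull_out hHm mh₂.stronglyMeasurable (Cφ / ε) hb₂ Int1AY).trans ?_
    refine integral_congr_ae (ae_of_all _ fun ω => ?_)
    simp only [hμ₀ ω, hh₂]; ring
  have hce1A : P[(fun ω => 1 - A ω)|ℋ] =ᵐ[P] fun ω => 1 - p ω := by
    have h1 : P[(fun ω => 1 - A ω)|ℋ] =ᵐ[P] P[(fun _ => (1:ℝ))|ℋ] - P[A|ℋ] :=
      condExp_sub (integrable_const 1) IntA ℋ
    have h2 : P[(fun _ => (1:ℝ))|ℋ] = fun _ => (1:ℝ) := condExp_const hHm 1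
    filter_upwards [h1, hp_ce] with ω hω hpω
    rw [hω, Pi.sub_apply, h2, ← hpω]
  have E₃ : ∫ ω, h₁ ω * g ω * A ω ∂P = ∫ ω, q ω * (1 - q ω) * φ ω * g ω ∂P := by
    refine (pull_out hHm (mh₁.mul hg_meas).stronglyMeasurable (Cφ / ε * Cg) hbu₃ IntA).trans ?_
    refine integral_congr_ae ?_
    filter_upwards [hp_ce, hp_bdd] with ω hce hp
    have hp0 : p ω ≠ 0 := by intro h; rw [h] at hp; linarith [hp.1]
    simp only [hh₁, ← hce, Pi.mul_apply]
    field_simp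
  have E₄ : ∫ ω, h₂ ω * g ω * (1 - A ω) ∂P = ∫ ω, q ω * (1 - q ω) * φ ω * g ω ∂P := by
    refine (pull_out hHm (mh₂.mul hg_meas).stronglyMeasurable (Cφ / ε * Cg) hbu₄ Int1A).trans ?_
    refine integral_congr_ae ?_
    filter_upwards [hce1A, hp_bdd] with ω hce hp
    have hp1 : (1:ℝ) - p ω ≠ 0 := by intro h; nlinarith [hp.2]
    simp only [hh₂, hce, Pi.mul_apply]
    field_simp
  have E₅ : ∫ ω, h₁ ω * ((1 - q ω) * S ω) * A ω ∂P
      = ∫ ω, q ω * (1 - q ω) * (1 - q ω) * φ ω * S ω ∂P := by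
    refine (pull_out hHm (mh₁.mul ((measurable_const.sub qH).mul SH)).stronglyMeasurable
      (Cφ / ε * (1 * CS)) hbu₅ IntA).trans ?_
    refine integral_congr_ae ?_
    filter_upwards [hp_ce, hp_bdd] with ω hce hp
    have hp0 : p ω ≠ 0 := by intro h; rw [h] at hp; linarith [hp.1]
    simp only [hh₁, ← hce, Pi.mul_apply, Pi.sub_apply]
    field_simp
  have E₆ : ∫ ω, h₂ ω * (q ω * S ω) * (1 - A ω) ∂P
      = ∫ ω, q ω * q ω * (1 - q ω) * φ ω * S ω ∂P := by
    refine (pull_out hHm (mh₂.mul (qH.mul SH)).stronglyMeasurable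
      (Cφ / ε * (1 * CS)) hbu₆ Int1A).trans ?_
    refine integral_congr_ae ?_
    filter_upwards [hce1A, hp_bdd] with ω hce hp
    have hp1 : (1:ℝ) - p ω ≠ 0 := by intro h; nlinarith [hp.2]
    simp only [hh₂, hce, Pi.mul_apply]
    field_simp
  rw [E₁, E₂, E₃, E₄, E₅, E₆]
  -- combine the last two pieces
  have I₅' : Integrable (fun ω => q ω * (1 - q ω) * (1 - q ω) * φ ω * S ω) P := by
    refine integrable_of_bdd ((((((qH.mul (measurable_const.sub qH)).mul
      (measurable_const.sub qH)).mul φH).mul SH).mono hHm le_rfl)).aestronglyMeasurable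
      (Cφ * CS) ?_
    filter_upwards [hq01] with ω hq
    have hCφ : (0:ℝ) ≤ Cφ := (abs_nonneg _).trans (hφ_bdd ω)
    have h2 : (0:ℝ) ≤ 1 - q ω := by linarith [hq.2]
    have h3 : |q ω * (1 - q ω) * (1 - q ω)| ≤ 1 := by
      rw [abs_mul, abs_mul, abs_of_nonneg hq.1, abs_of_nonneg h2]
      nlinarith [hq.1, hq.2, h2, mul_nonneg hq.1 h2, mul_nonneg (mul_nonneg hq.1 h2) h2]
    calc |q ω * (1 - q ω) * (1 - q ω) * φ ω * S ω|
        = |q ω * (1 - q ω) * (1 - q ω)| * |φ ω| * |S ω| := by rw [abs_mul, abs_mul]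
      _ ≤ 1 * Cφ * CS := by
          refine mul_le_mul (mul_le_mul h3 (hφ_bdd ω) (abs_nonneg _) zero_le_one) (hS_bdd ω)
            (abs_nonneg _) (by positivity)
      _ = Cφ * CS := by ring
  have I₆' : Integrable (fun ω => q ω * q ω * (1 - q ω) * φ ω * S ω) P := by
    refine integrable_of_bdd ((((((qH.mul qH).mul
      (measurable_const.sub qH)).mul φH).mul SH).mono hHm le_rfl)).aestronglyMeasurable
      (Cφ * CS) ?_
    filter_upwards [hq01] with ω hq
    have hCφ : (0:ℝ) ≤ Cφ := (abs_nonneg _).trans (hφ_bdd ω)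
    have h2 : (0:ℝ) ≤ 1 - q ω := by linarith [hq.2]
    have h3 : |q ω * q ω * (1 - q ω)| ≤ 1 := by
      rw [abs_mul, abs_mul, abs_of_nonneg hq.1, abs_of_nonneg h2]
      nlinarith [hq.1, hq.2, h2, mul_nonneg hq.1 hq.1, mul_nonneg (mul_nonneg hq.1 hq.1) h2]
    calc |q ω * q ω * (1 - q ω) * φ ω * S ω|
        = |q ω * q ω * (1 - q ω)| * |φ ω| * |S ω| := by rw [abs_mul, abs_mul]
      _ ≤ 1 * Cφ * CS := by
          refine mul_le_mul (mul_le_mul h3 (hφ_bdd ω) (abs_nonneg _) zero_le_one) (hS_bdd ω)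
            (abs_nonneg _) (by positivity)
      _ = Cφ * CS := by ring
  have E₅₆ : ∫ ω, q ω * (1 - q ω) * (1 - q ω) * φ ω * S ω ∂P
      + ∫ ω, q ω * q ω * (1 - q ω) * φ ω * S ω ∂P
      = ∫ ω, q ω * (1 - q ω) * φ ω * S ω ∂P := by
    rw [← integral_add I₅' I₆']
    exact integral_congr_ae (ae_of_all _ fun ω => by ring)
  rw [E₅₆]
  ring

end aux

/-- Consistency of the population estimand under the moderated-effect
model (core content of Proposition 1): if `E[μ₁ − μ₀ | 𝒮] = ⟨f, β*⟩` a.s. and the matrix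
`E[p̃·(1 − p̃)·f fᵀ]` is invertible, then for every bounded `ℋ`-measurable working model `g`,
`β*` is the unique `β` solving `E[(Y − g − (A − p̃)·⟨f, β⟩)·W·(A − p̃)·f] = 0`. -/
theorem population_estimand_consistency
    {Ω : Type*} (𝒮 ℋ : MeasurableSpace Ω) {m : MeasurableSpace Ω} {P : Measure Ω} [IsProbabilityMeasure P]
    (hSH : 𝒮 ≤ ℋ) (hHm : ℋ ≤ m)
    (A : Ω → ℝ) (hA_meas : Measurable A) (hA01 : ∀ ω, A ω = 0 ∨ A ω = 1)
    (Y : Ω → ℝ) (hY_int : Integrable Y P)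
    (ε : ℝ) (hε_pos : 0 < ε) (hε_lt : ε < 1 / 2)
    (p : Ω → ℝ) (hp_meas : Measurable[ℋ] p)
    (hp_bdd : ∀ᵐ ω ∂P, ε ≤ p ω ∧ p ω ≤ 1 - ε)
    (hp_ce : p =ᵐ[P] P[A|ℋ])
    (q : Ω → ℝ) (hq_meas : Measurable[𝒮] q)
    (hq_bdd : ∀ᵐ ω ∂P, ε ≤ q ω ∧ q ω ≤ 1 - ε)
    (W : Ω → ℝ)
    (hW : ∀ ω, W ω = A ω * (q ω / p ω) + (1 - A ω) * ((1 - q ω) / (1 - p ω)))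
    (μ₁ μ₀ : Ω → ℝ)
    (hμ₁ : ∀ ω, μ₁ ω = (P[(fun ω' => A ω' * Y ω')|ℋ]) ω / p ω)
    (hμ₀ : ∀ ω, μ₀ ω = (P[(fun ω' => (1 - A ω') * Y ω')|ℋ]) ω / (1 - p ω))
    (d : ℕ) (f : Ω → Fin d → ℝ)
    (hf_meas : ∀ i, Measurable[𝒮] fun ω => f ω i)
    (hf_bdd : ∃ C : ℝ, ∀ ω i, |f ω i| ≤ C)
    (βstar : Fin d → ℝ)
    (h_model : P[fun ω => μ₁ ω - μ₀ ω|𝒮] =ᵐ[P] fun ω => ∑ j, f ω j * βstar j)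
    (h_invertible : IsUnit
      (Matrix.of fun i j : Fin d => ∫ ω, q ω * (1 - q ω) * f ω i * f ω j ∂P)) :
    ∀ g : Ω → ℝ, Measurable[ℋ] g → (∃ C : ℝ, ∀ ω, |g ω| ≤ C) →
      ∀ β : Fin d → ℝ,
        (∀ i, ∫ ω, (Y ω - g ω - (A ω - q ω) * ∑ j, f ω j * β j)
          * W ω * (A ω - q ω) * f ω i ∂P = 0) ↔ β = βstar := by
  intro g hg_meas hg_bdd β
  obtain ⟨Cf, hCf⟩ := hf_bdd
  obtain ⟨Cg, hCg⟩ := hg_bdd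
  have hSm : 𝒮 ≤ m := hSH.trans hHm
  -- linear model functions
  have hS_meas : ∀ γ : Fin d → ℝ, Measurable[𝒮] (fun ω => ∑ j, f ω j * γ j) := fun γ =>
    Finset.measurable_sum _ fun j _ => (hf_meas j).mul measurable_const
  have hS_bdd : ∀ γ : Fin d → ℝ, ∀ ω, |∑ j, f ω j * γ j| ≤ ∑ j, Cf * |γ j| := fun γ ω =>
    (Finset.abs_sum_le_sum_abs _ _).trans (Finset.sum_le_sum fun j _ => by
      rw [abs_mul]; exact mul_le_mul_of_nonneg_right (hCf ω j) (abs_nonneg _))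
  -- the key identity, for each coordinate
  have key : ∀ i, ∫ ω, (Y ω - g ω - (A ω - q ω) * ∑ j, f ω j * β j)
        * W ω * (A ω - q ω) * f ω i ∂P
      = ∫ ω, q ω * (1 - q ω) * f ω i * μ₁ ω ∂P
        - ∫ ω, q ω * (1 - q ω) * f ω i * μ₀ ω ∂P
        - ∫ ω, q ω * (1 - q ω) * f ω i * (∑ j, f ω j * β j) ∂P := fun i =>
    key_identity hSH hHm hA_meas hA01 hY_int hε_pos hp_meas hp_bdd hp_ce hq_meas hq_bdd
      hW hμ₁ hμ₀ (hf_meas i) (fun ω => hCf ω i) hg_meas hCg (hS_meas β) (hS_bdd β)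
  -- integrability of μ₁ and μ₀
  have hμ₁_meas : AEStronglyMeasurable[m] μ₁ P := by
    have h1 : Measurable[ℋ] μ₁ := by
      rw [show μ₁ = fun ω => (P[(fun ω' => A ω' * Y ω')|ℋ]) ω / p ω from funext hμ₁]
      exact stronglyMeasurable_condExp.measurable.div hp_meas
    exact (h1.mono hHm le_rfl).aestronglyMeasurable
  have hμ₀_meas : AEStronglyMeasurable[m] μ₀ P := by
    have h1 : Measurable[ℋ] μ₀ := by
      rw [show μ₀ = fun ω => (P[(fun ω' => (1 - A ω') * Y ω')|ℋ]) ω / (1 - p ω) from funext hμ₀]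
      exact stronglyMeasurable_condExp.measurable.div (measurable_const.sub hp_meas)
    exact (h1.mono hHm le_rfl).aestronglyMeasurable
  have hμ₁_int : Integrable μ₁ P := by
    refine Integrable.mono' ((integrable_condExp (f := fun ω' => A ω' * Y ω')
      (m := ℋ)).norm.const_mul (1/ε)) hμ₁_meas ?_
    filter_upwards [hp_bdd] with ω hp
    have hpω : ε ≤ |p ω| := by
      rw [abs_of_pos (by linarith [hp.1] : (0:ℝ) < p ω)]; exact hp.1
    rw [Real.norm_eq_abs, hμ₁ ω, abs_div]
    calc |(P[(fun ω' => A ω' * Y ω')|ℋ]) ω| / |p ω|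
        ≤ |(P[(fun ω' => A ω' * Y ω')|ℋ]) ω| / ε := by
          exact div_le_div₀ (abs_nonneg _) le_rfl hε_pos hpω
      _ = 1/ε * ‖(P[(fun ω' => A ω' * Y ω')|ℋ]) ω‖ := by
          rw [Real.norm_eq_abs, one_div, inv_mul_eq_div]
  have hμ₀_int : Integrable μ₀ P := by
    refine Integrable.mono' ((integrable_condExp (f := fun ω' => (1 - A ω') * Y ω')
      (m := ℋ)).norm.const_mul (1/ε)) hμ₀_meas ?_
    filter_upwards [hp_bdd] with ω hp
    have hpω : ε ≤ |1 - p ω| := by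
      rw [abs_of_pos (by linarith [hp.2] : (0:ℝ) < 1 - p ω)]; linarith [hp.2]
    rw [Real.norm_eq_abs, hμ₀ ω, abs_div]
    calc |(P[(fun ω' => (1 - A ω') * Y ω')|ℋ]) ω| / |1 - p ω|
        ≤ |(P[(fun ω' => (1 - A ω') * Y ω')|ℋ]) ω| / ε := by
          exact div_le_div₀ (abs_nonneg _) le_rfl hε_pos hpω
      _ = 1/ε * ‖(P[(fun ω' => (1 - A ω') * Y ω')|ℋ]) ω‖ := by
          rw [Real.norm_eq_abs, one_div, inv_mul_eq_div]
  have hμd_int : Integrable (fun ω => μ₁ ω - μ₀ ω) P := hμ₁_int.sub hμ₀_int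
  -- the coefficient functions
  have hv_meas : ∀ i, Measurable[𝒮] (fun ω => q ω * (1 - q ω) * f ω i) := fun i =>
    (hq_meas.mul (measurable_const.sub hq_meas)).mul (hf_meas i)
  have hq01 : ∀ᵐ ω ∂P, 0 ≤ q ω ∧ q ω ≤ 1 := by
    filter_upwards [hq_bdd] with ω h
    constructor <;> linarith [h.1, h.2, hε_pos]
  have hv_bdd : ∀ i, ∀ᵐ ω ∂P, |q ω * (1 - q ω) * f ω i| ≤ Cf := by
    intro i
    filter_upwards [hq01] with ω h
    have h2 : (0:ℝ) ≤ 1 - q ω := by linarith [h.2]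
    have h3 : q ω * (1 - q ω) ≤ 1 := by nlinarith [h.1, h.2]
    rw [abs_mul, abs_mul, abs_of_nonneg h.1, abs_of_nonneg h2]
    calc q ω * (1 - q ω) * |f ω i| ≤ 1 * |f ω i| :=
          mul_le_mul_of_nonneg_right h3 (abs_nonneg _)
      _ = |f ω i| := one_mul _
      _ ≤ Cf := hCf ω i
  have hv_aesm : ∀ i, AEStronglyMeasurable[m] (fun ω => q ω * (1 - q ω) * f ω i) P := fun i =>
    (((hv_meas i).mono hSm le_rfl)).aestronglyMeasurable
  -- combine μ₁, μ₀ terms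
  have comb : ∀ i, ∫ ω, q ω * (1 - q ω) * f ω i * μ₁ ω ∂P
      - ∫ ω, q ω * (1 - q ω) * f ω i * μ₀ ω ∂P
      = ∫ ω, q ω * (1 - q ω) * f ω i * (μ₁ ω - μ₀ ω) ∂P := by
    intro i
    rw [← integral_sub (hμ₁_int.bdd_mul (c := Cf) (hv_aesm i)
        (by filter_upwards [hv_bdd i] with ω h; simpa only [Real.norm_eq_abs] using h))
      (hμ₀_int.bdd_mul (c := Cf) (hv_aesm i)
        (by filter_upwards [hv_bdd i] with ω h; simpa only [Real.norm_eq_abs] using h))]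
    exact integral_congr_ae (ae_of_all _ fun ω => by ring)
  -- tower property over 𝒮 and the model
  have tower : ∀ i, ∫ ω, q ω * (1 - q ω) * f ω i * (μ₁ ω - μ₀ ω) ∂P
      = ∫ ω, q ω * (1 - q ω) * f ω i * (∑ j, f ω j * βstar j) ∂P := by
    intro i
    refine (pull_out hSm (hv_meas i).stronglyMeasurable Cf (hv_bdd i) hμd_int).trans ?_
    refine integral_congr_ae ?_
    filter_upwards [h_model] with ω h
    show q ω * (1 - q ω) * f ω i * (P[fun ω => μ₁ ω - μ₀ ω|𝒮]) ω
      = q ω * (1 - q ω) * f ω i * ∑ j, f ω j * βstar j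
    rw [h]
  -- integrability of matrix entries
  have hInt_ij : ∀ i j, Integrable (fun ω => q ω * (1 - q ω) * f ω i * f ω j) P := by
    intro i j
    refine integrable_of_bdd ((((hv_meas i).mul (hf_meas j)).mono hSm le_rfl).aestronglyMeasurable)
      (Cf * Cf) ?_
    filter_upwards [hv_bdd i] with ω h
    rw [abs_mul]
    exact mul_le_mul h (hCf ω j) (abs_nonneg _) ((abs_nonneg _).trans h)
  set M : Matrix (Fin d) (Fin d) ℝ :=
    Matrix.of fun i j : Fin d => ∫ ω, q ω * (1 - q ω) * f ω i * f ω j ∂P with hM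
  -- linearity
  have lin : ∀ (γ : Fin d → ℝ) (i : Fin d),
      ∫ ω, q ω * (1 - q ω) * f ω i * (∑ j, f ω j * γ j) ∂P = ∑ j, M i j * γ j := by
    intro γ i
    have h1 : ∀ ω, q ω * (1 - q ω) * f ω i * (∑ j, f ω j * γ j)
        = ∑ j, (q ω * (1 - q ω) * f ω i * f ω j) * γ j := fun ω => by
      rw [Finset.mul_sum]; exact Finset.sum_congr rfl fun j _ => by ring
    rw [integral_congr_ae (ae_of_all _ h1),
      integral_finset_sum Finset.univ (fun j _ => (hInt_ij i j).mul_const (γ j))]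
    exact Finset.sum_congr rfl fun j _ => integral_mul_const _ _
  -- the master computation
  have main_i : ∀ i, ∫ ω, (Y ω - g ω - (A ω - q ω) * ∑ j, f ω j * β j)
        * W ω * (A ω - q ω) * f ω i ∂P
      = ∑ j, M i j * (βstar j - β j) := by
    intro i
    rw [key i, comb i, tower i, lin βstar i, lin β i, ← Finset.sum_sub_distrib]
    exact Finset.sum_congr rfl fun j _ => (mul_sub _ _ _).symm
  constructor
  · intro h0
    have hMv : M.mulVec (fun j => βstar j - β j) = 0 := by
      funext i
      have h1 := (main_i i).symm.trans (h0 i)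
      simpa [Matrix.mulVec, dotProduct] using h1
    obtain ⟨u, hu⟩ := h_invertible
    have hv : (fun j => βstar j - β j) = fun _ => (0:ℝ) := by
      have h1 : (↑u⁻¹ : Matrix (Fin d) (Fin d) ℝ).mulVec
          (M.mulVec (fun j => βstar j - β j)) = fun j => βstar j - β j := by
        rw [Matrix.mulVec_mulVec, ← hu, Units.inv_mul, Matrix.one_mulVec]
      rw [hMv, Matrix.mulVec_zero] at h1
      exact h1.symm ▸ rfl
    funext j
    have := congrFun hv j
    linarith
  · intro h
    subst h
    intro i
    rw [main_i i]
    simp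
end

section
/- The marginal population estimand with a constant numerator probability equals the availability-weighted average of the per-occasion treatment effects: suppose p̃ₜ ≡ ρ for a constant ρ ∈ (ε, 1−ε) and fₜ ≡ 1 for all t, and suppose Σ_{t=1}^{T} E[Iₜ] > 0. Then for any bounded ℋₜ-measurable working models gₜ, a real number β solves Σ_{t=1}^{T} E[Iₜ·Wₜ·(Aₜ − ρ)·(Yₜ − gₜ − (Aₜ − ρ)·β)] = 0 if and only if β = ( Σ_{t=1}^{T} E[Iₜ·(μ₁ₜ − μ₀ₜ)] ) / ( Σ_{t=1}^{T} E[Iₜ] ). -/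
/-!
On `{A = 1}` and `{A = 0}` the factor `W (A − ρ)` equals `ρ(1−ρ)/p` and `−ρ(1−ρ)/(1−p)`, so each
summand is `ρ(1−ρ)` times the difference of the inverse-probability-weighted arms
`I/p · A (Y − c₁)` and `I/(1−p) · (1−A)(Y − c₀)`, with `ℋₜ`-measurable offsets `c₁ = g + (1−ρ)β`
and `c₀ = g − ρβ`. Conditioning on `ℋₜ`, division by the propensity `p = E[A | ℋₜ]` turns the arms
into `I (μ₁ − c₁)` and `I (μ₀ − c₀)`; since `c₁ − c₀ = β`, the working model `g` cancels and the
`t`-th summand has expectation `ρ(1−ρ)(E[I (μ₁ − μ₀)] − β E[I])`. The estimating equation is thus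
affine in `β` with slope `−ρ(1−ρ) Σₜ E[Iₜ] ≠ 0`.
-/

open MeasureTheory ProbabilityTheory

section

variable {Ω : Type*} {ℋ m : MeasurableSpace Ω} {P : Measure Ω}

lemma ae_abs_div_le_div {I q : Ω → ℝ} {K ε : ℝ} (hIK : ∀ ω, |I ω| ≤ K) (hε : 0 < ε)
    (hqε : ∀ᵐ ω ∂P, ε ≤ q ω) : ∀ᵐ ω ∂P, |I ω / q ω| ≤ K / ε := by
  filter_upwards [hqε] with ω hq
  rw [abs_div, abs_of_pos (hε.trans_le hq)]
  calc |I ω| / q ω ≤ |I ω| / ε := div_le_div_of_nonneg_left (abs_nonneg _) hε hq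
    _ ≤ K / ε := div_le_div_of_nonneg_right (hIK ω) hε.le

lemma condExp_mul_sub_ae_eq [IsFiniteMeasure P] (hℋ : ℋ ≤ m) {B Y c : Ω → ℝ} {C : ℝ}
    (hB : Integrable B P) (hBY : Integrable (fun ω => B ω * Y ω) P)
    (hc : Measurable[ℋ] c) (hcC : ∀ ω, |c ω| ≤ C) :
    P[fun ω => B ω * (Y ω - c ω)|ℋ] =ᵐ[P]
      fun ω => P[fun ω => B ω * Y ω|ℋ] ω - c ω * P[B|ℋ] ω := by
  have hcB : Integrable (c * B) P :=
    hB.bdd_mul (hc.mono hℋ le_rfl).aestronglyMeasurable (.of_forall hcC)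
  have hsplit : (fun ω => B ω * (Y ω - c ω)) = (fun ω => B ω * Y ω) - c * B := by
    ext ω; simp only [Pi.sub_apply, Pi.mul_apply]; ring
  rw [hsplit]
  filter_upwards [condExp_sub hBY hcB ℋ,
    condExp_mul_of_stronglyMeasurable_left hc.stronglyMeasurable hcB hB] with ω hsub hpull
  rw [hsub, Pi.sub_apply, hpull, Pi.mul_apply]

lemma condExp_ipw_arm [IsFiniteMeasure P] (hℋ : ℋ ≤ m) {I q B Y c : Ω → ℝ} {K L C ε : ℝ}
    (hI : Measurable[ℋ] I) (hIK : ∀ ω, |I ω| ≤ K) (hq : Measurable[ℋ] q) (hε : 0 < ε)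
    (hqε : ∀ᵐ ω ∂P, ε ≤ q ω) (hq_ce : q =ᵐ[P] P[B|ℋ])
    (hB : Measurable B) (hBL : ∀ ω, |B ω| ≤ L) (hY : Integrable Y P)
    (hc : Measurable[ℋ] c) (hcC : ∀ ω, |c ω| ≤ C) :
    Integrable (fun ω => I ω / q ω * (B ω * (Y ω - c ω))) P ∧
      P[fun ω => I ω / q ω * (B ω * (Y ω - c ω))|ℋ] =ᵐ[P]
        fun ω => I ω * (P[fun ω => B ω * Y ω|ℋ] ω / q ω - c ω) := by
  have hB_int : Integrable B P := .of_bound hB.aestronglyMeasurable L (.of_forall hBL)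
  have hc_int : Integrable c P :=
    .of_bound (hc.mono hℋ le_rfl).aestronglyMeasurable C (.of_forall hcC)
  have hBY : Integrable (fun ω => B ω * Y ω) P :=
    hY.bdd_mul hB.aestronglyMeasurable (.of_forall hBL)
  have hBYc : Integrable (fun ω => B ω * (Y ω - c ω)) P :=
    (hY.sub hc_int).bdd_mul hB.aestronglyMeasurable (.of_forall hBL)
  have harm : Integrable (fun ω => I ω / q ω * (B ω * (Y ω - c ω))) P :=
    hBYc.bdd_mul ((hI.div hq).mono hℋ le_rfl).aestronglyMeasurable
      (ae_abs_div_le_div hIK hε hqε)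
  refine ⟨harm, ?_⟩
  filter_upwards [condExp_mul_of_stronglyMeasurable_left (hI.div hq).stronglyMeasurable harm hBYc,
    condExp_mul_sub_ae_eq hℋ hB_int hBY hc hcC, hq_ce, hqε] with ω hpull hcond hqω hεq
  have hq0 : q ω ≠ 0 := (hε.trans_le hεq).ne'
  refine hpull.trans ?_
  rw [Pi.mul_apply, Pi.div_apply, hcond, ← hqω]
  field_simp

lemma condExp_one_sub_ae_eq [IsFiniteMeasure P] (hℋ : ℋ ≤ m) {A p : Ω → ℝ}
    (hA : Integrable A P) (hp_ce : p =ᵐ[P] P[A|ℋ]) :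
    (fun ω => 1 - p ω) =ᵐ[P] P[fun ω => 1 - A ω|ℋ] := by
  filter_upwards [hp_ce, condExp_sub (integrable_const (1 : ℝ)) hA ℋ] with ω hpω hsub
  refine (hsub.trans ?_).symm
  rw [Pi.sub_apply, condExp_const hℋ, hpω]

lemma weighted_residual_eq_sub_arms {a i p y g ρ β : ℝ} (ha : a = 0 ∨ a = 1) (hp : p ≠ 0)
    (hp' : 1 - p ≠ 0) :
    i * (a * (ρ / p) + (1 - a) * ((1 - ρ) / (1 - p))) * (a - ρ) * (y - g - (a - ρ) * β)
      = ρ * (1 - ρ) * (i / p * (a * (y - (g + (1 - ρ) * β)))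
        - i / (1 - p) * ((1 - a) * (y - (g - ρ * β)))) := by
  rcases ha with rfl | rfl <;> field_simp <;> ring

lemma abs_le_one_of_eq_zero_or_eq_one {a : ℝ} (ha : a = 0 ∨ a = 1) : |a| ≤ 1 := by
  rcases ha with rfl | rfl <;> norm_num

lemma integral_weighted_residual [IsFiniteMeasure P] (hℋ : ℋ ≤ m)
    {A Y I p g W μ₁ μ₀ : Ω → ℝ} {K ε ρ β C : ℝ}
    (hA : Measurable A) (hA01 : ∀ ω, A ω = 0 ∨ A ω = 1) (hY : Integrable Y P)
    (hI : Measurable[ℋ] I) (hIK : ∀ ω, |I ω| ≤ K) (hε : 0 < ε)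
    (hp : Measurable[ℋ] p) (hp_bdd : ∀ᵐ ω ∂P, ε ≤ p ω ∧ p ω ≤ 1 - ε)
    (hp_ce : p =ᵐ[P] P[A|ℋ])
    (hW : ∀ ω, W ω = A ω * (ρ / p ω) + (1 - A ω) * ((1 - ρ) / (1 - p ω)))
    (hμ₁ : ∀ ω, μ₁ ω = P[fun ω => A ω * Y ω|ℋ] ω / p ω)
    (hμ₀ : ∀ ω, μ₀ ω = P[fun ω => (1 - A ω) * Y ω|ℋ] ω / (1 - p ω))
    (hg : Measurable[ℋ] g) (hgC : ∀ ω, |g ω| ≤ C) :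
    Integrable (fun ω => I ω * W ω * (A ω - ρ) * (Y ω - g ω - (A ω - ρ) * β)) P ∧
      ∫ ω, I ω * W ω * (A ω - ρ) * (Y ω - g ω - (A ω - ρ) * β) ∂P
        = ρ * (1 - ρ) * (∫ ω, I ω * (μ₁ ω - μ₀ ω) ∂P - β * ∫ ω, I ω ∂P) := by
  have hA1 : ∀ ω, |A ω| ≤ 1 := fun ω => abs_le_one_of_eq_zero_or_eq_one (hA01 ω)
  have hA1' : ∀ ω, |1 - A ω| ≤ 1 := fun ω =>
    abs_le_one_of_eq_zero_or_eq_one (by rcases hA01 ω with h | h <;> simp [h])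
  obtain ⟨hint₁, hce₁⟩ := condExp_ipw_arm hℋ hI hIK hp hε (hp_bdd.mono fun _ h => h.1)
    hp_ce hA hA1 hY (hg.add_const ((1 - ρ) * β))
    (fun ω => (abs_add_le _ _).trans (add_le_add (hgC ω) le_rfl))
  obtain ⟨hint₀, hce₀⟩ := condExp_ipw_arm hℋ hI hIK (hp.const_sub 1) hε
    (hp_bdd.mono fun _ h => by linarith [h.2])
    (condExp_one_sub_ae_eq hℋ (.of_bound hA.aestronglyMeasurable 1 (.of_forall hA1)) hp_ce)
    (hA.const_sub 1) hA1' hY (hg.sub_const (ρ * β))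
    (fun ω => (abs_sub _ _).trans (add_le_add (hgC ω) le_rfl))
  simp only [← hμ₁, ← hμ₀] at hce₁ hce₀
  have hJ₁ := integrable_condExp.congr hce₁
  have hJ₀ := integrable_condExp.congr hce₀
  have hI_int : Integrable I P :=
    .of_bound (hI.mono hℋ le_rfl).aestronglyMeasurable K (.of_forall hIK)
  have hIμ : Integrable (fun ω => I ω * (μ₁ ω - μ₀ ω)) P :=
    ((hJ₁.sub hJ₀).add (hI_int.const_mul β)).congr
      (.of_forall fun ω => by simp only [Pi.add_apply, Pi.sub_apply]; ring)
  have hF : (fun ω => I ω * W ω * (A ω - ρ) * (Y ω - g ω - (A ω - ρ) * β)) =ᵐ[P]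
      fun ω => ρ * (1 - ρ) * (I ω / p ω * (A ω * (Y ω - (g ω + (1 - ρ) * β)))
        - I ω / (1 - p ω) * ((1 - A ω) * (Y ω - (g ω - ρ * β)))) := by
    filter_upwards [hp_bdd] with ω hpω
    rw [hW ω]
    exact weighted_residual_eq_sub_arms (hA01 ω) (by linarith [hpω.1]) (by linarith [hpω.2])
  refine ⟨((hint₁.sub hint₀).const_mul _).congr hF.symm, ?_⟩
  rw [integral_congr_ae hF, integral_const_mul, integral_sub hint₁ hint₀,
    ← integral_condExp hℋ, integral_congr_ae hce₁,
    ← integral_condExp hℋ (f := fun ω => I ω / (1 - p ω) * _), integral_congr_ae hce₀,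
    ← integral_sub hJ₁ hJ₀, ← integral_const_mul β I,
    ← integral_sub hIμ (hI_int.const_mul β)]
  congr 2 with ω
  ring

lemma mul_sub_mul_eq_zero_iff_eq_div {k s₁ s₀ β : ℝ} (hk : k ≠ 0) (hs₀ : s₀ ≠ 0) :
    k * (s₁ - β * s₀) = 0 ↔ β = s₁ / s₀ := by
  rw [mul_eq_zero, or_iff_right hk, sub_eq_zero, eq_div_iff hs₀, eq_comm]

end

theorem marginal_estimand_availability_weighted_average_general
    {Ω : Type*} {m : MeasurableSpace Ω} {P : Measure Ω} [IsProbabilityMeasure P]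
    (T : ℕ)
    (ℋ : Fin T → MeasurableSpace Ω) (hHm : ∀ t, ℋ t ≤ m)
    (A : Fin T → Ω → ℝ) (hA_meas : ∀ t, Measurable (A t))
    (hA01 : ∀ t ω, A t ω = 0 ∨ A t ω = 1)
    (Y : Fin T → Ω → ℝ) (hY_int : ∀ t, Integrable (Y t) P)
    (I : Fin T → Ω → ℝ) (hI_meas : ∀ t, Measurable[ℋ t] (I t))
    (hI01 : ∀ t ω, I t ω = 0 ∨ I t ω = 1)
    (ε : ℝ) (hε_pos : 0 < ε)
    (p : Fin T → Ω → ℝ) (hp_meas : ∀ t, Measurable[ℋ t] (p t))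
    (hp_bdd : ∀ t, ∀ᵐ ω ∂P, ε ≤ p t ω ∧ p t ω ≤ 1 - ε)
    (hp_ce : ∀ t, p t =ᵐ[P] P[A t|ℋ t])
    (ρ : ℝ) (hρ : ε < ρ ∧ ρ < 1 - ε)
    (W : Fin T → Ω → ℝ)
    (hW : ∀ t ω, W t ω = A t ω * (ρ / p t ω) + (1 - A t ω) * ((1 - ρ) / (1 - p t ω)))
    (μ₁ μ₀ : Fin T → Ω → ℝ)
    (hμ₁ : ∀ t ω, μ₁ t ω = (P[(fun ω' => A t ω' * Y t ω')|ℋ t]) ω / p t ω)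
    (hμ₀ : ∀ t ω, μ₀ t ω = (P[(fun ω' => (1 - A t ω') * Y t ω')|ℋ t]) ω / (1 - p t ω))
    (h_avail_pos : 0 < ∑ t, ∫ ω, I t ω ∂P) :
    ∀ g : Fin T → Ω → ℝ, (∀ t, Measurable[ℋ t] (g t)) →
      (∃ C : ℝ, ∀ t ω, |g t ω| ≤ C) →
      ∀ β : ℝ,
        (∫ ω, (∑ t, I t ω * W t ω * (A t ω - ρ)
            * (Y t ω - g t ω - (A t ω - ρ) * β)) ∂P = 0)
          ↔ β = (∑ t, ∫ ω, I t ω * (μ₁ t ω - μ₀ t ω) ∂P) / (∑ t, ∫ ω, I t ω ∂P) := by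
  intro g hg ⟨C, hgC⟩ β
  have hocc := fun t => integral_weighted_residual (β := β) (hHm t) (hA_meas t) (hA01 t)
    (hY_int t) (hI_meas t) (fun ω => abs_le_one_of_eq_zero_or_eq_one (hI01 t ω)) hε_pos
    (hp_meas t) (hp_bdd t) (hp_ce t) (hW t) (hμ₁ t) (hμ₀ t) (hg t) (hgC t)
  have hρ₀ : ρ * (1 - ρ) ≠ 0 := mul_ne_zero (by linarith) (by linarith)
  rw [integral_finsetSum _ fun t _ => (hocc t).1, Finset.sum_congr rfl fun t _ => (hocc t).2,
    ← Finset.mul_sum, Finset.sum_sub_distrib, ← Finset.mul_sum]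
  exact mul_sub_mul_eq_zero_iff_eq_div hρ₀ h_avail_pos.ne'

/-- The marginal population estimand with a constant numerator probability
`p̃ₜ ≡ ρ` (and `fₜ ≡ 1`) equals the availability-weighted average of the per-occasion
treatment effects: `β` solves `Σₜ E[Iₜ·Wₜ·(Aₜ − ρ)·(Yₜ − gₜ − (Aₜ − ρ)·β)] = 0` if and only
if `β = (Σₜ E[Iₜ·(μ₁ₜ − μ₀ₜ)]) / (Σₜ E[Iₜ])`. -/
theorem marginal_estimand_availability_weighted_average
    {Ω : Type*} {m : MeasurableSpace Ω} {P : Measure Ω} [IsProbabilityMeasure P]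
    (T : ℕ) (hT : 0 < T)
    (ℋ : Fin T → MeasurableSpace Ω) (hHm : ∀ t, ℋ t ≤ m)
    (A : Fin T → Ω → ℝ) (hA_meas : ∀ t, Measurable (A t))
    (hA01 : ∀ t ω, A t ω = 0 ∨ A t ω = 1)
    (Y : Fin T → Ω → ℝ) (hY_int : ∀ t, Integrable (Y t) P)
    (I : Fin T → Ω → ℝ) (hI_meas : ∀ t, Measurable[ℋ t] (I t))
    (hI01 : ∀ t ω, I t ω = 0 ∨ I t ω = 1)
    (ε : ℝ) (hε_pos : 0 < ε) (hε_lt : ε < 1 / 2)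
    (p : Fin T → Ω → ℝ) (hp_meas : ∀ t, Measurable[ℋ t] (p t))
    (hp_bdd : ∀ t, ∀ᵐ ω ∂P, ε ≤ p t ω ∧ p t ω ≤ 1 - ε)
    (hp_ce : ∀ t, p t =ᵐ[P] P[A t|ℋ t])
    (ρ : ℝ) (hρ : ε < ρ ∧ ρ < 1 - ε)
    (W : Fin T → Ω → ℝ)
    (hW : ∀ t ω, W t ω = A t ω * (ρ / p t ω) + (1 - A t ω) * ((1 - ρ) / (1 - p t ω)))
    (μ₁ μ₀ : Fin T → Ω → ℝ)
    (hμ₁ : ∀ t ω, μ₁ t ω = (P[(fun ω' => A t ω' * Y t ω')|ℋ t]) ω / p t ω)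
    (hμ₀ : ∀ t ω, μ₀ t ω = (P[(fun ω' => (1 - A t ω') * Y t ω')|ℋ t]) ω / (1 - p t ω))
    (h_avail_pos : 0 < ∑ t, ∫ ω, I t ω ∂P) :
    ∀ g : Fin T → Ω → ℝ, (∀ t, Measurable[ℋ t] (g t)) →
      (∃ C : ℝ, ∀ t ω, |g t ω| ≤ C) →
      ∀ β : ℝ,
        (∫ ω, (∑ t, I t ω * W t ω * (A t ω - ρ)
            * (Y t ω - g t ω - (A t ω - ρ) * β)) ∂P = 0)
          ↔ β = (∑ t, ∫ ω, I t ω * (μ₁ t ω - μ₀ t ω) ∂P) / (∑ t, ∫ ω, I t ω ∂P) :=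
  marginal_estimand_availability_weighted_average_general T ℋ hHm A hA_meas hA01 Y hY_int I hI_meas
    hI01 ε hε_pos p hp_meas hp_bdd hp_ce ρ hρ W hW μ₁ μ₀ hμ₁ hμ₀ h_avail_pos
end
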